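/- arXiv:1507.07866 — 5 statements merged into one kernel-verified Lean document; each statement's English description precedes it below -/
import Mathlib

section
/- Let 1 ≤ p < ∞, 0 < q ≤ 1, u a weight with 0 < ‖u‖_{L^q(0,t)} < ∞ for all t > 0, and v a weight. Then the associate norm of X = Cop_{p,q}(u,v) satisfies ‖f‖_{X'} ≈ sup_{t>0} ‖f‖_{L^{p'}(v^{−1},(0,t))} · ‖u‖_{L^q(0,t)}^{−1}, with equivalence constants independent of f. -/
open MeasureTheory ENNReal Set

noncomputable section

/-- `L^r` functional, `0 < r < ∞`. -/
def nrm (r : ℝ) (g : ℝ → ℝ≥0∞) (s : Set ℝ) : ℝ≥0∞ :=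
  (∫⁻ x in s, g x ^ r) ^ (1 / r)

/-- Weighted Copson functional. -/
def CopN (p q : ℝ) (u v : ℝ → ℝ≥0∞) (f : ℝ → ℝ≥0∞) : ℝ≥0∞ :=
  nrm q (fun t => u t * nrm p (fun x => f x * v x) (Ioi t)) (Ioi 0)

/-- `L^{p'}(v⁻¹)` norm on `(0,t)`, with `p' = p/(p-1)` and `p' = ∞` (ess sup) when `p = 1`. -/
def dualNrmIoo (p : ℝ) (v f : ℝ → ℝ≥0∞) (t : ℝ) : ℝ≥0∞ :=
  if p = 1 then essSup (fun x => f x / v x) (volume.restrict (Ioo 0 t))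
  else nrm (p / (p - 1)) (fun x => f x / v x) (Ioo 0 t)

/-!
Constants: `c₁ = 1`, `c₂ = 4 ^ (1 / q)`. Write `U(t) = ‖u‖_{L^q(0,t)}`, `W(t) = U(t) ^ q` and
`A = sup_t ‖f‖_{L^{p'}(v⁻¹,(0,t))} / U(t)`.

Lower bound: a function vanishing on `[t, ∞)` has Copson norm at most `U(t)` times its
`L^p(v)` norm, so testing the associate norm against the `L^p`–`L^{p'}` norming functions on
`(0, t)`, divided by `v` and by `U(t)`, gives `‖f‖_{L^{p'}(v⁻¹,(0,t))} / U(t) ≤ ‖f‖_{X'}`.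

Upper bound: cut `(0, ∞)` into the shells `E_k` on which `W ∈ [2^k, 2^(k+1))`. On `E_k`,
Hölder gives `∫ f g ≤ A 2^((k+1)/q) ‖g v‖_{L^p(E_k)}`. The shell `E_(k-1)` has `u^q`-mass at
least `2^(k-1)` and lies to the left of `E_k`, so `2^(k+1) ‖g v‖^q_{L^p(E_k)}` is at most
`4 ∫_{E_(k-1)} u^q (∫_x^∞ (g v)^p)^(q/p)`. Summing over `k` with `∑ a_k ≤ (∑ a_k^q)^(1/q)`
(as `q ≤ 1`) bounds `∫ f g` by `4^(1/q) A ‖g‖_X`.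
-/

namespace Copson

open Function

theorem measure_le_iSup_measure_Ioo (ρ : Measure ℝ) [NullSingletonClass ρ] {a : ℝ} {S : Set ℝ}
    (hS : S ⊆ Ioi a) : ρ S ≤ ⨆ t ∈ S, ρ (Ioo a t) := by
  obtain ⟨T, hTS, hTc, hTU⟩ :=
    TopologicalSpace.isOpen_biUnion_countable S (fun t => Ioo a t) fun _ _ => isOpen_Ioo
  set U := ⋃ t ∈ S, Ioo a t
  -- only a greatest element of `S` can escape the union
  have hmax : (S \ U).Subsingleton := by
    rintro x ⟨hxS, hxU⟩ y ⟨hyS, hyU⟩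
    simp only [U, mem_iUnion, mem_Ioo, not_exists, not_and, not_lt] at hxU hyU
    exact le_antisymm (hyU x hxS (hS hyS)) (hxU y hyS (hS hxS))
  have hdir : DirectedOn ((· ⊆ ·) on fun t => Ioo a t) T := fun x _ y _ =>
    (le_total x y).elim (fun h => ⟨y, ‹_›, Ioo_subset_Ioo_right h, subset_rfl⟩)
      (fun h => ⟨x, ‹_›, subset_rfl, Ioo_subset_Ioo_right h⟩)
  calc ρ S ≤ ρ (U ∪ S \ U) := measure_mono (sdiff_subset_iff.mp subset_rfl)
    _ ≤ ρ U + ρ (S \ U) := measure_union_le _ _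
    _ = ⨆ t ∈ T, ρ (Ioo a t) := by
      rw [hmax.measure_zero, add_zero, ← hTU, measure_biUnion_eq_iSup hTc hdir]
    _ ≤ ⨆ t ∈ S, ρ (Ioo a t) := biSup_mono hTS

section Shells

variable (ρ : Measure ℝ)

theorem measurable_measure_Ioo : Measurable fun x => ρ (Ioo 0 x) :=
  Monotone.measurable fun _ _ h => measure_mono (Ioo_subset_Ioo_right h)

theorem measure_setOf_measure_Ioo_lt_le [NullSingletonClass ρ] (c : ℝ≥0∞) :
    ρ {x | 0 < x ∧ ρ (Ioo 0 x) < c} ≤ c :=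
  (measure_le_iSup_measure_Ioo ρ fun _ hx => hx.1).trans (iSup₂_le fun _ ht => ht.2.le)

theorem le_measure_setOf_measure_Ioo_lt [NullSingletonClass ρ] (hfin : ∀ t, ρ (Ioo 0 t) ≠ ∞)
    {c : ℝ≥0∞} {x₀ : ℝ} (hx₀ : 0 < x₀) (hc : c ≤ ρ (Ioo 0 x₀)) :
    c ≤ ρ {x | 0 < x ∧ ρ (Ioo 0 x) < c} := by
  -- the set contains `(0, σ)` for `σ = inf T`, and `ρ (0, σ] ≥ c` by continuity from above
  set T := {x | 0 < x ∧ c ≤ ρ (Ioo 0 x)}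
  have hTbdd : BddBelow T := ⟨0, fun _ hx => hx.1.le⟩
  obtain ⟨s, hs_anti, hs_lim, hsT⟩ := exists_seq_tendsto_sInf (S := T) ⟨x₀, hx₀, hc⟩ hTbdd
  have hsub : Ioo 0 (sInf T) ⊆ {x | 0 < x ∧ ρ (Ioo 0 x) < c} := fun y hy =>
    ⟨hy.1, not_le.1 fun hcy => (csInf_le hTbdd ⟨hy.1, hcy⟩).not_gt hy.2⟩
  calc c ≤ ⨅ n, ρ (Ioo 0 (s n)) := le_iInf fun n => (hsT n).2
    _ = ρ (⋂ n, Ioo 0 (s n)) :=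
      (Antitone.measure_iInter (fun _ _ h => Ioo_subset_Ioo_right (hs_anti h))
        (fun _ => measurableSet_Ioo.nullMeasurableSet) ⟨0, hfin _⟩).symm
    _ ≤ ρ (Ioc 0 (sInf T)) := measure_mono fun y hy =>
      ⟨(mem_iInter.1 hy 0).1, ge_of_tendsto' hs_lim fun n => (mem_iInter.1 hy n).2.le⟩
    _ = ρ (Ioo 0 (sInf T)) := measure_congr Ioo_ae_eq_Ioc.symm
    _ ≤ _ := measure_mono hsub

def dyadicShell (k : ℤ) : Set ℝ := {x | 0 < x ∧ ρ (Ioo 0 x) ∈ Ico (2 ^ k) (2 ^ (k + 1))}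

theorem dyadicShell_subset_Ioi (k : ℤ) : dyadicShell ρ k ⊆ Ioi 0 := fun _ hx => hx.1

theorem measurableSet_dyadicShell (k : ℤ) : MeasurableSet (dyadicShell ρ k) :=
  measurableSet_Ioi.inter (measurable_measure_Ioo ρ measurableSet_Ico)

theorem pairwise_disjoint_dyadicShell : Pairwise (Disjoint on dyadicShell ρ) := by
  refine (pairwise_disjoint_on _).2 fun k l hkl => Set.disjoint_left.2 ?_
  rintro x ⟨-, -, hxk⟩ ⟨-, hxl, -⟩
  exact (hxk.trans_le (ENNReal.zpow_le_of_le one_le_two (by omega))).not_ge hxl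

theorem iUnion_dyadicShell (h : ∀ t, 0 < t → ρ (Ioo 0 t) ≠ 0 ∧ ρ (Ioo 0 t) ≠ ∞) :
    ⋃ k, dyadicShell ρ k = Ioi 0 := by
  refine (iUnion_subset (dyadicShell_subset_Ioi ρ)).antisymm fun x hx => ?_
  obtain ⟨k, hk⟩ := ENNReal.exists_mem_Ico_zpow (h x hx).1 (h x hx).2 one_lt_two ofNat_ne_top
  exact mem_iUnion.2 ⟨k, hx, hk⟩

theorem lt_of_mem_dyadicShell {k l : ℤ} (hkl : k < l) {x y : ℝ} (hx : x ∈ dyadicShell ρ k)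
    (hy : y ∈ dyadicShell ρ l) : x < y :=
  not_le.1 fun hyx => ((hx.2.2.trans_le (ENNReal.zpow_le_of_le one_le_two (by omega))).trans_le
    hy.2.1).not_ge (measure_mono (Ioo_subset_Ioo_right hyx))

theorem le_measure_dyadicShell [NullSingletonClass ρ] (hfin : ∀ t, ρ (Ioo 0 t) ≠ ∞) {k : ℤ}
    {y : ℝ} (hy : 0 < y) (hky : 2 ^ (k + 1) ≤ ρ (Ioo 0 y)) : 2 ^ k ≤ ρ (dyadicShell ρ k) := by
  have hshell : dyadicShell ρ k =
      {x | 0 < x ∧ ρ (Ioo 0 x) < 2 ^ (k + 1)} \ {x | 0 < x ∧ ρ (Ioo 0 x) < 2 ^ k} := by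
    ext x
    simp only [dyadicShell, mem_ofPred_eq, mem_Ico, mem_sdiff, not_and, not_lt]
    grind
  have hlow : ρ {x | 0 < x ∧ ρ (Ioo 0 x) < 2 ^ k} ≤ 2 ^ k := measure_setOf_measure_Ioo_lt_le ρ _
  have hup : 2 ^ (k + 1) ≤ ρ {x | 0 < x ∧ ρ (Ioo 0 x) < 2 ^ (k + 1)} :=
    le_measure_setOf_measure_Ioo_lt ρ hfin hy hky
  have hsub : {x | 0 < x ∧ ρ (Ioo 0 x) < 2 ^ k} ⊆ {x | 0 < x ∧ ρ (Ioo 0 x) < 2 ^ (k + 1)} :=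
    fun x hx => ⟨hx.1, hx.2.trans_le (ENNReal.zpow_le_of_le one_le_two (by omega))⟩
  have hfin' : ρ {x | 0 < x ∧ ρ (Ioo 0 x) < 2 ^ k} ≠ ∞ :=
    ne_top_of_le_ne_top (ENNReal.zpow_ne_top two_ne_zero ofNat_ne_top k) hlow
  rw [hshell, measure_sdiff hsub
    (measurableSet_Ioi.inter (measurable_measure_Ioo ρ measurableSet_Iio)).nullMeasurableSet hfin']
  refine ENNReal.le_sub_of_add_le_left hfin' ?_
  calc _ ≤ (2 : ℝ≥0∞) ^ k + 2 ^ k := by gcongr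
    _ = 2 ^ (k + 1) := by rw [ENNReal.zpow_add two_ne_zero ofNat_ne_top, zpow_one, mul_two]
    _ ≤ _ := hup

theorem lintegral_Ioi_eq_tsum_dyadicShell
    (h : ∀ t, 0 < t → ρ (Ioo 0 t) ≠ 0 ∧ ρ (Ioo 0 t) ≠ ∞) (F : ℝ → ℝ≥0∞) :
    ∫⁻ x in Ioi 0, F x = ∑' k, ∫⁻ x in dyadicShell ρ k, F x := by
  rw [← iUnion_dyadicShell ρ h,
    lintegral_iUnion (measurableSet_dyadicShell ρ) (pairwise_disjoint_dyadicShell ρ)]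

end Shells

section DualNorm

variable {α : Type*} [MeasurableSpace α] {μ : Measure α} {p : ℝ} {F : α → ℝ≥0∞}

/-- The `L^{p'}(μ)` norm with `p' = p / (p - 1)`, and `p' = ∞` (ess sup) when `p = 1`. -/
def dualNorm (p : ℝ) (F : α → ℝ≥0∞) (μ : Measure α) : ℝ≥0∞ :=
  if p = 1 then essSup F μ else (∫⁻ x, F x ^ (p / (p - 1)) ∂μ) ^ (1 / (p / (p - 1)))

def lpAssocNorm (p : ℝ) (F : α → ℝ≥0∞) (μ : Measure α) : ℝ≥0∞ :=
  ⨆ g : {g : α → ℝ≥0∞ // Measurable g ∧ ∫⁻ x, g x ^ p ∂μ ≤ 1}, ∫⁻ x, F x * g.1 x ∂μ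

theorem lintegral_mul_le_dualNorm_mul (hp : 1 ≤ p) {h : α → ℝ≥0∞} (hF : AEMeasurable F μ)
    (hh : AEMeasurable h μ) :
    ∫⁻ x, F x * h x ∂μ ≤ dualNorm p F μ * (∫⁻ x, h x ^ p ∂μ) ^ (1 / p) := by
  rcases hp.eq_or_lt with rfl | hp1
  · simp only [dualNorm, if_true, rpow_one, div_one]
    calc ∫⁻ x, F x * h x ∂μ ≤ ∫⁻ x, essSup F μ * h x ∂μ :=
          lintegral_mono_ae <| (ENNReal.ae_le_essSup F).mono fun x hx => by gcongr
      _ = _ := lintegral_const_mul'' _ hh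
  · rw [dualNorm, if_neg hp1.ne']
    exact ENNReal.lintegral_mul_le_Lp_mul_Lq μ (Real.HolderConjugate.conjExponent hp1).symm hF hh

theorem lintegral_mul_le_lpAssocNorm_mul (hp : 0 < p) {h : α → ℝ≥0∞} (hh : Measurable h)
    (hfin : ∫⁻ x, h x ^ p ∂μ ≠ ∞) :
    ∫⁻ x, F x * h x ∂μ ≤ lpAssocNorm p F μ * (∫⁻ x, h x ^ p ∂μ) ^ (1 / p) := by
  set N := (∫⁻ x, h x ^ p ∂μ) ^ (1 / p)
  rcases eq_or_ne (∫⁻ x, h x ^ p ∂μ) 0 with h0 | h0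
  · have : ∀ᵐ x ∂μ, F x * h x = 0 := by
      filter_upwards [(lintegral_eq_zero_iff (hh.pow_const p)).1 h0] with x hx
      simp [(ENNReal.rpow_eq_zero_iff_of_pos hp).1 hx]
    simp [lintegral_congr_ae this]
  have hN0 : N ≠ 0 := by simp [N, ENNReal.rpow_eq_zero_iff, h0, hfin]
  have hNtop : N ≠ ∞ := ENNReal.rpow_ne_top_of_nonneg (by positivity) hfin
  have hNp : N ^ p = ∫⁻ x, h x ^ p ∂μ := by
    rw [← ENNReal.rpow_mul, one_div_mul_cancel hp.ne', ENNReal.rpow_one]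
  have hadm : Measurable (fun x => h x / N) ∧ ∫⁻ x, (h x / N) ^ p ∂μ ≤ 1 := by
    refine ⟨hh.div_const N, le_of_eq ?_⟩
    simp_rw [ENNReal.div_rpow_of_nonneg _ _ hp.le, div_eq_mul_inv]
    rw [lintegral_mul_const' _ _ (ENNReal.inv_ne_top.2 (hNp ▸ h0)), hNp,
      ENNReal.mul_inv_cancel h0 hfin]
  rw [← ENNReal.div_le_iff hN0 hNtop, div_eq_mul_inv,
    ← lintegral_mul_const' _ _ (ENNReal.inv_ne_top.2 hN0)]
  simp_rw [mul_assoc, ← div_eq_mul_inv]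
  exact le_iSup (fun g : {g : α → ℝ≥0∞ // Measurable g ∧ ∫⁻ x, g x ^ p ∂μ ≤ 1} =>
    ∫⁻ x, F x * g.1 x ∂μ) ⟨_, hadm⟩

theorem essSup_le_lpAssocNorm_one [IsFiniteMeasure μ] (hF : Measurable F) :
    essSup F μ ≤ lpAssocNorm 1 F μ := by
  refine le_of_forall_lt_imp_le_of_dense fun l hl => ?_
  set B := {x | l < F x}
  have hB : MeasurableSet B := measurableSet_lt measurable_const hF
  have hB0 : μ B ≠ 0 := fun h0 =>
    hl.not_ge (essSup_le_of_ae_le l (ae_iff.2 (by simpa only [not_le] using h0)))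
  have hBtop : μ B ≠ ∞ := measure_ne_top μ B
  have hmass : ∫⁻ x, B.indicator 1 x ^ (1 : ℝ) ∂μ = μ B := by
    simp only [rpow_one, lintegral_indicator_one hB]
  have hlow : l * μ B ≤ ∫⁻ x, F x * B.indicator 1 x ∂μ := by
    have hFB : (fun x => F x * B.indicator 1 x) = B.indicator F := by
      ext x; by_cases hx : x ∈ B <;> simp [hx]
    rw [hFB, lintegral_indicator hB, ← setLIntegral_const]
    exact setLIntegral_mono' hB fun x hx => le_of_lt hx
  have key := lintegral_mul_le_lpAssocNorm_mul (F := F) one_pos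
    (measurable_one.indicator hB) (hmass ▸ hBtop)
  rw [hmass, div_one, rpow_one] at key
  exact (ENNReal.mul_le_mul_iff_left hB0 hBtop).1 (hlow.trans key)

theorem lintegral_rpow_le_lpAssocNorm [IsFiniteMeasure μ] {r : ℝ} (hrp : r.HolderConjugate p)
    (hF : Measurable F) : (∫⁻ x, F x ^ r ∂μ) ^ (1 / r) ≤ lpAssocNorm p F μ := by
  have hr := hrp.pos
  set X : ℕ → ℝ≥0∞ := fun n => ∫⁻ x, min (F x) n ^ r ∂μ
  have hX : ∫⁻ x, F x ^ r ∂μ = ⨆ n, X n := by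
    rw [← lintegral_iSup (fun n => (hF.min measurable_const).pow_const r)
      fun m n hmn x => by gcongr]
    congr with x
    have : F x = ⨆ n : ℕ, min (F x) n := by
      rw [← inf_iSup_eq]; simp [ENNReal.iSup_natCast]
    simp_rw [← ENNReal.orderIsoRpow_apply r hr]
    rw [← (ENNReal.orderIsoRpow r hr).map_iSup, ← this]
  rw [hX, one_div, ENNReal.rpow_inv_le_iff hr]
  refine iSup_le fun n => ?_
  rw [← ENNReal.rpow_inv_le_iff hr, ← one_div]
  rcases eq_or_ne (X n) 0 with h0 | h0
  · simp [h0, hr]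
  have hXtop : X n ≠ ∞ := by
    refine ne_top_of_le_ne_top ?_ (lintegral_mono fun x => ENNReal.rpow_le_rpow
      (min_le_right (F x) n) hr.le)
    simp [lintegral_const, ENNReal.mul_ne_top, ENNReal.rpow_ne_top_of_nonneg hr.le]
  -- the Hölder extremal of the truncation: `∫ h ^ p = X n ≤ ∫ F h`
  set h := fun x => min (F x) n ^ (r - 1)
  have hhp : ∫⁻ x, h x ^ p ∂μ = X n := by
    simp_rw [h, ← ENNReal.rpow_mul, hrp.sub_one_mul_conj]
    rfl
  have hlow : X n ≤ ∫⁻ x, F x * h x ∂μ := lintegral_mono fun x =>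
    calc min (F x) n ^ r = min (F x) n ^ (1 : ℝ) * h x := by
          rw [← ENNReal.rpow_add_of_nonneg _ _ zero_le_one (by linarith [hrp.lt])]; ring_nf
      _ ≤ F x * h x := by rw [rpow_one]; gcongr; exact min_le_left _ _
  have key := hlow.trans (lintegral_mul_le_lpAssocNorm_mul hrp.symm.pos
    ((hF.min measurable_const).pow_const _) (hhp ▸ hXtop))
  rw [hhp] at key
  have hsplit : X n = X n ^ (1 / r) * X n ^ (1 / p) := by
    rw [← ENNReal.rpow_add _ _ h0 hXtop, one_div, one_div, hrp.inv_add_inv_eq_one, rpow_one]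
  nth_rewrite 1 [hsplit] at key
  exact (ENNReal.mul_le_mul_iff_left (by simp [h0, hXtop, hrp.symm.pos])
    (ENNReal.rpow_ne_top_of_nonneg (by positivity [hrp.symm.pos]) hXtop)).1 key

theorem dualNorm_le_lpAssocNorm [IsFiniteMeasure μ] (hp : 1 ≤ p) (hF : Measurable F) :
    dualNorm p F μ ≤ lpAssocNorm p F μ := by
  rcases hp.eq_or_lt with rfl | hp1
  · simpa [dualNorm] using essSup_le_lpAssocNorm_one hF
  · rw [dualNorm, if_neg hp1.ne']
    exact lintegral_rpow_le_lpAssocNorm (Real.HolderConjugate.conjExponent hp1).symm hF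

end DualNorm

theorem dualNrmIoo_eq_dualNorm (p : ℝ) (v f : ℝ → ℝ≥0∞) (t : ℝ) :
    dualNrmIoo p v f t = dualNorm p (fun x => f x / v x) (volume.restrict (Ioo 0 t)) :=
  rfl

theorem dualNorm_restrict_le_of_forall_Ioo {p : ℝ} (hp : 1 ≤ p) {F : ℝ → ℝ≥0∞} (hF : Measurable F)
    {a : ℝ} {S : Set ℝ} (hS : S ⊆ Ioi a) {B : ℝ≥0∞}
    (hB : ∀ t ∈ S, dualNorm p F (volume.restrict (Ioo a t)) ≤ B) :
    dualNorm p F (volume.restrict S) ≤ B := by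
  rcases hp.eq_or_lt with rfl | hp1
  · simp only [dualNorm, if_true] at hB ⊢
    have hbad : MeasurableSet {x | B < F x} := measurableSet_lt measurable_const hF
    refine essSup_le_of_ae_le B (ae_iff.2 ?_)
    simp only [not_le]
    rw [Measure.restrict_apply hbad, inter_comm, ← Measure.restrict_apply' hbad]
    refine nonpos_iff_eq_zero.1 ((measure_le_iSup_measure_Ioo _ hS).trans (iSup₂_le fun t ht => ?_))
    rw [Measure.restrict_apply' hbad, inter_comm, ← Measure.restrict_apply hbad]
    simpa only [not_le] using
      (ae_iff.1 ((ENNReal.ae_le_essSup F).mono fun x hx => hx.trans (hB t ht))).le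
  · have hr : 0 < p / (p - 1) := div_pos (by linarith) (by linarith)
    simp only [dualNorm, if_neg hp1.ne', one_div, ENNReal.rpow_inv_le_iff hr] at hB ⊢
    calc ∫⁻ x in S, F x ^ (p / (p - 1)) = volume.withDensity (fun x => F x ^ (p / (p - 1))) S :=
          (withDensity_apply' _ _).symm
      _ ≤ _ := measure_le_iSup_measure_Ioo _ hS
      _ ≤ B ^ (p / (p - 1)) := iSup₂_le fun t ht => by rw [withDensity_apply']; exact hB t ht

theorem tsum_rpow_le_rpow_tsum {ι : Type*} {s : ℝ} (hs : 1 ≤ s) (a : ι → ℝ≥0∞) :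
    ∑' i, a i ^ s ≤ (∑' i, a i) ^ s := by
  rw [ENNReal.tsum_eq_iSup_sum]
  refine iSup_le fun F => ?_
  calc ∑ i ∈ F, a i ^ s ≤ (∑ i ∈ F, a i) ^ s := by
        classical
        induction F using Finset.induction_on with
        | empty => simp [ENNReal.zero_rpow_of_pos (by linarith : (0 : ℝ) < s)]
        | insert i F hi ih =>
          rw [Finset.sum_insert hi, Finset.sum_insert hi]
          exact (add_le_add le_rfl ih).trans (ENNReal.add_rpow_le_rpow_add _ _ hs)
    _ ≤ (∑' i, a i) ^ s := by gcongr; exact ENNReal.sum_le_tsum F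

section CopsonSpace

variable {p q : ℝ} {u v f : ℝ → ℝ≥0∞}

def copAssocNorm (p q : ℝ) (u v f : ℝ → ℝ≥0∞) : ℝ≥0∞ :=
  ⨆ g : {g : ℝ → ℝ≥0∞ // Measurable g ∧ CopN p q u v g ≤ 1}, ∫⁻ x in Ioi (0 : ℝ), f x * g.1 x

theorem copN_le_nrm_mul_nrm (hp : 0 < p) (hq : 0 < q) (hu : Measurable u) {φ : ℝ → ℝ≥0∞} {t : ℝ}
    (hφ : ∀ x, t ≤ x → φ x = 0) :
    CopN p q u v φ ≤ nrm q u (Ioo 0 t) * nrm p (fun x => φ x * v x) (Ioi 0) := by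
  set N := fun s => nrm p (fun x => φ x * v x) (Ioi s)
  have hN_le : ∀ s, 0 < s → N s ≤ N 0 := fun s hs => by
    simp only [N, nrm]
    gcongr ?_ ^ _
    exact lintegral_mono_set (Ioi_subset_Ioi hs.le)
  have hN_zero : ∀ s, t ≤ s → N s = 0 := fun s hs => by
    have : ∫⁻ x in Ioi s, (φ x * v x) ^ p = 0 :=
      (setLIntegral_congr_fun measurableSet_Ioi fun x hx => by
        simp [hφ x (hs.trans (le_of_lt hx)), hp]).trans lintegral_zero
    simp [N, nrm, this, hp]
  have hpt : ∀ s ∈ Ioi (0 : ℝ),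
      (u s * N s) ^ q ≤ (Ioo 0 t).indicator (fun s => u s ^ q * N 0 ^ q) s := by
    intro s hs
    rcases lt_or_ge s t with hst | hst
    · rw [indicator_of_mem (show s ∈ Ioo 0 t from ⟨hs, hst⟩), ENNReal.mul_rpow_of_nonneg _ _ hq.le]
      gcongr
      exact hN_le s hs
    · simp [hN_zero s hst, hq]
  calc CopN p q u v φ = (∫⁻ s in Ioi 0, (u s * N s) ^ q) ^ (1 / q) := rfl
    _ ≤ (∫⁻ s, (Ioo 0 t).indicator (fun s => u s ^ q * N 0 ^ q) s) ^ (1 / q) := by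
      gcongr ?_ ^ _
      exact (setLIntegral_mono' measurableSet_Ioi hpt).trans (setLIntegral_le_lintegral _ _)
    _ = nrm q u (Ioo 0 t) * N 0 := by
      rw [lintegral_indicator measurableSet_Ioo, lintegral_mul_const _ (hu.pow_const q),
        ENNReal.mul_rpow_of_nonneg _ _ (by positivity), ← ENNReal.rpow_mul,
        mul_one_div_cancel hq.ne', rpow_one]
      rfl

theorem copN_indicator_div_le_one (hp : 0 < p) (hq : 0 < q) (hu : Measurable u)
    (hvw : ∀ᵐ x ∂(volume.restrict (Ioi (0 : ℝ))), 0 < v x ∧ v x < ∞) {t : ℝ}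
    (hU0 : nrm q u (Ioo 0 t) ≠ 0) (hUtop : nrm q u (Ioo 0 t) ≠ ∞) {h : ℝ → ℝ≥0∞}
    (hh : ∫⁻ x in Ioo 0 t, h x ^ p ≤ 1) :
    CopN p q u v ((Ioo 0 t).indicator fun x => h x / v x * (nrm q u (Ioo 0 t))⁻¹) ≤ 1 := by
  set U := nrm q u (Ioo 0 t)
  set φ := (Ioo 0 t).indicator fun x => h x / v x * U⁻¹
  have hae : ∀ᵐ x ∂volume.restrict (Ioi 0),
      (φ x * v x) ^ p = (Ioo 0 t).indicator (fun x => h x ^ p * U⁻¹ ^ p) x := by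
    filter_upwards [hvw] with x hx
    by_cases hxt : x ∈ Ioo 0 t
    · rw [indicator_of_mem hxt, ← ENNReal.mul_rpow_of_nonneg _ _ hp.le]
      simp only [φ, indicator_of_mem hxt]
      congr 1
      calc h x / v x * U⁻¹ * v x = h x * U⁻¹ * ((v x)⁻¹ * v x) := by
            rw [div_eq_mul_inv]; ring
        _ = h x * U⁻¹ := by rw [ENNReal.inv_mul_cancel hx.1.ne' hx.2.ne, mul_one]
    · simp [φ, hxt, hp]
  have hφv : nrm p (fun x => φ x * v x) (Ioi 0) ≤ U⁻¹ :=
    calc nrm p (fun x => φ x * v x) (Ioi 0)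
        ≤ (∫⁻ x, (Ioo 0 t).indicator (fun x => h x ^ p * U⁻¹ ^ p) x) ^ (1 / p) := by
          rw [nrm, lintegral_congr_ae hae]
          gcongr ?_ ^ _
          exact setLIntegral_le_lintegral _ _
      _ ≤ (1 * U⁻¹ ^ p) ^ (1 / p) := by
          rw [lintegral_indicator measurableSet_Ioo, lintegral_mul_const' _ _
            (ENNReal.rpow_ne_top_of_nonneg hp.le (ENNReal.inv_ne_top.2 hU0))]
          gcongr
      _ = U⁻¹ := by rw [one_mul, ← ENNReal.rpow_mul, mul_one_div_cancel hp.ne', rpow_one]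
  calc CopN p q u v φ ≤ U * nrm p (fun x => φ x * v x) (Ioi 0) :=
        copN_le_nrm_mul_nrm hp hq hu fun x hx =>
          indicator_of_notMem (fun hxt => hx.not_gt hxt.2) _
    _ ≤ U * U⁻¹ := by gcongr
    _ = 1 := ENNReal.mul_inv_cancel hU0 hUtop

theorem dualNrmIoo_mul_inv_le_copAssocNorm (hp : 1 ≤ p) (hq : 0 < q) (hu : Measurable u)
    (hv : Measurable v) (hf : Measurable f)
    (hvw : ∀ᵐ x ∂(volume.restrict (Ioi (0 : ℝ))), 0 < v x ∧ v x < ∞) {t : ℝ}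
    (hU0 : nrm q u (Ioo 0 t) ≠ 0) (hUtop : nrm q u (Ioo 0 t) ≠ ∞) :
    dualNrmIoo p v f t * (nrm q u (Ioo 0 t))⁻¹ ≤ copAssocNorm p q u v f := by
  set U := nrm q u (Ioo 0 t)
  rw [dualNrmIoo_eq_dualNorm]
  refine (mul_le_mul_left (dualNorm_le_lpAssocNorm hp (hf.div hv)) _).trans ?_
  rw [lpAssocNorm, ENNReal.iSup_mul]
  refine iSup_le fun ⟨h, hh, hhp⟩ => ?_
  set φ := (Ioo 0 t).indicator fun x => h x / v x * U⁻¹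
  have hfφ : (fun x => f x * φ x) = (Ioo 0 t).indicator fun x => f x / v x * h x * U⁻¹ := by
    ext x
    by_cases hxt : x ∈ Ioo 0 t
    · simp only [φ, indicator_of_mem hxt, div_eq_mul_inv]; ring
    · simp [φ, hxt]
  calc (∫⁻ x in Ioo 0 t, f x / v x * h x) * U⁻¹ = ∫⁻ x in Ioi 0, f x * φ x := by
        rw [← lintegral_mul_const' _ _ (ENNReal.inv_ne_top.2 hU0), hfφ,
          lintegral_indicator measurableSet_Ioo, Measure.restrict_restrict measurableSet_Ioo,
          inter_eq_left.2 Ioo_subset_Ioi_self]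
    _ ≤ copAssocNorm p q u v f :=
      le_iSup (fun g : {g : ℝ → ℝ≥0∞ // Measurable g ∧ CopN p q u v g ≤ 1} =>
        ∫⁻ x in Ioi (0 : ℝ), f x * g.1 x)
        ⟨φ, ((hh.div hv).mul_const _).indicator measurableSet_Ioo,
          copN_indicator_div_le_one (zero_lt_one.trans_le hp) hq hu hvw hU0 hUtop hhp⟩

theorem nrm_eq_withDensity_rpow (u : ℝ → ℝ≥0∞) (s : Set ℝ) :
    nrm q u s = volume.withDensity (fun x => u x ^ q) s ^ (1 / q) := by
  rw [withDensity_apply']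
  rfl

theorem withDensity_rpow_ne_zero_ne_top (hq : 0 < q) {s : Set ℝ}
    (h : 0 < nrm q u s ∧ nrm q u s < ∞) :
    volume.withDensity (fun x => u x ^ q) s ≠ 0 ∧ volume.withDensity (fun x => u x ^ q) s ≠ ∞ := by
  have hq' : 0 < 1 / q := by positivity
  rw [nrm_eq_withDensity_rpow] at h
  exact ⟨fun h0 => h.1.ne' ((ENNReal.rpow_eq_zero_iff_of_pos hq').2 h0),
    ((ENNReal.rpow_lt_top_iff_of_pos hq').1 h.2).ne⟩

theorem copN_rpow_eq (hq : 0 < q) (g : ℝ → ℝ≥0∞) :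
    CopN p q u v g ^ q =
      ∫⁻ x in Ioi 0, u x ^ q * nrm p (fun y => g y * v y) (Ioi x) ^ q := by
  rw [CopN, nrm, ← ENNReal.rpow_mul, one_div_mul_cancel hq.ne', rpow_one]
  simp_rw [ENNReal.mul_rpow_of_nonneg _ _ hq.le]

theorem setLIntegral_mul_le_of_dualNrmIoo_le (hp : 1 ≤ p) (hv : Measurable v) (hf : Measurable f)
    {g : ℝ → ℝ≥0∞} (hg : Measurable g)
    (hvw : ∀ᵐ x ∂(volume.restrict (Ioi (0 : ℝ))), 0 < v x ∧ v x < ∞) {A : ℝ≥0∞}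
    (hA : ∀ t, 0 < t → dualNrmIoo p v f t ≤ A * nrm q u (Ioo 0 t)) {S : Set ℝ} (hS : S ⊆ Ioi 0)
    {c : ℝ≥0∞} (hc : ∀ t ∈ S, nrm q u (Ioo 0 t) ≤ c) :
    ∫⁻ x in S, f x * g x ≤ A * c * nrm p (fun x => g x * v x) S := by
  have hfg : ∫⁻ x in S, f x * g x = ∫⁻ x in S, f x / v x * (g x * v x) := by
    refine lintegral_congr_ae ?_
    filter_upwards [ae_restrict_of_ae_restrict_of_subset hS hvw] with x hx
    calc f x * g x = f x * g x * ((v x)⁻¹ * v x) := by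
          rw [ENNReal.inv_mul_cancel hx.1.ne' hx.2.ne, mul_one]
      _ = f x / v x * (g x * v x) := by rw [div_eq_mul_inv]; ring
  rw [hfg]
  refine (lintegral_mul_le_dualNorm_mul hp (hf.div hv).aemeasurable
    (hg.mul hv).aemeasurable).trans ?_
  gcongr
  · exact dualNorm_restrict_le_of_forall_Ioo hp (hf.div hv) hS fun t ht =>
      (hA t (hS ht)).trans (by gcongr; exact hc t ht)
  · rfl

theorem zpow_mul_nrm_dyadicShell_rpow_le (hp : 0 < p) (hq : 0 < q) {w : ℝ → ℝ≥0∞}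
    (hfin : ∀ t, volume.withDensity w (Ioo 0 t) ≠ ∞) (h : ℝ → ℝ≥0∞) (k : ℤ) :
    2 ^ (k + 1) * nrm p h (dyadicShell (volume.withDensity w) k) ^ q ≤
      4 * ∫⁻ x in dyadicShell (volume.withDensity w) (k - 1), w x * nrm p h (Ioi x) ^ q := by
  set ρ := volume.withDensity w
  set N := nrm p h (dyadicShell ρ k)
  rcases (dyadicShell ρ k).eq_empty_or_nonempty with h0 | ⟨y, hy⟩
  · simp [N, nrm, h0, hp, hq]
  have hNG : ∀ x ∈ dyadicShell ρ (k - 1), N ≤ nrm p h (Ioi x) := fun x hx => by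
    simp only [N, nrm]
    gcongr ?_ ^ _
    exact lintegral_mono_set fun z hz => lt_of_mem_dyadicShell ρ (sub_one_lt k) hx hz
  calc 2 ^ (k + 1) * N ^ q = 4 * (2 ^ (k - 1) * N ^ q) := by
        rw [show k + 1 = k - 1 + 2 by ring, ENNReal.zpow_add two_ne_zero ofNat_ne_top]
        norm_num
        ring
    _ ≤ 4 * (ρ (dyadicShell ρ (k - 1)) * N ^ q) := by
        gcongr
        exact le_measure_dyadicShell ρ hfin hy.1 (by rw [sub_add_cancel]; exact hy.2.1)
    _ ≤ 4 * ∫⁻ x in dyadicShell ρ (k - 1), w x * N ^ q := by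
        gcongr
        rw [withDensity_apply']
        exact lintegral_mul_const_le _ _
    _ ≤ _ := by
        gcongr 4 * ?_
        exact setLIntegral_mono' (measurableSet_dyadicShell ρ _) fun x hx => by
          gcongr
          exact hNG x hx

theorem lintegral_mul_le_of_dualNrmIoo_le (hp : 1 ≤ p) (hq : 0 < q) (hq1 : q ≤ 1)
    (hv : Measurable v) (hf : Measurable f)
    (hU : ∀ t ∈ Ioi (0 : ℝ), 0 < nrm q u (Ioo 0 t) ∧ nrm q u (Ioo 0 t) < ∞)
    (hvw : ∀ᵐ x ∂(volume.restrict (Ioi (0 : ℝ))), 0 < v x ∧ v x < ∞) {A : ℝ≥0∞}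
    (hA : ∀ t, 0 < t → dualNrmIoo p v f t ≤ A * nrm q u (Ioo 0 t)) {g : ℝ → ℝ≥0∞}
    (hg : Measurable g) (hcop : CopN p q u v g ≤ 1) :
    ∫⁻ x in Ioi 0, f x * g x ≤ 4 ^ (1 / q) * A := by
  set ρ := volume.withDensity fun x => u x ^ q
  have hρ : ∀ t, 0 < t → ρ (Ioo 0 t) ≠ 0 ∧ ρ (Ioo 0 t) ≠ ∞ := fun t ht =>
    withDensity_rpow_ne_zero_ne_top hq (hU t ht)
  have hfin : ∀ t, ρ (Ioo 0 t) ≠ ∞ := fun t =>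
    (le_or_gt t 0).elim (fun ht => by simp [Ioo_eq_empty_of_le ht]) fun ht => (hρ t ht).2
  set E := dyadicShell ρ
  set N := fun k => nrm p (fun y => g y * v y) (E k)
  set G := fun x => nrm p (fun y => g y * v y) (Ioi x)
  have hterm : ∀ k, ∫⁻ x in E k, f x * g x ≤ A * (2 ^ (k + 1) * N k ^ q) ^ (1 / q) := fun k =>
    calc _ ≤ A * (2 ^ (k + 1)) ^ (1 / q) * N k :=
          setLIntegral_mul_le_of_dualNrmIoo_le hp hv hf hg hvw hA (dyadicShell_subset_Ioi ρ k)
            fun t ht => by rw [nrm_eq_withDensity_rpow]; gcongr; exact ht.2.2.le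
      _ = _ := by
          rw [ENNReal.mul_rpow_of_nonneg _ _ (by positivity), ← ENNReal.rpow_mul,
            mul_one_div_cancel hq.ne', rpow_one, mul_assoc]
  calc ∫⁻ x in Ioi 0, f x * g x = ∑' k, ∫⁻ x in E k, f x * g x :=
        lintegral_Ioi_eq_tsum_dyadicShell ρ hρ _
    _ ≤ ∑' k, A * (2 ^ (k + 1) * N k ^ q) ^ (1 / q) := ENNReal.tsum_le_tsum hterm
    _ ≤ A * (∑' k, 2 ^ (k + 1) * N k ^ q) ^ (1 / q) := by
        rw [ENNReal.tsum_mul_left]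
        gcongr
        exact tsum_rpow_le_rpow_tsum ((one_le_div hq).2 hq1) _
    _ ≤ A * (∑' k, 4 * ∫⁻ x in E (k - 1), u x ^ q * G x ^ q) ^ (1 / q) := by
        refine mul_le_mul_right (ENNReal.rpow_le_rpow (ENNReal.tsum_le_tsum fun k => ?_)
          (by positivity)) A
        exact zpow_mul_nrm_dyadicShell_rpow_le (zero_lt_one.trans_le hp) hq hfin _ k
    _ = A * (4 * CopN p q u v g ^ q) ^ (1 / q) := by
        rw [ENNReal.tsum_mul_left, copN_rpow_eq hq, lintegral_Ioi_eq_tsum_dyadicShell ρ hρ]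
        congr 3
        exact (Equiv.subRight (1 : ℤ)).tsum_eq fun k => ∫⁻ x in E k, u x ^ q * G x ^ q
    _ ≤ A * (4 * 1) ^ (1 / q) := by gcongr; exact ENNReal.rpow_le_one hcop hq.le
    _ = 4 ^ (1 / q) * A := by rw [mul_one, mul_comm]

end CopsonSpace

end Copson

/-- associate norm of `Cop_{p,q}(u,v)` for `1 ≤ p < ∞`, `0 < q ≤ 1`. -/
theorem copson_associate_norm
    (p q : ℝ) (hp : 1 ≤ p) (hq : 0 < q) (hq1 : q ≤ 1)
    (u v : ℝ → ℝ≥0∞) (hu : Measurable u) (hv : Measurable v)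
    (hU : ∀ t ∈ Ioi (0:ℝ), 0 < nrm q u (Ioo 0 t) ∧ nrm q u (Ioo 0 t) < ∞)
    (hvw : ∀ᵐ x ∂(volume.restrict (Ioi (0:ℝ))), 0 < v x ∧ v x < ∞) :
    ∃ c₁ c₂ : ℝ≥0∞, 0 < c₁ ∧ c₂ < ∞ ∧
      ∀ f : ℝ → ℝ≥0∞, Measurable f →
        (let assoc : ℝ≥0∞ := ⨆ g : {g : ℝ → ℝ≥0∞ // Measurable g ∧ CopN p q u v g ≤ 1},
            ∫⁻ x in Ioi (0:ℝ), f x * g.1 x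
         let A : ℝ≥0∞ := ⨆ t ∈ Ioi (0:ℝ), dualNrmIoo p v f t * (nrm q u (Ioo 0 t))⁻¹
         c₁ * A ≤ assoc ∧ assoc ≤ c₂ * A) := by
  refine ⟨1, 4 ^ (1 / q), one_pos, ENNReal.rpow_lt_top_of_nonneg (by positivity) ofNat_ne_top,
    fun f hf => ⟨?_, ?_⟩⟩
  · rw [one_mul]
    exact iSup₂_le fun t ht =>
      Copson.dualNrmIoo_mul_inv_le_copAssocNorm hp hq hu hv hf hvw (hU t ht).1.ne' (hU t ht).2.ne
  · refine iSup_le fun g => Copson.lintegral_mul_le_of_dualNrmIoo_le hp hq hq1 hv hf hU hvw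
      (fun t ht => ?_) g.2.1 g.2.2
    rw [← ENNReal.div_le_iff (hU t ht).1.ne' (hU t ht).2.ne, div_eq_mul_inv]
    exact le_iSup₂ (f := fun t (_ : t ∈ Ioi (0:ℝ)) => dualNrmIoo p v f t * (nrm q u (Ioo 0 t))⁻¹)
      t ht
end
end

section
/- Let 0 < q ≤ p ≤ 1 and let u, w be nonnegative measurable functions on (0,∞) with ∫_t^∞ u^q < ∞ for all t > 0. Then the inequality (∫_0^∞ g^p w^p)^{1/p} ≤ c (∫_0^∞ (∫_0^t g)^q u(t)^q dt)^{1/q} holds for all nonnegative measurable g if and only if C = sup_{t>0} (∫_t^∞ w^{p/(1−p)})^{(1−p)/p} (∫_t^∞ u^q)^{−1/q} < ∞ (with the first factor replaced by ess sup_{(t,∞)} w when p = 1), and the best constant c satisfies c ≈ C. -/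
/-!
Write `U t = ∫_t^∞ u^q` and `C` for the constant of the statement.

Necessity: for `g` supported in `(t, ∞)` the primitive `∫_0^s g` vanishes for `s ≤ t` and is at most
`∫ g`, so the right-hand side is at most `(∫ g) · U(t)^{1/q}`. Testing with the indicator of a set
where `w` nearly attains its essential supremum (`p = 1`), or with truncations of `w^{p/(1-p)}`, the
extremals of Hölder's inequality (`p < 1`), gives `C ≤` best constant.

Sufficiency: fix `a > 0` and choose `a = s₀ < s₁ < ⋯` with `U(s_k) = 2^{-k} U(a)`, which is possible
because `U` is continuous (`u^q dx` has no atoms). With `A_k = ∫_{s_k}^{s_{k+1}} g`, Hölder's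
inequality and the definition of `C` bound the left integral over the `k`-th block by
`C^p (A_k^q U(s_k))^{p/q}`, and since `p/q ≥ 1` the sum of these is at most
`C^p (∑ A_k^q U(s_k))^{p/q}`. On block `k + 2` the primitive of `g` is at least `A_k`, and that block
carries `u^q`-mass `U(s_k)/4`; hence `∑ A_k^q U(s_k) ≤ 4 ∫ (∫_0^t g)^q u^q`. Beyond all `s_k`, `U`
vanishes and so does `w`. Letting `a → 0` gives `best ≤ 4^{1/q} C`.
-/

open MeasureTheory ENNReal Set Filter Topology

namespace ReverseHardy

theorem continuousOn_measure_Ioi {μ : Measure ℝ} [NullSingletonClass μ] {a : ℝ}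
    (ha : μ (Ioi a) ≠ ∞) : ContinuousOn (fun t => μ (Ioi t)) (Ici a) := by
  intro x _
  simp_rw [← lintegral_indicator_one measurableSet_Ioi]
  refine tendsto_lintegral_filter_of_dominated_convergence ((Ioi a).indicator 1)
    (.of_forall fun _ => measurable_one.indicator measurableSet_Ioi)
    (eventually_nhdsWithin_of_forall fun t ht => .of_forall fun y =>
      indicator_le_indicator_of_subset (Ioi_subset_Ioi ht) (fun _ => zero_le) y)
    (by rwa [lintegral_indicator_one measurableSet_Ioi]) ?_
  filter_upwards [compl_mem_ae_iff.mpr (measure_singleton (μ := μ) x)] with y hy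
  refine tendsto_const_nhds.congr' (EventuallyEq.symm (nhdsWithin_le_nhds ?_))
  rcases lt_or_gt_of_ne hy with hyx | hxy
  · filter_upwards [Ioi_mem_nhds hyx] with t ht
    simp [not_lt.mpr (mem_Ioi.mp ht).le, not_lt.mpr hyx.le]
  · filter_upwards [Iio_mem_nhds hxy] with t ht
    simp [indicator_of_mem (show y ∈ Ioi t from ht), hxy]

theorem tendsto_measure_Ioi_atTop {μ : Measure ℝ} {a : ℝ} (ha : μ (Ioi a) ≠ ∞) :
    Tendsto (fun t => μ (Ioi t)) atTop (𝓝 0) := by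
  have := tendsto_measure_iInter_atTop (μ := μ) (s := fun t : ℝ => Ioi t)
    (fun _ => measurableSet_Ioi.nullMeasurableSet) (fun _ _ h => Ioi_subset_Ioi h) ⟨a, ha⟩
  have hempty : (⋂ t : ℝ, Ioi t) = ∅ := iInter_eq_empty_iff.mpr fun y => ⟨y, lt_irrefl y⟩
  rwa [hempty, measure_empty] at this

theorem exists_measure_Ioi_eq {μ : Measure ℝ} [NullSingletonClass μ] {a : ℝ}
    (ha : μ (Ioi a) ≠ ∞) {v : ℝ≥0∞} (hv₀ : v ≠ 0) (hv : v ≤ μ (Ioi a)) :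
    ∃ s, a ≤ s ∧ μ (Ioi s) = v := by
  obtain ⟨b, hb⟩ := ((tendsto_measure_Ioi_atTop ha).eventually (gt_mem_nhds hv₀.bot_lt)).exists
  have hab : a ≤ max a b := le_max_left a b
  obtain ⟨s, hs, hsv⟩ := intermediate_value_Icc' hab
    ((continuousOn_measure_Ioi ha).mono Icc_subset_Ici_self)
    ⟨(measure_mono (Ioi_subset_Ioi (le_max_right a b))).trans hb.le, hv⟩
  exact ⟨s, hs.1, hsv⟩

theorem exists_seq_measure_Ioi_eq_mul_inv_two_pow {μ : Measure ℝ} [NullSingletonClass μ]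
    {a : ℝ} (ha : μ (Ioi a) ≠ ∞) (ha₀ : μ (Ioi a) ≠ 0) :
    ∃ s : ℕ → ℝ, s 0 = a ∧ StrictMono s ∧ ∀ k, μ (Ioi (s k)) = μ (Ioi a) * 2⁻¹ ^ k := by
  have hpos (k : ℕ) : μ (Ioi a) * 2⁻¹ ^ k ≠ 0 := by simp [ha₀]
  choose x hx using fun k : ℕ => exists_measure_Ioi_eq ha (hpos k)
    (mul_le_of_le_one_right' (pow_le_one₀ zero_le (by norm_num)))
  set s : ℕ → ℝ := fun k => if k = 0 then a else x k
  have hs (k : ℕ) : μ (Ioi (s k)) = μ (Ioi a) * 2⁻¹ ^ k := by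
    rcases k with _ | k
    · simp [s]
    · simp [s, (hx _).2]
  refine ⟨s, rfl, strictMono_nat_of_lt_succ fun k => ?_, hs⟩
  by_contra! hle
  have hhalf : μ (Ioi a) * 2⁻¹ ^ (k + 1) < μ (Ioi a) * 2⁻¹ ^ k := by
    rw [pow_succ, ← mul_assoc, ← div_eq_mul_inv]
    exact ENNReal.half_lt_self (hpos k) (ENNReal.mul_ne_top ha (by simp))
  rw [← hs, ← hs] at hhalf
  exact hhalf.not_ge (measure_mono (Ioi_subset_Ioi hle))

theorem tsum_rpow_le_rpow_tsum (f : ℕ → ℝ≥0∞) {r : ℝ} (hr : 1 ≤ r) :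
    ∑' i, f i ^ r ≤ (∑' i, f i) ^ r := by
  have hfin (s : Finset ℕ) : ∑ i ∈ s, f i ^ r ≤ (∑ i ∈ s, f i) ^ r := by
    induction s using Finset.induction with
    | empty => simp
    | insert a s ha ih =>
      rw [Finset.sum_insert ha, Finset.sum_insert ha]
      exact (add_le_add_right ih _).trans (ENNReal.add_rpow_le_rpow_add _ _ hr)
  rw [ENNReal.tsum_eq_iSup_sum]
  exact iSup_le fun s => (hfin s).trans (by gcongr; exact ENNReal.sum_le_tsum s)

theorem Ioi_subset_iUnion_Ioc_union_iInter_Ioi (s : ℕ → ℝ) :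
    Ioi (s 0) ⊆ (⋃ k, Ioc (s k) (s (k + 1))) ∪ ⋂ k, Ioi (s k) := by
  intro x hx
  by_contra h
  simp only [mem_union, mem_iUnion, mem_iInter, mem_Ioc, mem_Ioi, not_or, not_exists,
    not_and, not_le, not_forall] at h
  obtain ⟨hblock, k, hk⟩ := h
  have hlt (k : ℕ) : s k < x := by
    induction k with
    | zero => exact hx
    | succ k ih => exact hblock k ih
  exact hk (hlt k)

theorem setLIntegral_iInter_Ioi_eq_zero {f : ℝ → ℝ≥0∞} (s : ℕ → ℝ)
    (h : ∀ x, (∀ k, s k ≤ x) → ∫⁻ y in Ioi x, f y = 0) : ∫⁻ y in ⋂ k, Ioi (s k), f y = 0 := by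
  by_cases hs : BddAbove (range s)
  · refine le_antisymm ?_ zero_le
    calc ∫⁻ y in ⋂ k, Ioi (s k), f y ≤ ∫⁻ y in Ici (⨆ k, s k), f y :=
          lintegral_mono_set fun x hx => mem_Ici.mpr (ciSup_le fun k => (mem_iInter.mp hx k).le)
      _ = ∫⁻ y in Ioi (⨆ k, s k), f y := setLIntegral_congr Ioi_ae_eq_Ici.symm
      _ = 0 := h _ fun k => le_ciSup hs k
  · have hempty : ⋂ k, Ioi (s k) = ∅ := eq_empty_of_forall_notMem fun x hx => by
      obtain ⟨_, ⟨k, rfl⟩, hk⟩ := not_bddAbove_iff.mp hs x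
      exact (mem_iInter.mp hx k).not_gt hk
    simp [hempty]

theorem setLIntegral_Ioi_le_of_forall_lt {f : ℝ → ℝ≥0∞} {x : ℝ} {K : ℝ≥0∞}
    (h : ∀ a, x < a → ∫⁻ y in Ioi a, f y ≤ K) : ∫⁻ y in Ioi x, f y ≤ K := by
  have hx : Ioi x = ⋃ n : ℕ, Ioi (x + 1 / (n + 1)) := by
    ext y
    simp only [mem_Ioi, mem_iUnion]
    refine ⟨fun hy => ?_, fun ⟨n, hn⟩ => lt_trans (by simp; positivity) hn⟩
    obtain ⟨n, hn⟩ := exists_nat_one_div_lt (sub_pos.mpr hy)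
    exact ⟨n, by linarith⟩
  have hmono : Monotone fun n : ℕ => Ioi (x + 1 / ((n : ℝ) + 1)) := fun m n hmn =>
    Ioi_subset_Ioi (by gcongr)
  rw [hx, setLIntegral_iUnion_of_directed _ hmono.directed_le]
  exact iSup_le fun n => h _ (by simp; positivity)

theorem le_rpow_mul_rpow_of_le_rpow {p : ℝ} (hp : 0 < p) (hp1 : p < 1) {a b : ℝ≥0∞}
    (hab : a ≤ b ^ (p / (1 - p))) : a ≤ a ^ p * b ^ p :=
  calc a = a ^ p * a ^ (1 - p) := by
        rw [← ENNReal.rpow_add_of_nonneg _ _ hp.le (by linarith), add_sub_cancel, ENNReal.rpow_one]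
    _ ≤ a ^ p * (b ^ (p / (1 - p))) ^ (1 - p) := by gcongr
    _ = a ^ p * b ^ p := by rw [← ENNReal.rpow_mul, div_mul_cancel₀ _ (by linarith)]

theorem iSup_indicator_Iic_add_min_natCast (f : ℝ → ℝ≥0∞) (t x : ℝ) :
    ⨆ n : ℕ, (Iic (t + n)).indicator (fun y => min (f y) n) x = f x := by
  refine le_antisymm (iSup_le fun n => (indicator_le_self _ _ x).trans (min_le_left _ _))
    (le_of_forall_lt fun c hc => lt_iSup_iff.mpr ?_)
  obtain ⟨n₁, hn₁⟩ := ENNReal.exists_nat_gt hc.ne_top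
  obtain ⟨n₂, hn₂⟩ := exists_nat_ge (x - t)
  have hx : x ∈ Iic (t + (max n₁ n₂ : ℕ)) := by
    rw [mem_Iic, Nat.cast_max]
    linarith [le_max_right (n₁ : ℝ) n₂]
  refine ⟨max n₁ n₂, ?_⟩
  rw [indicator_of_mem hx]
  exact lt_min hc (hn₁.trans_le (Nat.cast_le.mpr (le_max_left _ _)))

/-- `‖w‖_{L^{p'}(t, ∞)}` with `p' = p / (1 - p)`, the essential supremum when `p = 1`. -/
noncomputable def tailNorm (p : ℝ) (w : ℝ → ℝ≥0∞) (t : ℝ) : ℝ≥0∞ :=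
  if p = 1 then essSup w (volume.restrict (Ioi t))
  else (∫⁻ x in Ioi t, w x ^ (p / (1 - p))) ^ ((1 - p) / p)

noncomputable def hardyConstant (p q : ℝ) (u w : ℝ → ℝ≥0∞) : ℝ≥0∞ :=
  ⨆ t ∈ Ioi (0:ℝ), tailNorm p w t * ((∫⁻ x in Ioi t, u x ^ q) ^ (1 / q))⁻¹

noncomputable def bestHardyConstant (p q : ℝ) (u w : ℝ → ℝ≥0∞) : ℝ≥0∞ :=
  ⨆ g : {g : ℝ → ℝ≥0∞ // Measurable g}, (∫⁻ x in Ioi (0:ℝ), g.1 x ^ p * w x ^ p) ^ (1 / p) /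
    (∫⁻ t in Ioi (0:ℝ), (∫⁻ x in Ioo (0:ℝ) t, g.1 x) ^ q * u t ^ q) ^ (1 / q)

section

variable {p q : ℝ} {u w g : ℝ → ℝ≥0∞}

theorem setLIntegral_rpow_mul_rpow_le_tailNorm (hp : 0 < p) (hp1 : p ≤ 1) (hg : Measurable g)
    (hw : Measurable w) {s : Set ℝ} {t : ℝ} (hst : s ⊆ Ioi t) :
    ∫⁻ x in s, g x ^ p * w x ^ p ≤ (∫⁻ x in s, g x) ^ p * tailNorm p w t ^ p := by
  rcases hp1.eq_or_lt with rfl | hp1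
  · simp only [ENNReal.rpow_one, tailNorm, if_true]
    calc ∫⁻ x in s, g x * w x
        ≤ ∫⁻ x in s, g x * essSup w (volume.restrict (Ioi t)) :=
          lintegral_mono_ae <| (ae_restrict_of_ae_restrict_of_subset hst (ae_le_essSup w)).mono
            fun x hx => by gcongr
      _ = _ := lintegral_mul_const _ hg
  · have hconj : (1 / p).HolderConjugate (1 / (1 - p)) :=
      ⟨by field_simp; ring, by positivity, by simp only [one_div, inv_pos]; linarith⟩
    calc ∫⁻ x in s, g x ^ p * w x ^ p
        ≤ (∫⁻ x in s, (g x ^ p) ^ (1 / p)) ^ (1 / (1 / p)) *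
            (∫⁻ x in s, (w x ^ p) ^ (1 / (1 - p))) ^ (1 / (1 / (1 - p))) :=
          ENNReal.lintegral_mul_le_Lp_mul_Lq _ hconj
            (hg.pow_const p).aemeasurable (hw.pow_const p).aemeasurable
      _ = (∫⁻ x in s, g x) ^ p * (∫⁻ x in s, w x ^ (p / (1 - p))) ^ (1 - p) := by
          simp_rw [← ENNReal.rpow_mul, one_div_one_div, mul_one_div, div_self hp.ne',
            ENNReal.rpow_one]
      _ ≤ (∫⁻ x in s, g x) ^ p * (∫⁻ x in Ioi t, w x ^ (p / (1 - p))) ^ (1 - p) := by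
          gcongr
      _ = (∫⁻ x in s, g x) ^ p * tailNorm p w t ^ p := by
          rw [tailNorm, if_neg hp1.ne, ← ENNReal.rpow_mul, div_mul_cancel₀ _ hp.ne']

theorem tailNorm_le_hardyConstant_mul (hq : 0 < q) (hC : hardyConstant p q u w ≠ ∞) {t : ℝ}
    (ht : 0 < t) (hU : ∫⁻ x in Ioi t, u x ^ q ≠ ∞) :
    tailNorm p w t ≤ hardyConstant p q u w * (∫⁻ x in Ioi t, u x ^ q) ^ (1 / q) := by
  have : tailNorm p w t / (∫⁻ x in Ioi t, u x ^ q) ^ (1 / q) ≤ hardyConstant p q u w :=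
    le_iSup₂ (f := fun t (_ : t ∈ Ioi (0:ℝ)) =>
      tailNorm p w t * ((∫⁻ x in Ioi t, u x ^ q) ^ (1 / q))⁻¹) t ht
  exact (ENNReal.div_le_iff_le_mul (.inr hC)
    (.inl (ENNReal.rpow_ne_top_of_nonneg (by positivity) hU))).mp this

theorem setLIntegral_rpow_mul_rpow_le_hardyConstant (hq : 0 < q) (hqp : q ≤ p) (hp1 : p ≤ 1)
    (hg : Measurable g) (hw : Measurable w) (hC : hardyConstant p q u w ≠ ∞) {s : Set ℝ} {t : ℝ}
    (ht : 0 < t) (hU : ∫⁻ x in Ioi t, u x ^ q ≠ ∞) (hst : s ⊆ Ioi t) :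
    ∫⁻ x in s, g x ^ p * w x ^ p ≤
      hardyConstant p q u w ^ p * ((∫⁻ x in s, g x) ^ q * ∫⁻ x in Ioi t, u x ^ q) ^ (p / q) := by
  have hp : 0 < p := hq.trans_le hqp
  calc ∫⁻ x in s, g x ^ p * w x ^ p ≤ (∫⁻ x in s, g x) ^ p * tailNorm p w t ^ p :=
        setLIntegral_rpow_mul_rpow_le_tailNorm hp hp1 hg hw hst
    _ ≤ (∫⁻ x in s, g x) ^ p *
          (hardyConstant p q u w * (∫⁻ x in Ioi t, u x ^ q) ^ (1 / q)) ^ p := by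
        gcongr
        exact tailNorm_le_hardyConstant_mul hq hC ht hU
    _ = _ := by
        rw [ENNReal.mul_rpow_of_nonneg _ _ (by positivity),
          ENNReal.mul_rpow_of_nonneg _ _ (by positivity), ← ENNReal.rpow_mul,
          ← ENNReal.rpow_mul, mul_div_cancel₀ _ hq.ne', one_div_mul_eq_div]
        ring

theorem tsum_rpow_mul_setLIntegral_Ioc_le (hq : 0 < q) (hu : Measurable u) {s : ℕ → ℝ}
    (hs : Monotone s) (hs₀ : 0 ≤ s 0) :
    ∑' k, (∫⁻ x in Ioc (s k) (s (k + 1)), g x) ^ q * ∫⁻ t in Ioc (s (k + 1)) (s (k + 2)), u t ^ q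
      ≤ ∫⁻ t in Ioi (0:ℝ), (∫⁻ x in Ioo (0:ℝ) t, g x) ^ q * u t ^ q := by
  calc _ ≤ ∑' k, ∫⁻ t in Ioc (s (k + 1)) (s (k + 2)), (∫⁻ x in Ioo (0:ℝ) t, g x) ^ q * u t ^ q := by
        refine ENNReal.tsum_le_tsum fun k => ?_
        rw [← lintegral_const_mul _ (hu.pow_const q)]
        refine setLIntegral_mono' measurableSet_Ioc fun t ht => ?_
        gcongr
        exact fun x hx => ⟨hs₀.trans_lt ((hs (Nat.zero_le k)).trans_lt hx.1),
          hx.2.trans_lt ht.1⟩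
    _ = ∫⁻ t in ⋃ k, Ioc (s (k + 1)) (s (k + 2)), (∫⁻ x in Ioo (0:ℝ) t, g x) ^ q * u t ^ q :=
        (lintegral_iUnion (fun _ => measurableSet_Ioc)
          (hs.comp (monotone_id.add_const 1)).pairwise_disjoint_on_Ioc_succ _).symm
    _ ≤ _ := lintegral_mono_set <| iUnion_subset fun k x hx =>
        hs₀.trans_lt ((hs (Nat.zero_le _)).trans_lt hx.1)

theorem tsum_rpow_mul_le_four_mul (hq : 0 < q) (hu : Measurable u) {s : ℕ → ℝ} (hs : Monotone s)
    (hs₀ : 0 ≤ s 0) {c : ℝ≥0∞} (hc : c ≠ ∞)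
    (hU : ∀ k, ∫⁻ x in Ioi (s k), u x ^ q = c * 2⁻¹ ^ k) :
    ∑' k, (∫⁻ x in Ioc (s k) (s (k + 1)), g x) ^ q * (c * 2⁻¹ ^ k) ≤
      4 * ∫⁻ t in Ioi (0:ℝ), (∫⁻ x in Ioo (0:ℝ) t, g x) ^ q * u t ^ q := by
  have hmass (k : ℕ) : ∫⁻ t in Ioc (s (k + 1)) (s (k + 2)), u t ^ q = c * 2⁻¹ ^ (k + 2) := by
    have hsplit := lintegral_union (μ := volume) (f := fun x => u x ^ q) measurableSet_Ioi
      (Ioc_disjoint_Ioi_same (a := s (k + 1)) (b := s (k + 2)))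
    rw [Ioc_union_Ioi_eq_Ioi (hs (Nat.le_succ _)), hU, hU, pow_succ _ (k + 1), ← mul_assoc,
      ← div_eq_mul_inv] at hsplit
    have hfin : c * 2⁻¹ ^ (k + 1) ≠ ∞ := ENNReal.mul_ne_top hc (by simp)
    rw [ENNReal.eq_sub_of_add_eq (ENNReal.div_ne_top hfin two_ne_zero) hsplit.symm,
      ENNReal.sub_half hfin,
      div_eq_mul_inv, mul_assoc, ← pow_succ]
  have h4 : (4 : ℝ≥0∞) * 2⁻¹ ^ 2 = 1 := by
    rw [← ENNReal.inv_pow]; norm_num; exact ENNReal.mul_inv_cancel (by norm_num) (by norm_num)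
  have hterm (x : ℝ≥0∞) (k : ℕ) : x * (c * 2⁻¹ ^ k) = 4 * (x * (c * 2⁻¹ ^ (k + 2))) :=
    calc x * (c * 2⁻¹ ^ k) = x * (c * 2⁻¹ ^ k) * (4 * 2⁻¹ ^ 2) := by rw [h4, mul_one]
      _ = _ := by ring
  rw [tsum_congr fun k => hterm _ k, ENNReal.tsum_mul_left]
  simp_rw [← hmass]
  gcongr
  exact tsum_rpow_mul_setLIntegral_Ioc_le hq hu hs hs₀

theorem setLIntegral_Ioi_rpow_mul_rpow_eq_zero (hq : 0 < q) (hqp : q ≤ p) (hp1 : p ≤ 1)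
    (hg : Measurable g) (hw : Measurable w) (hC : hardyConstant p q u w ≠ ∞) {t : ℝ} (ht : 0 < t)
    (hU : ∫⁻ x in Ioi t, u x ^ q = 0) : ∫⁻ x in Ioi t, g x ^ p * w x ^ p = 0 := by
  simpa [hU, ENNReal.zero_rpow_of_pos (div_pos (hq.trans_le hqp) hq)] using
    setLIntegral_rpow_mul_rpow_le_hardyConstant hq hqp hp1 hg hw hC ht (by simp [hU]) subset_rfl

theorem setLIntegral_Ioi_rpow_mul_rpow_le (hq : 0 < q) (hqp : q ≤ p) (hp1 : p ≤ 1)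
    (hu : Measurable u) (hw : Measurable w) (hg : Measurable g)
    (hufin : ∀ t ∈ Ioi (0:ℝ), (∫⁻ x in Ioi t, u x ^ q) < ∞) (hC : hardyConstant p q u w ≠ ∞)
    {a : ℝ} (ha : 0 < a) :
    ∫⁻ x in Ioi a, g x ^ p * w x ^ p ≤ hardyConstant p q u w ^ p *
      (4 * ∫⁻ t in Ioi (0:ℝ), (∫⁻ x in Ioo (0:ℝ) t, g x) ^ q * u t ^ q) ^ (p / q) := by
  set C := hardyConstant p q u w
  set ν := volume.withDensity fun x => u x ^ q
  have hν (t : ℝ) : ν (Ioi t) = ∫⁻ x in Ioi t, u x ^ q := withDensity_apply _ measurableSet_Ioi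
  rcases eq_or_ne (ν (Ioi a)) 0 with hνa₀ | hνa₀
  · rw [setLIntegral_Ioi_rpow_mul_rpow_eq_zero hq hqp hp1 hg hw hC ha (hν a ▸ hνa₀)]
    exact zero_le
  obtain ⟨s, rfl, hs_mono, hs⟩ :=
    exists_seq_measure_Ioi_eq_mul_inv_two_pow (hν a ▸ (hufin a ha).ne) hνa₀
  simp only [hν] at hs
  set c := ∫⁻ x in Ioi (s 0), u x ^ q
  have hs_pos (k : ℕ) : 0 < s k := ha.trans_le (hs_mono.monotone (Nat.zero_le k))
  have hrem : ∫⁻ x in ⋂ k, Ioi (s k), g x ^ p * w x ^ p = 0 := by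
    refine setLIntegral_iInter_Ioi_eq_zero s fun x hx => setLIntegral_Ioi_rpow_mul_rpow_eq_zero
      hq hqp hp1 hg hw hC ((hs_pos 0).trans_le (hx 0)) ?_
    have hlim : Tendsto (fun k : ℕ => c * 2⁻¹ ^ k) atTop (𝓝 0) := by
      simpa using ENNReal.Tendsto.const_mul
        (ENNReal.tendsto_pow_atTop_nhds_zero_of_lt_one (r := 2⁻¹) (by norm_num))
        (.inr (hufin _ ha).ne)
    exact nonpos_iff_eq_zero.mp <| ge_of_tendsto' hlim fun k =>
      hs k ▸ lintegral_mono_set (Ioi_subset_Ioi (hx k))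
  calc ∫⁻ x in Ioi (s 0), g x ^ p * w x ^ p
      ≤ (∫⁻ x in ⋃ k, Ioc (s k) (s (k + 1)), g x ^ p * w x ^ p) +
          ∫⁻ x in ⋂ k, Ioi (s k), g x ^ p * w x ^ p :=
        (lintegral_mono_set (Ioi_subset_iUnion_Ioc_union_iInter_Ioi s)).trans
          (lintegral_union_le _ _ _)
    _ ≤ ∑' k, ∫⁻ x in Ioc (s k) (s (k + 1)), g x ^ p * w x ^ p := by
        simpa only [hrem, add_zero] using lintegral_iUnion_le _ _
    _ ≤ ∑' k, C ^ p * ((∫⁻ x in Ioc (s k) (s (k + 1)), g x) ^ q * (c * 2⁻¹ ^ k)) ^ (p / q) :=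
        ENNReal.tsum_le_tsum fun k => hs k ▸ setLIntegral_rpow_mul_rpow_le_hardyConstant hq hqp
          hp1 hg hw hC (hs_pos k) (hufin _ (hs_pos k)).ne Ioc_subset_Ioi_self
    _ ≤ C ^ p * (∑' k, (∫⁻ x in Ioc (s k) (s (k + 1)), g x) ^ q * (c * 2⁻¹ ^ k)) ^ (p / q) := by
        rw [ENNReal.tsum_mul_left]
        gcongr
        exact tsum_rpow_le_rpow_tsum _ ((one_le_div hq).mpr hqp)
    _ ≤ _ := by
        have hp : 0 < p := hq.trans_le hqp
        gcongr
        exact tsum_rpow_mul_le_four_mul hq hu hs_mono.monotone (hs_pos 0).le (hufin _ ha).ne hs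

theorem rpow_setLIntegral_rpow_mul_rpow_le (hq : 0 < q) (hqp : q ≤ p) (hp1 : p ≤ 1)
    (hu : Measurable u) (hw : Measurable w) (hg : Measurable g)
    (hufin : ∀ t ∈ Ioi (0:ℝ), (∫⁻ x in Ioi t, u x ^ q) < ∞) (hC : hardyConstant p q u w ≠ ∞) :
    (∫⁻ x in Ioi (0:ℝ), g x ^ p * w x ^ p) ^ (1 / p) ≤ 4 ^ (1 / q) * hardyConstant p q u w *
      (∫⁻ t in Ioi (0:ℝ), (∫⁻ x in Ioo (0:ℝ) t, g x) ^ q * u t ^ q) ^ (1 / q) := by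
  have hp : 0 < p := hq.trans_le hqp
  calc _ ≤ (hardyConstant p q u w ^ p *
        (4 * ∫⁻ t in Ioi (0:ℝ), (∫⁻ x in Ioo (0:ℝ) t, g x) ^ q * u t ^ q) ^ (p / q)) ^ (1 / p) := by
        gcongr
        exact setLIntegral_Ioi_le_of_forall_lt fun a ha =>
          setLIntegral_Ioi_rpow_mul_rpow_le hq hqp hp1 hu hw hg hufin hC ha
    _ = _ := by
        rw [ENNReal.mul_rpow_of_nonneg _ _ (by positivity), ← ENNReal.rpow_mul, ← ENNReal.rpow_mul,
          mul_one_div_cancel hp.ne', ENNReal.rpow_one, show p / q * (1 / p) = 1 / q by field_simp,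
          ENNReal.mul_rpow_of_nonneg _ _ (by positivity)]
        ring

theorem setLIntegral_Ioi_zero_rpow_indicator_mul (hp : 0 < p) {S : Set ℝ} (hS : MeasurableSet S)
    (hS₀ : S ⊆ Ioi 0) (f : ℝ → ℝ≥0∞) :
    ∫⁻ x in Ioi (0:ℝ), S.indicator f x ^ p * w x ^ p = ∫⁻ x in S, f x ^ p * w x ^ p := by
  have hpt (x : ℝ) : S.indicator f x ^ p * w x ^ p = S.indicator (fun y => f y ^ p * w y ^ p) x := by
    by_cases hx : x ∈ S
    · simp only [indicator_of_mem hx]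
    · simp only [indicator_of_notMem hx, ENNReal.zero_rpow_of_pos hp, zero_mul]
  simp_rw [hpt, setLIntegral_indicator hS, inter_eq_left.mpr hS₀]

theorem rpow_setLIntegral_primitive_indicator_le (hq : 0 < q) (hu : Measurable u) {S : Set ℝ}
    (hS : MeasurableSet S) {t : ℝ} (ht : 0 < t) (hSt : S ⊆ Ioi t) (f : ℝ → ℝ≥0∞) :
    (∫⁻ s in Ioi (0:ℝ), (∫⁻ x in Ioo (0:ℝ) s, S.indicator f x) ^ q * u s ^ q) ^ (1 / q) ≤
      (∫⁻ x in S, f x) * (∫⁻ x in Ioi t, u x ^ q) ^ (1 / q) := by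
  have hprim (s : ℝ) : ∫⁻ x in Ioo (0:ℝ) s, S.indicator f x = ∫⁻ x in S ∩ Ioo 0 s, f x :=
    setLIntegral_indicator hS f
  have hpt (s : ℝ) : (∫⁻ x in Ioo (0:ℝ) s, S.indicator f x) ^ q * u s ^ q ≤
      (Ioi t).indicator (fun s => (∫⁻ x in S, f x) ^ q * u s ^ q) s := by
    rw [hprim]
    by_cases hs : s ∈ Ioi t
    · rw [indicator_of_mem hs]
      gcongr
      exact inter_subset_left
    · have hempty : S ∩ Ioo 0 s = ∅ := eq_empty_of_forall_notMem fun x hx =>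
        hs (lt_trans (hSt hx.1) hx.2.2)
      simp [hempty, ENNReal.zero_rpow_of_pos hq]
  calc _ ≤ (∫⁻ s in Ioi (0:ℝ), (Ioi t).indicator (fun s => (∫⁻ x in S, f x) ^ q * u s ^ q) s)
        ^ (1 / q) := by
        gcongr with s
        exact hpt s
    _ = _ := by
        rw [setLIntegral_indicator measurableSet_Ioi, inter_eq_left.mpr (Ioi_subset_Ioi ht.le),
          lintegral_const_mul _ (hu.pow_const q), ENNReal.mul_rpow_of_nonneg _ _ (by positivity),
          ← ENNReal.rpow_mul, mul_one_div_cancel hq.ne', ENNReal.rpow_one]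

theorem div_le_bestHardyConstant (hp : 0 < p) (hq : 0 < q) (hu : Measurable u) {f : ℝ → ℝ≥0∞}
    (hf : Measurable f) {S : Set ℝ} (hS : MeasurableSet S) {t : ℝ} (ht : 0 < t)
    (hSt : S ⊆ Ioi t) :
    (∫⁻ x in S, f x ^ p * w x ^ p) ^ (1 / p) /
      ((∫⁻ x in S, f x) * (∫⁻ x in Ioi t, u x ^ q) ^ (1 / q)) ≤ bestHardyConstant p q u w := by
  refine le_iSup_of_le (⟨S.indicator f, hf.indicator hS⟩ : {g : ℝ → ℝ≥0∞ // Measurable g}) ?_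
  refine ENNReal.div_le_div (le_of_eq ?_) (rpow_setLIntegral_primitive_indicator_le hq hu hS ht hSt f)
  rw [setLIntegral_Ioi_zero_rpow_indicator_mul hp hS (hSt.trans (Ioi_subset_Ioi ht.le))]

theorem essSup_mul_le_bestHardyConstant (hq : 0 < q) (hu : Measurable u) (hw : Measurable w)
    {t : ℝ} (ht : 0 < t) :
    essSup w (volume.restrict (Ioi t)) * ((∫⁻ x in Ioi t, u x ^ q) ^ (1 / q))⁻¹ ≤
      bestHardyConstant 1 q u w := by
  set Y := (∫⁻ x in Ioi t, u x ^ q) ^ (1 / q)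
  refine ENNReal.mul_le_of_forall_lt fun l hl y hy => le_trans (by gcongr) (?_ : l * Y⁻¹ ≤ _)
  have hpos : volume ({x | l < w x} ∩ Ioi t) ≠ 0 := by
    rw [← Measure.restrict_apply' measurableSet_Ioi]
    exact frequently_ae_iff.mp (frequently_lt_of_lt_limsup (by isBoundedDefault) hl)
  obtain ⟨n, hn⟩ : ∃ n : ℕ, volume ({x | l < w x} ∩ Ioc t (t + n)) ≠ 0 := by
    by_contra! h
    refine hpos (measure_mono_null (fun x ⟨hlx, hx⟩ => ?_) (measure_iUnion_null h))
    obtain ⟨n, hn⟩ := exists_nat_ge (x - t)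
    exact mem_iUnion.mpr ⟨n, hlx, hx, by linarith⟩
  set S := {x | l < w x} ∩ Ioc t (t + n)
  have hS : MeasurableSet S := (measurableSet_lt measurable_const hw).inter measurableSet_Ioc
  have hS_fin : volume S ≠ ∞ :=
    ne_top_of_le_ne_top (by simp [Real.volume_Ioc]) (measure_mono inter_subset_right)
  calc l * Y⁻¹ = volume S * l / (volume S * Y) := by
        rw [ENNReal.mul_div_mul_left _ _ hn hS_fin, div_eq_mul_inv]
    _ ≤ (∫⁻ x in S, 1 ^ (1:ℝ) * w x ^ (1:ℝ)) ^ (1 / (1:ℝ)) / ((∫⁻ x in S, 1) * Y) := by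
        rw [setLIntegral_one]
        gcongr ?_ / _
        simp only [one_mul, ENNReal.rpow_one, div_one]
        rw [mul_comm, ← setLIntegral_const]
        exact setLIntegral_mono' hS fun x hx => hx.1.le
    _ ≤ _ := div_le_bestHardyConstant one_pos hq hu measurable_const hS ht
        (inter_subset_right.trans Ioc_subset_Ioi_self)

theorem rpow_mul_le_bestHardyConstant_of_le_rpow (hp : 0 < p) (hp1 : p < 1) (hq : 0 < q)
    (hu : Measurable u) {f : ℝ → ℝ≥0∞} (hf : Measurable f) (hfw : ∀ x, f x ≤ w x ^ (p / (1 - p)))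
    {S : Set ℝ} (hS : MeasurableSet S) {t : ℝ} (ht : 0 < t) (hSt : S ⊆ Ioi t)
    (hfin : ∫⁻ x in S, f x ≠ ∞) :
    (∫⁻ x in S, f x) ^ ((1 - p) / p) * ((∫⁻ x in Ioi t, u x ^ q) ^ (1 / q))⁻¹ ≤
      bestHardyConstant p q u w := by
  set Φ := ∫⁻ x in S, f x
  set Y := (∫⁻ x in Ioi t, u x ^ q) ^ (1 / q)
  have he : 0 < (1 - p) / p := div_pos (by linarith) hp
  rcases eq_or_ne Φ 0 with hΦ₀ | hΦ₀
  · rw [hΦ₀, ENNReal.zero_rpow_of_pos he, zero_mul]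
    exact zero_le
  calc Φ ^ ((1 - p) / p) * Y⁻¹ = Φ ^ (1 / p) / (Φ * Y) := by
        rw [show 1 / p = 1 + (1 - p) / p by field_simp; ring,
          ENNReal.rpow_add_of_nonneg _ _ zero_le_one he.le, ENNReal.rpow_one,
          ENNReal.mul_div_mul_left _ _ hΦ₀ hfin, ← div_eq_mul_inv]
    _ ≤ (∫⁻ x in S, f x ^ p * w x ^ p) ^ (1 / p) / (Φ * Y) := by
        gcongr ?_ ^ _ / _
        exact lintegral_mono fun x => le_rpow_mul_rpow_of_le_rpow hp hp1 (hfw x)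
    _ ≤ _ := div_le_bestHardyConstant hp hq hu hf hS ht hSt

theorem lintegral_rpow_mul_le_bestHardyConstant (hp : 0 < p) (hp1 : p < 1) (hq : 0 < q)
    (hu : Measurable u) (hw : Measurable w) {t : ℝ} (ht : 0 < t) :
    (∫⁻ x in Ioi t, w x ^ (p / (1 - p))) ^ ((1 - p) / p) *
      ((∫⁻ x in Ioi t, u x ^ q) ^ (1 / q))⁻¹ ≤ bestHardyConstant p q u w := by
  set F : ℕ → ℝ → ℝ≥0∞ := fun n => (Iic (t + n)).indicator fun x => min (w x ^ (p / (1 - p))) n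
  have hF_meas (n : ℕ) : Measurable (F n) :=
    ((hw.pow_const _).min measurable_const).indicator measurableSet_Iic
  have hF_mono : Monotone F := fun m n hmn x =>
    (indicator_le_indicator_of_subset (Iic_subset_Iic.mpr (by gcongr)) (fun _ => zero_le) x).trans
      (indicator_le_indicator (min_le_min_left _ (Nat.cast_le.mpr hmn)))
  have hF_le (n : ℕ) : (∫⁻ x in Ioi t, F n x) ^ ((1 - p) / p) *
      ((∫⁻ x in Ioi t, u x ^ q) ^ (1 / q))⁻¹ ≤ bestHardyConstant p q u w := by
    rw [setLIntegral_indicator measurableSet_Iic, inter_comm, Ioi_inter_Iic]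
    refine rpow_mul_le_bestHardyConstant_of_le_rpow hp hp1 hq hu
      ((hw.pow_const _).min measurable_const) (fun x => min_le_left _ _) measurableSet_Ioc ht
      Ioc_subset_Ioi_self (ne_top_of_le_ne_top ?_
        ((lintegral_mono fun x => min_le_right _ _).trans_eq (setLIntegral_const _ _)))
    exact ENNReal.mul_ne_top (natCast_ne_top n) (by simp [Real.volume_Ioc])
  calc _ = (⨆ n, ∫⁻ x in Ioi t, F n x) ^ ((1 - p) / p) * ((∫⁻ x in Ioi t, u x ^ q) ^ (1 / q))⁻¹ := by
        rw [← lintegral_iSup hF_meas hF_mono]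
        simp_rw [F, iSup_indicator_Iic_add_min_natCast]
    _ = ⨆ n, (∫⁻ x in Ioi t, F n x) ^ ((1 - p) / p) * ((∫⁻ x in Ioi t, u x ^ q) ^ (1 / q))⁻¹ := by
        rw [← ENNReal.iSup_mul, ← orderIsoRpow_apply _ (div_pos (by linarith) hp),
          OrderIso.map_iSup]
        simp only [orderIsoRpow_apply]
    _ ≤ _ := iSup_le hF_le

theorem hardyConstant_le_bestHardyConstant (hq : 0 < q) (hqp : q ≤ p) (hp1 : p ≤ 1)
    (hu : Measurable u) (hw : Measurable w) :
    hardyConstant p q u w ≤ bestHardyConstant p q u w := by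
  refine iSup₂_le fun t ht => ?_
  rcases hp1.eq_or_lt with rfl | hp1
  · simpa only [tailNorm, if_true] using essSup_mul_le_bestHardyConstant hq hu hw ht
  · simpa only [tailNorm, if_neg hp1.ne] using
      lintegral_rpow_mul_le_bestHardyConstant (hq.trans_le hqp) hp1 hq hu hw ht

theorem bestHardyConstant_le (hq : 0 < q) (hqp : q ≤ p) (hp1 : p ≤ 1) (hu : Measurable u)
    (hw : Measurable w) (hufin : ∀ t ∈ Ioi (0:ℝ), (∫⁻ x in Ioi t, u x ^ q) < ∞) :
    bestHardyConstant p q u w ≤ 4 ^ (1 / q) * hardyConstant p q u w := by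
  rcases eq_or_ne (hardyConstant p q u w) ∞ with hC | hC
  · rw [hC, ENNReal.mul_top (by simp)]
    exact le_top
  · exact iSup_le fun g => ENNReal.div_le_of_le_mul
      (rpow_setLIntegral_rpow_mul_rpow_le hq hqp hp1 hu hw g.2 hufin hC)

end

end ReverseHardy

/-- reverse Hardy inequality, `0 < q ≤ p ≤ 1`. -/
theorem reverse_hardy_inequality (p q : ℝ) (hq : 0 < q) (hqp : q ≤ p) (hp1 : p ≤ 1) :
    ∃ c₁ c₂ : ℝ≥0∞, 0 < c₁ ∧ c₂ < ∞ ∧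
      ∀ u w : ℝ → ℝ≥0∞, Measurable u → Measurable w →
        (∀ t ∈ Ioi (0:ℝ), (∫⁻ x in Ioi t, u x ^ q) < ∞) →
        (let LHS : (ℝ → ℝ≥0∞) → ℝ≥0∞ := fun g => (∫⁻ x in Ioi (0:ℝ), g x ^ p * w x ^ p) ^ (1 / p)
         let RHS : (ℝ → ℝ≥0∞) → ℝ≥0∞ := fun g =>
            (∫⁻ t in Ioi (0:ℝ), (∫⁻ x in Ioo (0:ℝ) t, g x) ^ q * u t ^ q) ^ (1 / q)
         let C : ℝ≥0∞ := ⨆ t ∈ Ioi (0:ℝ),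
            (if p = 1 then essSup w (volume.restrict (Ioi t))
             else (∫⁻ x in Ioi t, w x ^ (p / (1 - p))) ^ ((1 - p) / p))
              * ((∫⁻ x in Ioi t, u x ^ q) ^ (1 / q))⁻¹
         let best : ℝ≥0∞ := ⨆ g : {g : ℝ → ℝ≥0∞ // Measurable g}, LHS g.1 / RHS g.1
         ((∃ c : ℝ≥0∞, c < ∞ ∧ ∀ g : ℝ → ℝ≥0∞, Measurable g → LHS g ≤ c * RHS g) ↔ C < ∞)
           ∧ c₁ * C ≤ best ∧ best ≤ c₂ * C) := by
  open ReverseHardy in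
  refine ⟨1, 4 ^ (1 / q), one_pos, ENNReal.rpow_lt_top_of_nonneg (by positivity) (by simp),
    fun u w hu hw hufin => ?_⟩
  have hlower := hardyConstant_le_bestHardyConstant hq hqp hp1 hu hw
  have hupper := bestHardyConstant_le hq hqp hp1 hu hw hufin
  refine ⟨⟨fun ⟨c, hc, hbound⟩ => ?_, fun hC => ?_⟩, (one_mul _).trans_le hlower, hupper⟩
  · exact (hlower.trans (iSup_le fun g => ENNReal.div_le_of_le_mul (hbound g.1 g.2))).trans_lt hc
  · exact ⟨_, ENNReal.mul_lt_top (ENNReal.rpow_lt_top_of_nonneg (by positivity) (by simp)) hC,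
      fun g hg => rpow_setLIntegral_rpow_mul_rpow_le hq hqp hp1 hu hw hg hufin hC.ne⟩
end

section
/- Let 0 < q ≤ p ≤ 1 and let u, w be nonnegative measurable functions on (0,∞) with ∫_0^t u^q < ∞ for all t > 0. Then (∫_0^∞ g^p w^p)^{1/p} ≤ c (∫_0^∞ (∫_t^∞ g)^q u(t)^q dt)^{1/q} holds for all nonnegative measurable g if and only if C* = sup_{t>0} (∫_0^t w^{p/(1−p)})^{(1−p)/p} (∫_0^t u^q)^{−1/q} < ∞ (first factor = ess sup_{(0,t)} w when p = 1), and the best constant satisfies c ≈ C*. -/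
open MeasureTheory ENNReal Set Filter Topology

noncomputable section

/-!
Let `μ = u^q dt` on `(0, ∞)` and `U t = μ (0, t)`, a continuous nondecreasing function, and let
`W t` be the `L^{p'}` norm of `w` on `(0, t)`, so that `C* = sup_t W t / U t ^ (1/q)`.

Lower bound: testing the inequality against `g = h 1_(0,t)` gives
`‖h w‖_p ≤ c U(t)^{1/q} ‖h‖_1`, and `sup_h ‖h w‖_p / ‖h‖_1 = W t` by the reverse Hölder duality
(approached by `h = min(w, n)^{p'}`, or by `h = 1_{w > l}` when `p = 1`).

Upper bound: cut `(0, ∞)` into the dyadic layers `{2^k ≤ U < 2^(k+1)}`. On a layer, Hölder's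
inequality with exponents `1` and `p'` bounds `∫ g^p w^p` by `(C* 2^((k+1)/q))^p γ_k^p` with
`γ_k = ∫_{U ≥ 2^k} g`, while the layer below has `μ`-measure `2^(k-1)` and on it
`∫_t^∞ g ≥ γ_k`. As `p/q ≥ 1`, `∑ a_k^(p/q) ≤ (∑ a_k)^(p/q)`, so the layers add up to
`4^(p/q) C*^p (∫ (∫_t^∞ g)^q u^q)^(p/q)`.
-/

/-- `‖w‖` in `L^{p'}(ν)` for `p' = p / (1 - p)`; for `p = 1` (`p' = ∞`) the essential supremum. -/
def weightNorm {α : Type*} [MeasurableSpace α] (p : ℝ) (w : α → ℝ≥0∞) (ν : Measure α) : ℝ≥0∞ :=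
  if p = 1 then essSup w ν else (∫⁻ x, w x ^ (p / (1 - p)) ∂ν) ^ ((1 - p) / p)

theorem ENNReal.div_mul_inv_le_div_mul (a b c : ℝ≥0∞) : a / b * c⁻¹ ≤ a / (b * c) := by
  rw [div_eq_mul_inv, div_eq_mul_inv, mul_assoc]
  gcongr
  rcases eq_or_ne b 0 with rfl | hb
  · simp
  rcases eq_or_ne c 0 with rfl | hc
  · simp
  rw [ENNReal.mul_inv (Or.inl hb) (Or.inr hc)]

theorem ENNReal.iSup_rpow {ι : Sort*} (f : ι → ℝ≥0∞) {r : ℝ} (hr : 0 < r) :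
    (⨆ i, f i) ^ r = ⨆ i, f i ^ r :=
  (orderIsoRpow r hr).map_iSup f

theorem ENNReal.tsum_rpow_le_rpow_tsum {ι : Type*} (a : ι → ℝ≥0∞) {r : ℝ} (hr : 1 ≤ r) :
    ∑' i, a i ^ r ≤ (∑' i, a i) ^ r := by
  set S := ∑' i, a i
  have hsplit : ∀ x : ℝ≥0∞, x ^ r = x ^ (r - 1) * x := fun x => by
    conv_lhs => rw [← sub_add_cancel r 1]
    rw [ENNReal.rpow_add_of_nonneg (r - 1) 1 (by linarith) zero_le_one, ENNReal.rpow_one]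
  calc ∑' i, a i ^ r ≤ ∑' i, S ^ (r - 1) * a i := by
        gcongr with i
        rw [hsplit]
        exact mul_le_mul_left (ENNReal.rpow_le_rpow (ENNReal.le_tsum i) (by linarith)) _
    _ = S ^ r := by rw [ENNReal.tsum_mul_left, ← hsplit]

theorem ENNReal.two_mul_two_zpow (k : ℤ) : (2 : ℝ≥0∞) * 2 ^ k = 2 ^ (k + 1) := by
  rw [ENNReal.zpow_add two_ne_zero ofNat_ne_top, zpow_one, mul_comm]

section WeightNorm

variable {α : Type*} [MeasurableSpace α] {ν ν' : Measure α} {p : ℝ} {w : α → ℝ≥0∞}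

theorem weightNorm_mono_measure (hp : 0 < p) (hp1 : p ≤ 1) (h : ν ≤ ν') :
    weightNorm p w ν ≤ weightNorm p w ν' := by
  unfold weightNorm
  split_ifs with hp1'
  · exact essSup_mono_measure' h
  · gcongr

/-- Hölder's inequality with exponents `1` and `p'`, `1/p = 1 + 1/p'`. -/
theorem lintegral_rpow_mul_rpow_le_weightNorm (hp : 0 < p) (hp1 : p ≤ 1) {g : α → ℝ≥0∞}
    (hg : AEMeasurable g ν) (hw : AEMeasurable w ν) :
    ∫⁻ x, g x ^ p * w x ^ p ∂ν ≤ weightNorm p w ν ^ p * (∫⁻ x, g x ∂ν) ^ p := by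
  unfold weightNorm
  split_ifs with hp1'
  · subst hp1'
    simp only [ENNReal.rpow_one]
    calc ∫⁻ x, g x * w x ∂ν ≤ ∫⁻ x, g x * essSup w ν ∂ν :=
          lintegral_mono_ae ((ENNReal.ae_le_essSup w).mono fun x hx => mul_le_mul_right hx _)
      _ = essSup w ν * ∫⁻ x, g x ∂ν := by rw [lintegral_mul_const'' _ hg, mul_comm]
  · have hp1 : p < 1 := lt_of_le_of_ne hp1 hp1'
    have hconj : (1 / p).HolderConjugate (1 / (1 - p)) := by
      rw [Real.holderConjugate_iff]
      refine ⟨by rw [lt_div_iff₀ hp]; linarith, by field_simp; ring⟩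
    have holder := ENNReal.lintegral_mul_le_Lp_mul_Lq ν hconj (hg.pow_const p) (hw.pow_const p)
    have e1 : p * (1 / p) = 1 := by field_simp
    have e2 : p * (1 / (1 - p)) = p / (1 - p) := by ring
    have e3 : (1 - p) / p * p = 1 - p := by field_simp
    simp only [Pi.mul_apply, ← ENNReal.rpow_mul, one_div_one_div, e1, e2,
      ENNReal.rpow_one] at holder
    rwa [← ENNReal.rpow_mul, e3, mul_comm]

theorem essSup_le_iSup_lintegral_mul_div [IsFiniteMeasure ν] (hw : Measurable w) :
    essSup w ν ≤ ⨆ h : {h : α → ℝ≥0∞ // Measurable h}, (∫⁻ x, h.1 x * w x ∂ν) / ∫⁻ x, h.1 x ∂ν := by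
  refine le_of_forall_lt_imp_le_of_dense fun l hl => ?_
  set S := {x | l < w x}
  have hS : MeasurableSet S := hw measurableSet_Ioi
  have hνS : ν S ≠ 0 := fun h0 =>
    hl.not_ge <| essSup_le_of_ae_le l <|
      (measure_eq_zero_iff_ae_notMem.mp h0).mono fun _ hx => not_lt.mp hx
  refine le_iSup_of_le ⟨S.indicator 1, measurable_one.indicator hS⟩ ?_
  calc l = l * ν S / ν S := (ENNReal.mul_div_cancel_right hνS (measure_ne_top ν S)).symm
    _ ≤ (∫⁻ x, S.indicator 1 x * w x ∂ν) / ∫⁻ x, S.indicator 1 x ∂ν := by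
      rw [lintegral_indicator_one hS, ← lintegral_indicator_const hS]
      gcongr with x
      rcases lt_or_ge l (w x) with hx | hx
      · simp [S, hx, hx.le]
      · simp [S, hx.not_gt]

theorem lintegral_rpow_le_iSup_rpow_mul_div [IsFiniteMeasure ν] (hp : 0 < p) (hp1 : p < 1)
    (hw : Measurable w) :
    (∫⁻ x, w x ^ (p / (1 - p)) ∂ν) ^ ((1 - p) / p) ≤
      ⨆ h : {h : α → ℝ≥0∞ // Measurable h},
        (∫⁻ x, h.1 x ^ p * w x ^ p ∂ν) ^ (1 / p) / ∫⁻ x, h.1 x ∂ν := by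
  set r := p / (1 - p)
  have hr : 0 < r := div_pos hp (by linarith)
  have he : 0 < (1 - p) / p := div_pos (by linarith) hp
  -- truncations `min w n` make the extremal test function `w ^ r` integrable
  set h : ℕ → α → ℝ≥0∞ := fun n x => min (w x) n ^ r
  have hh : ∀ n, Measurable (h n) := fun n => (hw.min measurable_const).pow_const r
  have hsup : ∫⁻ x, w x ^ r ∂ν = ⨆ n, ∫⁻ x, h n x ∂ν := by
    rw [← lintegral_iSup hh fun m n hmn x =>
      ENNReal.rpow_le_rpow (min_le_min_left _ (Nat.cast_le.mpr hmn)) hr.le]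
    congr 1 with x
    rw [← ENNReal.iSup_rpow _ hr, ← inf_iSup_eq, ENNReal.iSup_natCast, inf_top_eq]
  rw [hsup, ENNReal.iSup_rpow _ he]
  refine iSup_le fun n => le_iSup_of_le ⟨h n, hh n⟩ ?_
  set W := ∫⁻ x, h n x ∂ν
  rcases eq_or_ne W 0 with hW0 | hW0
  · simp [hW0, he]
  have hWtop : W ≠ ∞ := by
    refine ne_top_of_le_ne_top
      (ENNReal.mul_ne_top (a := (n : ℝ≥0∞) ^ r) ?_ (measure_ne_top ν univ)) ?_
    · exact ENNReal.rpow_ne_top_of_nonneg hr.le (ENNReal.natCast_ne_top n)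
    · rw [← lintegral_const]
      exact lintegral_mono fun x => ENNReal.rpow_le_rpow (min_le_right _ _) hr.le
  have hnum : W ≤ ∫⁻ x, h n x ^ p * w x ^ p ∂ν := by
    refine lintegral_mono fun x => ?_
    have hexp : r * p + p = r := by
      have : 1 - p ≠ 0 := by linarith
      simp only [r]; field_simp; ring
    calc h n x = h n x ^ p * min (w x) n ^ p := by
          simp only [h, ← ENNReal.rpow_mul, ← ENNReal.rpow_add_of_nonneg _ _
            (mul_nonneg hr.le hp.le) hp.le, hexp]
      _ ≤ h n x ^ p * w x ^ p := by gcongr; exact min_le_left _ _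
  have hsplit : W ^ (1 / p) = W ^ ((1 - p) / p) * W := by
    rw [show 1 / p = (1 - p) / p + 1 by field_simp; ring, ENNReal.rpow_add _ _ hW0 hWtop,
      ENNReal.rpow_one]
  calc W ^ ((1 - p) / p) = W ^ (1 / p) / W := by
        rw [hsplit, ENNReal.mul_div_cancel_right hW0 hWtop]
    _ ≤ (∫⁻ x, h n x ^ p * w x ^ p ∂ν) ^ (1 / p) / W := by gcongr

theorem weightNorm_le_iSup [IsFiniteMeasure ν] (hp : 0 < p) (hp1 : p ≤ 1) (hw : Measurable w) :
    weightNorm p w ν ≤ ⨆ h : {h : α → ℝ≥0∞ // Measurable h},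
      (∫⁻ x, h.1 x ^ p * w x ^ p ∂ν) ^ (1 / p) / ∫⁻ x, h.1 x ∂ν := by
  unfold weightNorm
  split_ifs with hp1'
  · subst hp1'
    simpa only [ENNReal.rpow_one, div_one] using essSup_le_iSup_lintegral_mul_div hw
  · exact lintegral_rpow_le_iSup_rpow_mul_div hp (lt_of_le_of_ne hp1 hp1') hw

end WeightNorm

def layer (μ : Measure ℝ) (c : ℝ≥0∞) : Set ℝ := {x | 0 < x ∧ μ (Ioo 0 x) ∈ Ico c (2 * c)}

theorem disjoint_layer (μ : Measure ℝ) {c d : ℝ≥0∞} (h : 2 * c ≤ d) :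
    Disjoint (layer μ c) (layer μ d) :=
  disjoint_left.2 fun _ hc hd => (hc.2.2.trans_le h).not_ge hd.2.1

theorem pairwise_disjoint_layer_two_zpow (μ : Measure ℝ) :
    Pairwise (Function.onFun Disjoint fun k : ℤ => layer μ (2 ^ k)) :=
  (pairwise_disjoint_on _).2 fun k _ hkj => disjoint_layer μ <|
    ENNReal.two_mul_two_zpow k ▸ ENNReal.zpow_le_of_le one_le_two hkj

section DistributionFunction

variable (μ : Measure ℝ) [IsFiniteMeasureOnCompacts μ] [NullSingletonClass μ]

theorem continuous_measure_Ioo (a : ℝ) : Continuous fun x => μ (Ioo a x) := by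
  refine continuous_iff_continuousAt.2 fun b => ?_
  refine (ENNReal.tendsto_nhds measure_Ioo_lt_top.ne).2 fun ε hε => ?_
  have hδ : ∀ᶠ x in 𝓝 b, μ (Icc (b - |x - b|) (b + |x - b|)) < ε := by
    have hdist : Tendsto (fun x => |x - b|) (𝓝 b) (𝓝 0) := by
      simpa using (continuous_sub_right b).abs.tendsto b
    exact ((tendsto_measure_Icc μ b).comp hdist).eventually (gt_mem_nhds hε)
  filter_upwards [hδ] with x hx
  set δ := |x - b|
  have hsub : ∀ y z, b - δ ≤ z → y ≤ b + δ → Ioo a y ⊆ Ioo a z ∪ Icc (b - δ) (b + δ) := by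
    intro y z hz hy v ⟨hav, hvy⟩
    by_cases hvz : v < z
    · exact Or.inl ⟨hav, hvz⟩
    · exact Or.inr ⟨by linarith, by linarith⟩
  have hxδ : -δ ≤ x - b ∧ x - b ≤ δ := abs_le.mp le_rfl
  have hδ0 : 0 ≤ δ := abs_nonneg _
  constructor
  · rw [tsub_le_iff_right]
    calc μ (Ioo a b) ≤ μ (Ioo a x) + μ (Icc (b - δ) (b + δ)) :=
          (measure_mono (hsub b x (by linarith) (by linarith))).trans (measure_union_le _ _)
      _ ≤ μ (Ioo a x) + ε := by gcongr
  · calc μ (Ioo a x) ≤ μ (Ioo a b) + μ (Icc (b - δ) (b + δ)) :=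
          (measure_mono (hsub x b (by linarith) (by linarith))).trans (measure_union_le _ _)
      _ ≤ μ (Ioo a b) + ε := by gcongr

theorem exists_measure_Ioo_eq {c : ℝ≥0∞} {x₀ : ℝ} (hx₀ : 0 ≤ x₀) (hc : c ≤ μ (Ioo 0 x₀)) :
    ∃ b, μ (Ioo 0 b) = c := by
  obtain ⟨b, -, hb⟩ := intermediate_value_Icc hx₀ (continuous_measure_Ioo μ 0).continuousOn
    ⟨by simp, hc⟩
  exact ⟨b, hb⟩

theorem measure_setOf_measure_Ioo_lt {c : ℝ≥0∞} {x₀ : ℝ} (hx₀ : 0 ≤ x₀)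
    (hc : c ≤ μ (Ioo 0 x₀)) : μ {x | 0 < x ∧ μ (Ioo 0 x) < c} = c := by
  refine le_antisymm ?_ (le_of_forall_lt_imp_le_of_dense fun c' hc' => ?_)
  · obtain ⟨b, hb⟩ := exists_measure_Ioo_eq μ hx₀ hc
    calc μ {x | 0 < x ∧ μ (Ioo 0 x) < c} ≤ μ (Ioo 0 b) := measure_mono fun x ⟨hx, hxc⟩ =>
          ⟨hx, lt_of_not_ge fun hbx => hxc.not_ge (hb ▸ measure_mono (Ioo_subset_Ioo_right hbx))⟩
      _ = c := hb
  · obtain ⟨b, hb⟩ := exists_measure_Ioo_eq μ hx₀ (hc'.le.trans hc)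
    refine hb ▸ measure_mono fun x ⟨hx, hxb⟩ => ⟨hx, ?_⟩
    exact (measure_mono (Ioo_subset_Ioo_right hxb.le)).trans_lt (hb ▸ hc')

theorem exists_subset_Ioc_measure_Ioo_le (N : ℝ) (c : ℝ≥0∞) :
    ∃ m, {x ∈ Ioo 0 N | μ (Ioo 0 x) ≤ c} ⊆ Ioc 0 m ∧ μ (Ioo 0 m) ≤ c := by
  rcases le_or_gt N 0 with hN | hN
  · exact ⟨0, fun x hx => absurd (hx.1.1.trans hx.1.2) hN.not_gt, by simp⟩
  set S := {x ∈ Icc 0 N | μ (Ioo 0 x) ≤ c}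
  have hS : IsCompact S :=
    isCompact_Icc.inter_right (isClosed_le (continuous_measure_Ioo μ 0) continuous_const)
  have hmS : sSup S ∈ S := hS.sSup_mem ⟨0, ⟨le_rfl, hN.le⟩, by simp⟩
  exact ⟨sSup S, fun x hx => ⟨hx.1.1, le_csSup hS.bddAbove ⟨Ioo_subset_Icc_self hx.1, hx.2⟩⟩,
    hmS.2⟩

theorem measurableSet_layer (c : ℝ≥0∞) : MeasurableSet (layer μ c) :=
  measurableSet_Ioi.inter ((continuous_measure_Ioo μ 0).measurable measurableSet_Ico)

theorem measure_layer {c : ℝ≥0∞} (hc : c ≠ ∞) {x₀ : ℝ} (hx₀ : 0 ≤ x₀)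
    (h2c : 2 * c ≤ μ (Ioo 0 x₀)) : μ (layer μ c) = c := by
  have hT : MeasurableSet {x | 0 < x ∧ μ (Ioo 0 x) < c} :=
    measurableSet_Ioi.inter ((continuous_measure_Ioo μ 0).measurable measurableSet_Iio)
  have hlayer : layer μ c = {x | 0 < x ∧ μ (Ioo 0 x) < 2 * c} \ {x | 0 < x ∧ μ (Ioo 0 x) < c} := by
    ext x
    simp only [layer, mem_Ico, Set.mem_sdiff, mem_ofPred_eq, not_and, not_lt]
    tauto
  have hc2 : c ≤ 2 * c := by rw [two_mul]; exact le_self_add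
  have hcx₀ : c ≤ μ (Ioo 0 x₀) := hc2.trans h2c
  have hsub : {x | 0 < x ∧ μ (Ioo 0 x) < c} ⊆ {x | 0 < x ∧ μ (Ioo 0 x) < 2 * c} :=
    fun x hx => ⟨hx.1, hx.2.trans_le hc2⟩
  rw [hlayer, measure_sdiff hsub
    hT.nullMeasurableSet (by rwa [measure_setOf_measure_Ioo_lt μ hx₀ hcx₀]),
    measure_setOf_measure_Ioo_lt μ hx₀ h2c, measure_setOf_measure_Ioo_lt μ hx₀ hcx₀, two_mul,
    ENNReal.add_sub_cancel_right hc]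

end DistributionFunction

section UpperBound

variable {μ : Measure ℝ} [IsFiniteMeasureOnCompacts μ] [NullSingletonClass μ] {p q : ℝ}
  {w g : ℝ → ℝ≥0∞} {C : ℝ≥0∞}

theorem setLIntegral_le_of_subset_sublevel (hp : 0 < p) (hp1 : p ≤ 1) (hq : 0 < q)
    (hw : Measurable w) (hg : Measurable g)
    (hC : ∀ t > 0, weightNorm p w (volume.restrict (Ioo 0 t)) ≤ C * μ (Ioo 0 t) ^ (1 / q))
    {E : Set ℝ} {N : ℝ} {c : ℝ≥0∞} (hE : E ⊆ {x ∈ Ioo 0 N | μ (Ioo 0 x) ≤ c}) :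
    ∫⁻ x in E, g x ^ p * w x ^ p ≤ C ^ p * c ^ (p / q) * (∫⁻ x in E, g x) ^ p := by
  obtain ⟨m, hEm, hm⟩ := exists_subset_Ioc_measure_Ioo_le μ N c
  rcases E.eq_empty_or_nonempty with rfl | ⟨x, hx⟩
  · simp
  have hm0 : 0 < m := (hEm (hE hx)).1.trans_le (hEm (hE hx)).2
  have hrestrict : volume.restrict E ≤ volume.restrict (Ioo 0 m) := by
    rw [Measure.restrict_congr_set Ioo_ae_eq_Ioc]
    exact Measure.restrict_mono (hE.trans hEm) le_rfl
  calc ∫⁻ x in E, g x ^ p * w x ^ p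
      ≤ weightNorm p w (volume.restrict E) ^ p * (∫⁻ x in E, g x) ^ p :=
        lintegral_rpow_mul_rpow_le_weightNorm hp hp1 hg.aemeasurable hw.aemeasurable
    _ ≤ (C * c ^ (1 / q)) ^ p * (∫⁻ x in E, g x) ^ p := by
        gcongr
        calc weightNorm p w (volume.restrict E) ≤ weightNorm p w (volume.restrict (Ioo 0 m)) :=
              weightNorm_mono_measure hp hp1 hrestrict
          _ ≤ C * μ (Ioo 0 m) ^ (1 / q) := hC m hm0
          _ ≤ C * c ^ (1 / q) := by gcongr
    _ = C ^ p * c ^ (p / q) * (∫⁻ x in E, g x) ^ p := by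
        rw [ENNReal.mul_rpow_of_nonneg _ _ hp.le, ← ENNReal.rpow_mul, one_div_mul_eq_div]

theorem setLIntegral_inter_layer_le (hq : 0 < q) (hqp : q ≤ p) (hp1 : p ≤ 1)
    (hw : Measurable w) (hg : Measurable g)
    (hC : ∀ t > 0, weightNorm p w (volume.restrict (Ioo 0 t)) ≤ C * μ (Ioo 0 t) ^ (1 / q))
    (N : ℝ) {c : ℝ≥0∞} (hc : c ≠ ∞) :
    ∫⁻ x in Ioo 0 N ∩ layer μ (2 * c), g x ^ p * w x ^ p ≤
      4 ^ (p / q) * C ^ p * (∫⁻ x in layer μ c, (∫⁻ y in Ioi x, g y) ^ q ∂μ) ^ (p / q) := by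
  have hp : 0 < p := hq.trans_le hqp
  rcases (Ioo 0 N ∩ layer μ (2 * c)).eq_empty_or_nonempty with hempty | ⟨x₀, -, hx₀⟩
  · simp [hempty]
  set γ := ∫⁻ y in {y | 0 < y ∧ 2 * c ≤ μ (Ioo 0 y)}, g y
  have hupper := setLIntegral_le_of_subset_sublevel hp hp1 hq hw hg hC (c := 4 * c)
    (E := Ioo 0 N ∩ layer μ (2 * c)) fun x hx => ⟨hx.1, (hx.2.2.2.trans_eq (by ring)).le⟩
  have hγ : ∫⁻ x in Ioo 0 N ∩ layer μ (2 * c), g x ≤ γ :=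
    lintegral_mono_set fun x hx => ⟨hx.2.1, hx.2.2.1⟩
  -- every point of `layer μ c` lies to the left of the set defining `γ`
  have hlower : c * γ ^ q ≤ ∫⁻ x in layer μ c, (∫⁻ y in Ioi x, g y) ^ q ∂μ := by
    calc c * γ ^ q = ∫⁻ _ in layer μ c, γ ^ q ∂μ := by
          rw [setLIntegral_const, measure_layer μ hc hx₀.1.le hx₀.2.1, mul_comm]
      _ ≤ _ := setLIntegral_mono' (measurableSet_layer μ c) fun x hx => by
          gcongr
          refine lintegral_mono_set fun y hy => mem_Ioi.2 <| lt_of_not_ge fun hyx => ?_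
          exact (hy.2.trans (measure_mono (Ioo_subset_Ioo_right hyx))).not_gt hx.2.2
  calc ∫⁻ x in Ioo 0 N ∩ layer μ (2 * c), g x ^ p * w x ^ p
      ≤ C ^ p * (4 * c) ^ (p / q) * γ ^ p := hupper.trans (by gcongr)
    _ = 4 ^ (p / q) * C ^ p * (c * γ ^ q) ^ (p / q) := by
        rw [ENNReal.mul_rpow_of_nonneg _ _ (by positivity),
          ENNReal.mul_rpow_of_nonneg _ _ (by positivity), ← ENNReal.rpow_mul,
          mul_div_cancel₀ _ hq.ne']
        ring
    _ ≤ _ := by gcongr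

theorem setLIntegral_Ioo_le (hq : 0 < q) (hqp : q ≤ p) (hp1 : p ≤ 1)
    (hw : Measurable w) (hg : Measurable g)
    (hC : ∀ t > 0, weightNorm p w (volume.restrict (Ioo 0 t)) ≤ C * μ (Ioo 0 t) ^ (1 / q))
    (N : ℝ) :
    ∫⁻ x in Ioo 0 N, g x ^ p * w x ^ p ≤
      4 ^ (p / q) * C ^ p * (∫⁻ t in Ioi 0, (∫⁻ x in Ioi t, g x) ^ q ∂μ) ^ (p / q) := by
  have hp : 0 < p := hq.trans_le hqp
  set f := fun x => g x ^ p * w x ^ p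
  set G := fun t => (∫⁻ x in Ioi t, g x) ^ q
  set E0 := {x ∈ Ioo 0 N | μ (Ioo 0 x) ≤ 0}
  set E : ℤ → Set ℝ := fun k => Ioo 0 N ∩ layer μ (2 ^ (k + 1))
  have hlayers := pairwise_disjoint_layer_two_zpow μ
  have hE : Pairwise (Function.onFun Disjoint E) := fun k j hkj =>
    (hlayers ((add_left_injective 1).ne hkj)).mono inter_subset_right inter_subset_right
  have hcover : Ioo 0 N ⊆ E0 ∪ ⋃ k, E k := by
    intro x hx
    rcases eq_or_ne (μ (Ioo 0 x)) 0 with h0 | h0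
    · exact Or.inl ⟨hx, h0.le⟩
    obtain ⟨n, hn⟩ := ENNReal.exists_mem_Ico_zpow h0 measure_Ioo_lt_top.ne one_lt_two ofNat_ne_top
    refine Or.inr (mem_iUnion.2 ⟨n - 1, hx, hx.1, ?_⟩)
    rwa [sub_add_cancel, ENNReal.two_mul_two_zpow]
  -- on `E0` the hypothesis forces `w = 0` almost everywhere
  have hE0 : ∫⁻ x in E0, f x = 0 := by
    simpa [hp, hq, ENNReal.zero_rpow_of_pos (div_pos hp hq)] using
      setLIntegral_le_of_subset_sublevel hp hp1 hq hw hg hC (subset_refl E0)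
  calc ∫⁻ x in Ioo 0 N, f x ≤ ∫⁻ x in E0 ∪ ⋃ k, E k, f x := lintegral_mono_set hcover
    _ ≤ (∫⁻ x in E0, f x) + ∫⁻ x in ⋃ k, E k, f x := lintegral_union_le _ _ _
    _ = ∑' k, ∫⁻ x in E k, f x := by
        rw [hE0, zero_add, lintegral_iUnion (fun k => measurableSet_Ioo.inter
          (measurableSet_layer μ _)) hE]
    _ ≤ ∑' k : ℤ, 4 ^ (p / q) * C ^ p * (∫⁻ x in layer μ (2 ^ k), G x ∂μ) ^ (p / q) :=
        ENNReal.tsum_le_tsum fun k => by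
          simpa only [ENNReal.two_mul_two_zpow] using setLIntegral_inter_layer_le hq hqp hp1 hw hg
            hC N (zpow_ne_top two_ne_zero ofNat_ne_top k)
    _ = 4 ^ (p / q) * C ^ p * ∑' k : ℤ, (∫⁻ x in layer μ (2 ^ k), G x ∂μ) ^ (p / q) :=
        ENNReal.tsum_mul_left
    _ ≤ 4 ^ (p / q) * C ^ p * (∑' k : ℤ, ∫⁻ x in layer μ (2 ^ k), G x ∂μ) ^ (p / q) := by
        gcongr
        exact ENNReal.tsum_rpow_le_rpow_tsum _ ((one_le_div hq).2 hqp)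
    _ ≤ 4 ^ (p / q) * C ^ p * (∫⁻ t in Ioi 0, G t ∂μ) ^ (p / q) := by
        rw [← lintegral_iUnion (fun k => measurableSet_layer μ _) hlayers]
        gcongr
        exact iUnion_subset fun k x hx => hx.1

theorem setLIntegral_Ioi_le (hq : 0 < q) (hqp : q ≤ p) (hp1 : p ≤ 1)
    (hw : Measurable w) (hg : Measurable g)
    (hC : ∀ t > 0, weightNorm p w (volume.restrict (Ioo 0 t)) ≤ C * μ (Ioo 0 t) ^ (1 / q)) :
    ∫⁻ x in Ioi 0, g x ^ p * w x ^ p ≤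
      4 ^ (p / q) * C ^ p * (∫⁻ t in Ioi 0, (∫⁻ x in Ioi t, g x) ^ q ∂μ) ^ (p / q) := by
  have hmono : Monotone fun N : ℝ => Ioo (0 : ℝ) N := fun _ _ h => Ioo_subset_Ioo_right h
  calc ∫⁻ x in Ioi 0, g x ^ p * w x ^ p
      = volume.withDensity (fun x => g x ^ p * w x ^ p) (⋃ N : ℝ, Ioo 0 N) := by
        rw [iUnion_Ioo_right, withDensity_apply _ measurableSet_Ioi]
    _ = ⨆ N : ℝ, ∫⁻ x in Ioo 0 N, g x ^ p * w x ^ p := by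
        simp only [hmono.measure_iUnion, withDensity_apply _ measurableSet_Ioo]
    _ ≤ _ := iSup_le (setLIntegral_Ioo_le hq hqp hp1 hw hg hC)

end UpperBound

/-- The constant `C*` of the reverse Copson inequality. -/
def copsonConstant (p q : ℝ) (w : ℝ → ℝ≥0∞) (μ : Measure ℝ) : ℝ≥0∞ :=
  ⨆ t ∈ Ioi (0 : ℝ), weightNorm p w (volume.restrict (Ioo 0 t)) * (μ (Ioo 0 t) ^ (1 / q))⁻¹

section LowerBound

variable {μ : Measure ℝ} {p q : ℝ} {w : ℝ → ℝ≥0∞}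

theorem weightNorm_le_copsonConstant_mul [IsFiniteMeasureOnCompacts μ] (hq : 0 < q)
    (hC : copsonConstant p q w μ ≠ ∞) {t : ℝ} (ht : 0 < t) :
    weightNorm p w (volume.restrict (Ioo 0 t)) ≤
      copsonConstant p q w μ * μ (Ioo 0 t) ^ (1 / q) := by
  rw [← ENNReal.div_le_iff_le_mul (Or.inr hC)
    (Or.inl (ENNReal.rpow_ne_top_of_nonneg (by positivity) measure_Ioo_lt_top.ne)), div_eq_mul_inv]
  exact le_iSup₂ (f := fun t _ => weightNorm p w (volume.restrict (Ioo 0 t)) *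
    (μ (Ioo 0 t) ^ (1 / q))⁻¹) t ht

theorem lintegral_indicator_Ioo_rpow_le (hq : 0 < q) (t : ℝ) (h : ℝ → ℝ≥0∞) :
    ∫⁻ s in Ioi 0, (∫⁻ x in Ioi s, (Ioo 0 t).indicator h x) ^ q ∂μ ≤
      (∫⁻ x in Ioo 0 t, h x) ^ q * μ (Ioo 0 t) := by
  have hpoint : ∀ s, (∫⁻ x in Ioi s, (Ioo 0 t).indicator h x) ^ q ≤
      (Iio t).indicator (fun _ => (∫⁻ x in Ioo 0 t, h x) ^ q) s := by
    intro s
    rw [lintegral_indicator measurableSet_Ioo, Measure.restrict_restrict measurableSet_Ioo]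
    rcases lt_or_ge s t with hst | hst
    · rw [indicator_of_mem (mem_Iio.2 hst)]
      gcongr
      exact inter_subset_left
    · rw [indicator_of_notMem (notMem_Iio.2 hst),
        Ioo_inter_Ioi, Ioo_eq_empty (by simp [hst]), Measure.restrict_empty, lintegral_zero_measure,
        ENNReal.zero_rpow_of_pos hq]
  calc _ ≤ ∫⁻ s in Ioi 0, (Iio t).indicator (fun _ => (∫⁻ x in Ioo 0 t, h x) ^ q) s ∂μ :=
        lintegral_mono hpoint
    _ = _ := by
        rw [lintegral_indicator_const measurableSet_Iio, Measure.restrict_apply measurableSet_Iio,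
          Iio_inter_Ioi]

theorem copsonConstant_le_iSup (hq : 0 < q) (hqp : q ≤ p) (hp1 : p ≤ 1) (hw : Measurable w) :
    copsonConstant p q w μ ≤ ⨆ g : {g : ℝ → ℝ≥0∞ // Measurable g},
      (∫⁻ x in Ioi 0, g.1 x ^ p * w x ^ p) ^ (1 / p) /
        (∫⁻ t in Ioi 0, (∫⁻ x in Ioi t, g.1 x) ^ q ∂μ) ^ (1 / q) := by
  have hp : 0 < p := hq.trans_le hqp
  refine iSup₂_le fun t ht => ?_
  calc weightNorm p w (volume.restrict (Ioo 0 t)) * (μ (Ioo 0 t) ^ (1 / q))⁻¹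
      ≤ (⨆ h : {h : ℝ → ℝ≥0∞ // Measurable h}, (∫⁻ x in Ioo 0 t, h.1 x ^ p * w x ^ p) ^ (1 / p) /
          ∫⁻ x in Ioo 0 t, h.1 x) * (μ (Ioo 0 t) ^ (1 / q))⁻¹ := by
        gcongr
        exact weightNorm_le_iSup hp hp1 hw
    _ = ⨆ h : {h : ℝ → ℝ≥0∞ // Measurable h}, (∫⁻ x in Ioo 0 t, h.1 x ^ p * w x ^ p) ^ (1 / p) /
          (∫⁻ x in Ioo 0 t, h.1 x) * (μ (Ioo 0 t) ^ (1 / q))⁻¹ := ENNReal.iSup_mul _ _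
    _ ≤ _ := iSup_le fun h => ?_
  -- test the inequality against `h` restricted to `(0, t)`
  refine le_iSup_of_le ⟨(Ioo 0 t).indicator h.1, h.2.indicator measurableSet_Ioo⟩
    ((ENNReal.div_mul_inv_le_div_mul _ _ _).trans (ENNReal.div_le_div ?_ ?_))
  · refine ENNReal.rpow_le_rpow ?_ (by positivity)
    calc ∫⁻ x in Ioo 0 t, h.1 x ^ p * w x ^ p
        = ∫⁻ x in Ioo 0 t, (Ioo 0 t).indicator h.1 x ^ p * w x ^ p :=
          setLIntegral_congr_fun measurableSet_Ioo fun x hx => by rw [indicator_of_mem hx]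
      _ ≤ _ := lintegral_mono_set Ioo_subset_Ioi_self
  · calc (∫⁻ s in Ioi 0, (∫⁻ x in Ioi s, (Ioo 0 t).indicator h.1 x) ^ q ∂μ) ^ (1 / q)
        ≤ ((∫⁻ x in Ioo 0 t, h.1 x) ^ q * μ (Ioo 0 t)) ^ (1 / q) := by
          gcongr
          exact lintegral_indicator_Ioo_rpow_le hq t h.1
      _ = (∫⁻ x in Ioo 0 t, h.1 x) * μ (Ioo 0 t) ^ (1 / q) := by
          rw [ENNReal.mul_rpow_of_nonneg _ _ (by positivity), ← ENNReal.rpow_mul,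
            mul_one_div_cancel hq.ne', ENNReal.rpow_one]

end LowerBound

theorem lintegral_rpow_le_copsonConstant_mul (μ : Measure ℝ) [IsFiniteMeasureOnCompacts μ]
    [NullSingletonClass μ] {p q : ℝ} (hq : 0 < q) (hqp : q ≤ p) (hp1 : p ≤ 1)
    {w : ℝ → ℝ≥0∞} (hw : Measurable w) (hC : copsonConstant p q w μ ≠ ∞) {g : ℝ → ℝ≥0∞}
    (hg : Measurable g) :
    (∫⁻ x in Ioi 0, g x ^ p * w x ^ p) ^ (1 / p) ≤
      4 ^ (1 / q) * copsonConstant p q w μ *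
        (∫⁻ t in Ioi 0, (∫⁻ x in Ioi t, g x) ^ q ∂μ) ^ (1 / q) := by
  have hp : 0 < p := hq.trans_le hqp
  have hbound := setLIntegral_Ioi_le hq hqp hp1 hw hg fun t ht =>
    weightNorm_le_copsonConstant_mul hq hC ht
  calc (∫⁻ x in Ioi 0, g x ^ p * w x ^ p) ^ (1 / p)
      ≤ (4 ^ (p / q) * copsonConstant p q w μ ^ p *
          (∫⁻ t in Ioi 0, (∫⁻ x in Ioi t, g x) ^ q ∂μ) ^ (p / q)) ^ (1 / p) := by gcongr
    _ = _ := by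
        have e1 : p / q * (1 / p) = 1 / q := by field_simp
        rw [ENNReal.mul_rpow_of_nonneg _ _ (by positivity),
          ENNReal.mul_rpow_of_nonneg _ _ (by positivity), ← ENNReal.rpow_mul, ← ENNReal.rpow_mul,
          ← ENNReal.rpow_mul, e1, mul_one_div_cancel hp.ne', ENNReal.rpow_one]

section HalfLineDensity

variable {f : ℝ → ℝ≥0∞}

theorem restrict_withDensity_Ioo (t : ℝ) :
    (volume.withDensity f).restrict (Ioi 0) (Ioo 0 t) = ∫⁻ x in Ioo 0 t, f x := by
  rw [Measure.restrict_apply measurableSet_Ioo, inter_eq_left.2 Ioo_subset_Ioi_self,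
    withDensity_apply _ measurableSet_Ioo]

theorem isFiniteMeasureOnCompacts_restrict_withDensity
    (hf : ∀ t ∈ Ioi (0 : ℝ), ∫⁻ x in Ioo 0 t, f x < ∞) :
    IsFiniteMeasureOnCompacts ((volume.withDensity f).restrict (Ioi 0)) := ⟨fun K hK => by
  obtain ⟨b, hb⟩ := hK.bddAbove
  have hT : 0 < max b 0 + 1 := by positivity
  calc (volume.withDensity f).restrict (Ioi 0) K
      ≤ (volume.withDensity f).restrict (Ioi 0) (Iio (max b 0 + 1)) :=
        measure_mono fun x hx => (hb hx).trans_lt (by linarith [le_max_left b 0])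
    _ < ∞ := by
        rw [Measure.restrict_apply measurableSet_Iio, Iio_inter_Ioi,
          withDensity_apply _ measurableSet_Ioo]
        exact hf _ hT⟩

theorem setLIntegral_Ioi_restrict_withDensity (hf : Measurable f) {F : ℝ → ℝ≥0∞}
    (hF : Measurable F) :
    ∫⁻ t in Ioi 0, F t ∂(volume.withDensity f).restrict (Ioi 0) = ∫⁻ t in Ioi 0, F t * f t := by
  rw [Measure.restrict_restrict measurableSet_Ioi, inter_self,
    setLIntegral_withDensity_eq_setLIntegral_mul _ hf hF measurableSet_Ioi]
  simp only [Pi.mul_apply, mul_comm]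

end HalfLineDensity

/-- reverse Copson inequality, `0 < q ≤ p ≤ 1`. -/
theorem reverse_copson_inequality (p q : ℝ) (hq : 0 < q) (hqp : q ≤ p) (hp1 : p ≤ 1) :
    ∃ c₁ c₂ : ℝ≥0∞, 0 < c₁ ∧ c₂ < ∞ ∧
      ∀ u w : ℝ → ℝ≥0∞, Measurable u → Measurable w →
        (∀ t ∈ Ioi (0:ℝ), (∫⁻ x in Ioo (0:ℝ) t, u x ^ q) < ∞) →
        (let LHS : (ℝ → ℝ≥0∞) → ℝ≥0∞ := fun g => (∫⁻ x in Ioi (0:ℝ), g x ^ p * w x ^ p) ^ (1 / p)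
         let RHS : (ℝ → ℝ≥0∞) → ℝ≥0∞ := fun g =>
            (∫⁻ t in Ioi (0:ℝ), (∫⁻ x in Ioi t, g x) ^ q * u t ^ q) ^ (1 / q)
         let C : ℝ≥0∞ := ⨆ t ∈ Ioi (0:ℝ),
            (if p = 1 then essSup w (volume.restrict (Ioo (0:ℝ) t))
             else (∫⁻ x in Ioo (0:ℝ) t, w x ^ (p / (1 - p))) ^ ((1 - p) / p))
              * ((∫⁻ x in Ioo (0:ℝ) t, u x ^ q) ^ (1 / q))⁻¹
         let best : ℝ≥0∞ := ⨆ g : {g : ℝ → ℝ≥0∞ // Measurable g}, LHS g.1 / RHS g.1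
         ((∃ c : ℝ≥0∞, c < ∞ ∧ ∀ g : ℝ → ℝ≥0∞, Measurable g → LHS g ≤ c * RHS g) ↔ C < ∞)
           ∧ c₁ * C ≤ best ∧ best ≤ c₂ * C) := by
  refine ⟨1, 4 ^ (1 / q), one_pos, ENNReal.rpow_lt_top_of_nonneg (by positivity) ofNat_ne_top, ?_⟩
  intro u w hu hw hfin
  set μ := (volume.withDensity fun x => u x ^ q).restrict (Ioi 0)
  have := isFiniteMeasureOnCompacts_restrict_withDensity hfin
  have hμ : ∀ t, μ (Ioo 0 t) = ∫⁻ x in Ioo 0 t, u x ^ q := restrict_withDensity_Ioo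
  have hRHS : ∀ g : ℝ → ℝ≥0∞, ∫⁻ t in Ioi 0, (∫⁻ x in Ioi t, g x) ^ q * u t ^ q =
      ∫⁻ t in Ioi 0, (∫⁻ x in Ioi t, g x) ^ q ∂μ := fun g =>
    (setLIntegral_Ioi_restrict_withDensity (hu.pow_const q) <| Antitone.measurable fun a b hab =>
      ENNReal.rpow_le_rpow (lintegral_mono_set (Ioi_subset_Ioi hab)) hq.le).symm
  simp only [← hμ, hRHS]
  show ((∃ c < ∞, ∀ g : ℝ → ℝ≥0∞, Measurable g → _ ≤ c * _) ↔ copsonConstant p q w μ < ∞) ∧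
    1 * copsonConstant p q w μ ≤ _ ∧ _ ≤ 4 ^ (1 / q) * copsonConstant p q w μ
  have hlow := copsonConstant_le_iSup (μ := μ) hq hqp hp1 hw
  have hup := lintegral_rpow_le_copsonConstant_mul μ hq hqp hp1 hw
  refine ⟨⟨fun ⟨c, hc, h⟩ => ?_, fun hC => ⟨_, ENNReal.mul_lt_top (ENNReal.rpow_lt_top_of_nonneg
    (by positivity) ofNat_ne_top) hC, fun g hg => hup hC.ne hg⟩⟩, (one_mul _).trans_le hlow, ?_⟩
  · exact (hlow.trans (iSup_le fun g => ENNReal.div_le_of_le_mul (h g.1 g.2))).trans_lt hc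
  · rcases eq_or_ne (copsonConstant p q w μ) ∞ with hC | hC
    · rw [hC, ENNReal.mul_top (by positivity)]
      exact le_top
    · exact iSup_le fun g => ENNReal.div_le_of_le_mul (hup hC g.2)
end
end

section
/- Let 0 < q ≤ p ≤ ∞ and let u, w be nonnegative measurable functions on (0,∞) with ‖u‖_{L^q(t,∞)} < ∞ for all t > 0. Then the inequality ‖g‖_{L^p(w)} ≤ c ‖ t ↦ ess sup_{x∈(0,t)} g(x) ‖_{L^q(u)} holds for all nonnegative measurable g if and only if E = sup_{t>0} ‖w‖_{L^p(t,∞)} ‖u‖_{L^q(t,∞)}^{−1} < ∞, and the best constant c satisfies c ≈ E with constants depending only on p, q. -/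
open MeasureTheory ENNReal Set

noncomputable section

/-- Weighted `L^p` functional over a set `s`, for `p ∈ (0,∞]`. -/
def wnorm (p : ℝ≥0∞) (g : ℝ → ℝ≥0∞) (s : Set ℝ) : ℝ≥0∞ :=
  if p = ∞ then essSup g (volume.restrict s)
  else (∫⁻ x in s, g x ^ p.toReal) ^ (1 / p.toReal)

/-!
A nonnegative `g` is dominated a.e. on `(0,∞)` by its supremal function `S g`, which is
nondecreasing, so it suffices to bound `‖φ w‖_p` by `‖φ u‖_q` for nondecreasing `φ`. Up to one
point, the superlevel sets of such a `φ` are tails `(τ,∞)`, on which the hypothesis compares the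
`w`-mass with the `u`-mass. For `p < ∞` the layer-cake formula and Chebyshev's inequality turn
this comparison of level sets into the norm inequality with constant `(p/q)^{1/p}`; for `p = ∞`
one passes to the limit at the (a.e.) continuity points of `φ`. Conversely, `g = 1_{(t,∞)}`
satisfies `S g = g` on `(0,∞)`, and these test functions show that `E` is at most the best
constant.
-/

theorem wnorm_eq_eLpNorm {p : ℝ≥0∞} (hp : p ≠ 0) (g : ℝ → ℝ≥0∞) (s : Set ℝ) :
    wnorm p g s = eLpNorm g p (volume.restrict s) := by
  rcases eq_or_ne p ∞ with rfl | hp_top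
  · simp [wnorm, eLpNorm_exponent_top, eLpNormEssSup]
  · simp [wnorm, hp_top, eLpNorm_eq_lintegral_rpow_enorm_toReal hp hp_top]

theorem eLpNorm_rpow_toReal_eq_lintegral {α : Type*} [MeasurableSpace α] {p : ℝ≥0∞}
    (hp0 : p ≠ 0) (hp : p ≠ ∞) (f : α → ℝ≥0∞) (μ : Measure α) :
    eLpNorm f p μ ^ p.toReal = ∫⁻ x, f x ^ p.toReal ∂μ := by
  rw [eLpNorm_eq_lintegral_rpow_enorm_toReal hp0 hp, ← ENNReal.rpow_mul,
    one_div_mul_cancel (ENNReal.toReal_pos hp0 hp).ne', ENNReal.rpow_one]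
  simp only [enorm_eq_self]

theorem const_mul_eLpNorm_le {α : Type*} [MeasurableSpace α] {μ : Measure α} {f g : α → ℝ≥0∞}
    {c : ℝ≥0∞} (p : ℝ≥0∞) (h : ∀ᵐ x ∂μ, c * f x ≤ g x) :
    c * eLpNorm f p μ ≤ eLpNorm g p μ := by
  rcases eq_or_ne p 0 with rfl | hp0
  · simp
  rcases eq_or_ne p ∞ with rfl | hp
  · simp only [eLpNorm_exponent_top, eLpNormEssSup, enorm_eq_self, ← ENNReal.essSup_const_mul]
    exact essSup_mono_ae h
  have hP : 0 < p.toReal := ENNReal.toReal_pos hp0 hp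
  rw [← ENNReal.rpow_le_rpow_iff hP, ENNReal.mul_rpow_of_nonneg _ _ hP.le,
    eLpNorm_rpow_toReal_eq_lintegral hp0 hp, eLpNorm_rpow_toReal_eq_lintegral hp0 hp]
  refine (lintegral_const_mul_le _ _).trans (lintegral_mono_ae ?_)
  filter_upwards [h] with x hx
  rw [← ENNReal.mul_rpow_of_nonneg _ _ hP.le]
  exact ENNReal.rpow_le_rpow hx hP.le

theorem ENNReal.setLIntegral_Ioo_ofReal_mul_rpow_sub_one {r T : ℝ} (hr : 0 < r) (hT : 0 ≤ T) :
    ∫⁻ s in Ioo 0 T, ENNReal.ofReal (r * s ^ (r - 1)) = ENNReal.ofReal T ^ r := by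
  have hint : IntegrableOn (fun s : ℝ => r * s ^ (r - 1)) (Ioc 0 T) := by
    rw [← intervalIntegrable_iff_integrableOn_Ioc_of_le hT]
    exact (intervalIntegral.intervalIntegrable_rpow' (by linarith)).const_mul r
  have hnonneg : 0 ≤ᵐ[volume.restrict (Ioo 0 T)] fun s : ℝ => r * s ^ (r - 1) := by
    filter_upwards [ae_restrict_mem measurableSet_Ioo] with s hs
    exact mul_nonneg hr.le (Real.rpow_nonneg hs.1.le _)
  rw [← ofReal_integral_eq_lintegral_ofReal (hint.mono_set Ioo_subset_Ioc_self) hnonneg,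
    integral_Ioc_eq_integral_Ioo.symm, ← intervalIntegral.integral_of_le hT,
    intervalIntegral.integral_const_mul, integral_rpow (Or.inl (by linarith)), sub_add_cancel,
    Real.zero_rpow hr.ne', sub_zero, mul_div_cancel₀ _ hr.ne',
    ENNReal.ofReal_rpow_of_nonneg hT hr.le]

theorem ENNReal.setLIntegral_Ioi_indicator_ofReal_lt {r : ℝ} (hr : 0 < r) (a : ℝ≥0∞) :
    ∫⁻ s in Ioi 0, {s : ℝ | ENNReal.ofReal s < a}.indicator
      (fun s => ENNReal.ofReal (r * s ^ (r - 1))) s = a ^ r := by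
  have of_ofReal (T : ℝ) (hT : 0 ≤ T) :
      ∫⁻ s in Ioi 0, {s : ℝ | ENNReal.ofReal s < .ofReal T}.indicator
        (fun s => ENNReal.ofReal (r * s ^ (r - 1))) s = ENNReal.ofReal T ^ r := by
    have hset : {s : ℝ | ENNReal.ofReal s < .ofReal T} ∩ Ioi 0 = Ioo 0 T := by
      ext s
      simp only [mem_inter_iff, mem_ofPred_eq, ENNReal.ofReal_lt_ofReal_iff', mem_Ioi, mem_Ioo]
      constructor
      · rintro ⟨⟨hsT, -⟩, hs⟩; exact ⟨hs, hsT⟩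
      · rintro ⟨hs, hsT⟩; exact ⟨⟨hsT, hs.trans hsT⟩, hs⟩
    rw [lintegral_indicator (measurableSet_lt ENNReal.measurable_ofReal measurable_const),
      Measure.restrict_restrict (measurableSet_lt ENNReal.measurable_ofReal measurable_const),
      hset, setLIntegral_Ioo_ofReal_mul_rpow_sub_one hr hT]
  rcases eq_or_ne a ∞ with rfl | ha
  · rw [top_rpow_of_pos hr]
    refine eq_top_of_forall_nnreal_le fun x => ?_
    calc (x : ℝ≥0∞) = ENNReal.ofReal ((x : ℝ) ^ r⁻¹) ^ r := by
          rw [ENNReal.ofReal_rpow_of_nonneg (by positivity) hr.le, ← Real.rpow_mul x.coe_nonneg,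
            inv_mul_cancel₀ hr.ne', Real.rpow_one, ofReal_coe_nnreal]
      _ = _ := (of_ofReal _ (by positivity)).symm
      _ ≤ _ := lintegral_mono fun s =>
          indicator_le_indicator_of_subset (fun s _ => ofReal_lt_top) (fun _ => zero_le) s
  · simpa [ofReal_toReal ha] using of_ofReal a.toReal toReal_nonneg

theorem ENNReal.lintegral_rpow_eq_lintegral_meas_lt_mul {α : Type*} [MeasurableSpace α]
    (μ : Measure α) [SFinite μ] {f : α → ℝ≥0∞} (hf : Measurable f) {r : ℝ} (hr : 0 < r) :
    ∫⁻ x, f x ^ r ∂μ =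
      ∫⁻ s in Ioi (0 : ℝ), μ {x | ENNReal.ofReal s < f x} * ENNReal.ofReal (r * s ^ (r - 1)) := by
  have hk : Measurable fun s : ℝ => ENNReal.ofReal (r * s ^ (r - 1)) := by fun_prop
  have hmeas : MeasurableSet {p : α × ℝ | ENNReal.ofReal p.2 < f p.1} :=
    measurableSet_lt (ENNReal.measurable_ofReal.comp measurable_snd) (hf.comp measurable_fst)
  calc ∫⁻ x, f x ^ r ∂μ
      = ∫⁻ x, (∫⁻ s in Ioi (0 : ℝ), {s : ℝ | ENNReal.ofReal s < f x}.indicator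
          (fun s => ENNReal.ofReal (r * s ^ (r - 1))) s) ∂μ := by
        simp_rw [setLIntegral_Ioi_indicator_ofReal_lt hr]
    _ = ∫⁻ s in Ioi (0 : ℝ), ∫⁻ x, {s : ℝ | ENNReal.ofReal s < f x}.indicator
          (fun s => ENNReal.ofReal (r * s ^ (r - 1))) s ∂μ :=
        lintegral_lintegral_swap ((hk.comp measurable_snd).indicator hmeas).aemeasurable
    _ = _ := by
        congr 1
        funext s
        rw [mul_comm, ← lintegral_indicator_const (measurableSet_lt measurable_const hf)]
        rfl

/-- Chebyshev gives `s * ν {s < f} ≤ ∫ f ∂ν`, hence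
`ν {s < f} ^ r * s ^ (r - 1) ≤ (∫ f ∂ν) ^ (r - 1) * ν {s < f}`; integrate in `s` with the
layer-cake formula. -/
theorem lintegral_rpow_le_of_meas_lt_le {α : Type*} [MeasurableSpace α] {μ ν : Measure α}
    [SFinite μ] [SFinite ν] {f : α → ℝ≥0∞} (hf : Measurable f) {r : ℝ} (hr : 1 ≤ r) {C : ℝ≥0∞}
    (h : ∀ s : ℝ, 0 < s →
      μ {x | ENNReal.ofReal s < f x} ≤ C * ν {x | ENNReal.ofReal s < f x} ^ r) :
    ∫⁻ x, f x ^ r ∂μ ≤ ENNReal.ofReal r * C * (∫⁻ x, f x ∂ν) ^ r := by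
  set M := ∫⁻ x, f x ∂ν
  set V : ℝ → ℝ≥0∞ := fun s => ν {x | ENNReal.ofReal s < f x}
  have hr1 : 0 ≤ r - 1 := by linarith
  have rpow_split (a : ℝ≥0∞) : a ^ r = a ^ (r - 1) * a := by
    conv_lhs => rw [← sub_add_cancel r 1]
    rw [ENNReal.rpow_add_of_nonneg _ _ hr1 zero_le_one, ENNReal.rpow_one]
  have hV_anti : Antitone V := fun s s' hss' =>
    measure_mono fun x hx => (ENNReal.ofReal_le_ofReal hss').trans_lt hx
  have chebyshev (s : ℝ) : ENNReal.ofReal s * V s ≤ M :=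
    (mul_le_mul_right (measure_mono fun x (hx : ENNReal.ofReal s < f x) => hx.le) _).trans
      (mul_meas_ge_le_lintegral₀ hf.aemeasurable _)
  have hpoint (s : ℝ) (hs : 0 < s) :
      V s ^ r * ENNReal.ofReal (r * s ^ (r - 1)) ≤ ENNReal.ofReal r * M ^ (r - 1) * V s := by
    calc V s ^ r * ENNReal.ofReal (r * s ^ (r - 1))
        = ENNReal.ofReal r * (ENNReal.ofReal s * V s) ^ (r - 1) * V s := by
          rw [ENNReal.ofReal_mul (by linarith), ← ENNReal.ofReal_rpow_of_pos hs,
            ENNReal.mul_rpow_of_nonneg _ _ hr1, rpow_split]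
          ring
      _ ≤ ENNReal.ofReal r * M ^ (r - 1) * V s := by gcongr; exact chebyshev s
  calc ∫⁻ x, f x ^ r ∂μ
      = ∫⁻ s in Ioi (0 : ℝ), μ {x | ENNReal.ofReal s < f x} * ENNReal.ofReal (r * s ^ (r - 1)) :=
        ENNReal.lintegral_rpow_eq_lintegral_meas_lt_mul μ hf (by linarith)
    _ ≤ ∫⁻ s in Ioi (0 : ℝ), ENNReal.ofReal r * C * M ^ (r - 1) * V s := by
        refine setLIntegral_mono' measurableSet_Ioi fun s hs => ?_
        calc μ {x | ENNReal.ofReal s < f x} * ENNReal.ofReal (r * s ^ (r - 1))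
            ≤ C * (V s ^ r * ENNReal.ofReal (r * s ^ (r - 1))) := by
              rw [← mul_assoc]; gcongr; exact h s hs
          _ ≤ C * (ENNReal.ofReal r * M ^ (r - 1) * V s) := mul_le_mul_right (hpoint s hs) C
          _ = ENNReal.ofReal r * C * M ^ (r - 1) * V s := by ring
    _ = ENNReal.ofReal r * C * M ^ (r - 1) * ∫⁻ s in Ioi (0 : ℝ), V s :=
        lintegral_const_mul _ hV_anti.measurable
    _ = ENNReal.ofReal r * C * M ^ r := by
        have layer := ENNReal.lintegral_rpow_eq_lintegral_meas_lt_mul ν hf zero_lt_one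
        simp only [ENNReal.rpow_one, sub_self, Real.rpow_zero, mul_one, ENNReal.ofReal_one]
          at layer
        rw [← layer, mul_assoc, ← rpow_split]

theorem measure_Ioi_eq_iSup_nat (μ : Measure ℝ) (τ : ℝ) :
    μ (Ioi τ) = ⨆ n : ℕ, μ (Ioi (τ + 1 / (n + 1))) := by
  have hmono : Monotone fun n : ℕ => Ioi (τ + 1 / ((n : ℝ) + 1)) := fun m n hmn =>
    Ioi_subset_Ioi (by gcongr)
  rw [← hmono.measure_iUnion]
  congr 1
  ext x
  simp only [mem_iUnion, mem_Ioi]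
  constructor
  · intro hx
    obtain ⟨n, hn⟩ := exists_nat_one_div_lt (sub_pos.2 hx)
    exact ⟨n, by linarith⟩
  · rintro ⟨n, hn⟩
    exact (lt_add_of_pos_right τ (by positivity)).trans hn

theorem IsUpperSet.measure_le_of_measure_Ioi_le {μ : Measure ℝ} [NullSingletonClass μ]
    (hμ : μ (Iic 0) = 0) {m : Set ℝ → ℝ≥0∞} (hm : Monotone m)
    (h : ∀ t, 0 < t → μ (Ioi t) ≤ m (Ioi t)) {A : Set ℝ} (hA : IsUpperSet A) : μ A ≤ m A := by
  have hA_pos : μ A ≤ μ (A ∩ Ioi 0) :=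
    calc μ A ≤ μ (A ∩ Ioi 0 ∪ Iic 0) := measure_mono fun x hx => by
          rcases lt_or_ge 0 x with h0 | h0
          exacts [Or.inl ⟨hx, h0⟩, Or.inr h0]
      _ ≤ μ (A ∩ Ioi 0) + μ (Iic 0) := measure_union_le _ _
      _ = μ (A ∩ Ioi 0) := by rw [hμ, add_zero]
  rcases (A ∩ Ioi 0).eq_empty_or_nonempty with hB | hB
  · simp_all
  have hbdd : BddBelow (A ∩ Ioi 0) := ⟨0, fun x hx => hx.2.le⟩
  -- `A ∩ Ioi 0` lies between `Ioi τ` and `Ici τ`, which have the same measure.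
  set τ := sInf (A ∩ Ioi 0)
  have hτ : 0 ≤ τ := le_csInf hB fun x hx => hx.2.le
  have hIoi_sub (t : ℝ) (ht : τ < t) : Ioi t ⊆ A := by
    obtain ⟨a, haA, hat⟩ := (csInf_lt_iff hbdd hB).mp ht
    exact (Ioi_subset_Ioi hat.le).trans (hA.Ioi_subset haA.1)
  calc μ A ≤ μ (Ici τ) := hA_pos.trans (measure_mono fun x hx => csInf_le hbdd hx)
    _ = μ (Ioi τ) := measure_congr Ioi_ae_eq_Ici.symm
    _ = ⨆ n : ℕ, μ (Ioi (τ + 1 / (n + 1))) := measure_Ioi_eq_iSup_nat μ τ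
    _ ≤ m A := iSup_le fun n =>
        (h _ (by positivity)).trans (hm (hIoi_sub _ (lt_add_of_pos_right τ (by positivity))))

theorem setLIntegral_rpow_mul_le_of_monotone {φ a b : ℝ → ℝ≥0∞} (hφ : Monotone φ)
    (ha : Measurable a) (hb : Measurable b) {r : ℝ} (hr : 1 ≤ r) {C : ℝ≥0∞}
    (h : ∀ t, 0 < t → ∫⁻ x in Ioi t, a x ≤ C * (∫⁻ x in Ioi t, b x) ^ r) :
    ∫⁻ x in Ioi 0, a x * φ x ^ r ≤ ENNReal.ofReal r * C * (∫⁻ x in Ioi 0, b x * φ x) ^ r := by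
  set μ := (volume.restrict (Ioi (0 : ℝ))).withDensity a
  set ν := (volume.restrict (Ioi (0 : ℝ))).withDensity b
  have hμ_Iic : μ (Iic 0) = 0 := by
    rw [withDensity_apply _ measurableSet_Iic, Measure.restrict_restrict measurableSet_Iic,
      Iic_inter_Ioi, Ioc_self, Measure.restrict_empty, lintegral_zero_measure]
  have hIoi (t : ℝ) (ht : 0 < t) : μ (Ioi t) ≤ C * ν (Ioi t) ^ r := by
    simpa only [μ, ν, withDensity_apply _ measurableSet_Ioi,
      Measure.restrict_restrict measurableSet_Ioi, inter_eq_left.2 (Ioi_subset_Ioi ht.le)]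
      using h t ht
  have key := lintegral_rpow_le_of_meas_lt_le (μ := μ) (ν := ν) hφ.measurable hr fun s _ =>
    (isUpperSet_setOfPred.2 fun x y hxy hx => hx.trans_le (hφ hxy)).measure_le_of_measure_Ioi_le
      hμ_Iic (m := fun A => C * ν A ^ r)
      (fun A B hAB => mul_le_mul_right (ENNReal.rpow_le_rpow (measure_mono hAB) (by linarith)) C)
      hIoi
  rwa [lintegral_withDensity_eq_lintegral_mul _ ha (hφ.measurable.pow_const r),
    lintegral_withDensity_eq_lintegral_mul _ hb hφ.measurable] at key

theorem eLpNorm_mul_le_of_monotone_of_ne_top {p q : ℝ≥0∞} (hq : 0 < q) (hqp : q ≤ p) (hp : p ≠ ∞)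
    {φ u w : ℝ → ℝ≥0∞} (hφ : Monotone φ) (hu : Measurable u) (hw : Measurable w) {E : ℝ≥0∞}
    (hE : ∀ t, 0 < t →
      eLpNorm w p (volume.restrict (Ioi t)) ≤ E * eLpNorm u q (volume.restrict (Ioi t))) :
    eLpNorm (fun x => φ x * w x) p (volume.restrict (Ioi 0)) ≤
      ENNReal.ofReal (p.toReal / q.toReal) ^ (1 / p.toReal) * E *
        eLpNorm (fun x => φ x * u x) q (volume.restrict (Ioi 0)) := by
  have hq_top : q ≠ ∞ := ne_top_of_le_ne_top hp hqp
  have hp0 : p ≠ 0 := (hq.trans_le hqp).ne'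
  set P := p.toReal
  set Q := q.toReal
  have hP : 0 < P := ENNReal.toReal_pos hp0 hp
  have hQ : 0 < Q := ENNReal.toReal_pos hq.ne' hq_top
  set r := P / Q
  have hr : 1 ≤ r := (one_le_div hQ).2 (ENNReal.toReal_mono hp hqp)
  have hrQ : Q * r = P := mul_div_cancel₀ P hQ.ne'
  have tail (t : ℝ) (ht : 0 < t) :
      ∫⁻ x in Ioi t, w x ^ P ≤ E ^ P * (∫⁻ x in Ioi t, u x ^ Q) ^ r := by
    rw [← eLpNorm_rpow_toReal_eq_lintegral hp0 hp, ← eLpNorm_rpow_toReal_eq_lintegral hq.ne' hq_top,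
      ← ENNReal.rpow_mul, hrQ, ← ENNReal.mul_rpow_of_nonneg _ _ hP.le]
    exact ENNReal.rpow_le_rpow (hE t ht) hP.le
  have main := setLIntegral_rpow_mul_le_of_monotone (φ := fun x => φ x ^ Q)
    (fun x y hxy => ENNReal.rpow_le_rpow (hφ hxy) hQ.le) (hw.pow_const P) (hu.pow_const Q) hr tail
  rw [← ENNReal.rpow_le_rpow_iff hP]
  calc eLpNorm (fun x => φ x * w x) p (volume.restrict (Ioi 0)) ^ P
      = ∫⁻ x in Ioi 0, w x ^ P * (φ x ^ Q) ^ r := by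
        rw [eLpNorm_rpow_toReal_eq_lintegral hp0 hp]
        refine lintegral_congr fun x => ?_
        rw [ENNReal.mul_rpow_of_nonneg _ _ hP.le, ← ENNReal.rpow_mul, hrQ, mul_comm]
    _ ≤ ENNReal.ofReal r * E ^ P * (∫⁻ x in Ioi 0, u x ^ Q * φ x ^ Q) ^ r := main
    _ = ENNReal.ofReal r * E ^ P *
          (eLpNorm (fun x => φ x * u x) q (volume.restrict (Ioi 0)) ^ Q) ^ r := by
        rw [eLpNorm_rpow_toReal_eq_lintegral hq.ne' hq_top]
        congr 2
        refine lintegral_congr fun x => ?_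
        rw [ENNReal.mul_rpow_of_nonneg _ _ hQ.le, mul_comm]
    _ = (ENNReal.ofReal r ^ (1 / P) * E *
          eLpNorm (fun x => φ x * u x) q (volume.restrict (Ioi 0))) ^ P := by
        rw [ENNReal.mul_rpow_of_nonneg _ _ hP.le, ENNReal.mul_rpow_of_nonneg _ _ hP.le,
          ← ENNReal.rpow_mul, ← ENNReal.rpow_mul, one_div_mul_cancel hP.ne', ENNReal.rpow_one, hrQ]

theorem Monotone.ae_continuousAt {α β : Type*} [LinearOrder α] [TopologicalSpace α]
    [OrderTopology α] [MeasurableSpace α] [ConditionallyCompleteLinearOrder β] [TopologicalSpace β]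
    [OrderTopology β] [SecondCountableTopology β] {f : α → β} (hf : Monotone f) (μ : Measure α)
    [NullSingletonClass μ] : ∀ᵐ x ∂μ, ContinuousAt f x :=
  ae_iff.2 (hf.countable_not_continuousAt.measure_zero μ)

theorem eLpNorm_top_mul_le_of_monotone {q : ℝ≥0∞} {φ u w : ℝ → ℝ≥0∞} (hφ : Monotone φ)
    {E : ℝ≥0∞} (hE : ∀ t, 0 < t →
      eLpNorm w ∞ (volume.restrict (Ioi t)) ≤ E * eLpNorm u q (volume.restrict (Ioi t))) :
    eLpNorm (fun x => φ x * w x) ∞ (volume.restrict (Ioi 0)) ≤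
      E * eLpNorm (fun x => φ x * u x) q (volume.restrict (Ioi 0)) := by
  set M := eLpNorm (fun x => φ x * u x) q (volume.restrict (Ioi 0))
  have tail (t : ℝ) (ht : 0 < t) : φ t * eLpNorm w ∞ (volume.restrict (Ioi t)) ≤ E * M :=
    calc φ t * eLpNorm w ∞ (volume.restrict (Ioi t))
        ≤ E * (φ t * eLpNorm u q (volume.restrict (Ioi t))) := by
          rw [mul_left_comm]; exact mul_le_mul_right (hE t ht) _
      _ ≤ E * eLpNorm (fun x => φ x * u x) q (volume.restrict (Ioi t)) := by
          refine mul_le_mul_right (const_mul_eLpNorm_le q ?_) E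
          filter_upwards [ae_restrict_mem measurableSet_Ioi] with x hx
          exact mul_le_mul_left (hφ (le_of_lt hx)) _
      _ ≤ E * M := mul_le_mul_right
          (eLpNorm_mono_measure _ (Measure.restrict_mono (Ioi_subset_Ioi ht.le) le_rfl)) E
  have h_rat : ∀ᵐ x ∂volume.restrict (Ioi (0 : ℝ)), ∀ s : ℚ, (s : ℝ) < x →
      w x ≤ eLpNorm w ∞ (volume.restrict (Ioi (s : ℝ))) := by
    refine ae_all_iff.2 fun s => ae_restrict_of_ae ?_
    have := (ae_le_eLpNormEssSup (μ := volume.restrict (Ioi (s : ℝ))) (f := w))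
    rw [ae_restrict_iff' measurableSet_Ioi] at this
    simpa [eLpNorm_exponent_top] using this
  rw [eLpNorm_exponent_top]
  refine eLpNormEssSup_le_of_ae_enorm_bound ?_
  filter_upwards [h_rat, ae_restrict_of_ae (hφ.ae_continuousAt volume),
    ae_restrict_mem measurableSet_Ioi] with x hx_rat hx_cont hx0
  rw [enorm_eq_self]
  rcases eq_or_ne (φ x) 0 with h0 | h0
  · simp [h0]
  have below : ∀ᶠ t in nhdsWithin x (Iio x), φ t * w x ≤ E * M := by
    filter_upwards [Ioo_mem_nhdsLT hx0] with t ht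
    obtain ⟨s, hts, hsx⟩ := exists_rat_btwn ht.2
    calc φ t * w x ≤ φ s * eLpNorm w ∞ (volume.restrict (Ioi (s : ℝ))) :=
          mul_le_mul' (hφ hts.le) (hx_rat s hsx)
      _ ≤ E * M := tail s (ht.1.trans hts)
  exact le_of_tendsto (ENNReal.Tendsto.mul_const (hx_cont.tendsto.mono_left nhdsWithin_le_nhds)
    (Or.inl h0)) below

def supremal (g : ℝ → ℝ≥0∞) (t : ℝ) : ℝ≥0∞ := essSup g (volume.restrict (Ioo 0 t))

theorem monotone_supremal (g : ℝ → ℝ≥0∞) : Monotone (supremal g) := fun _ _ hst =>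
  essSup_mono_measure (Measure.absolutelyContinuous_of_le
    (Measure.restrict_mono (Ioo_subset_Ioo le_rfl hst) le_rfl))

theorem ae_le_supremal (g : ℝ → ℝ≥0∞) : ∀ᵐ x ∂volume.restrict (Ioi 0), g x ≤ supremal g x := by
  have h_rat : ∀ᵐ x ∂volume.restrict (Ioi (0 : ℝ)), ∀ t : ℚ, x < (t : ℝ) →
      g x ≤ supremal g (t : ℝ) := by
    refine ae_all_iff.2 fun t => ?_
    have := ae_le_essSup (μ := volume.restrict (Ioo 0 (t : ℝ))) g
    rw [ae_restrict_iff' measurableSet_Ioo] at this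
    rw [ae_restrict_iff' measurableSet_Ioi]
    filter_upwards [this] with x hx hx0 hxt using hx ⟨hx0, hxt⟩
  filter_upwards [h_rat, ae_restrict_of_ae ((monotone_supremal g).ae_continuousAt volume)]
    with x hx_rat hx_cont
  have above : ∀ᶠ t in nhdsWithin x (Ioi x), g x ≤ supremal g t := by
    filter_upwards [self_mem_nhdsWithin] with t (ht : x < t)
    obtain ⟨s, hxs, hst⟩ := exists_rat_btwn ht
    exact (hx_rat s hxs).trans (monotone_supremal g hst.le)
  exact ge_of_tendsto (hx_cont.tendsto.mono_left nhdsWithin_le_nhds) above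

theorem supremal_indicator_Ioi {t : ℝ} (ht : 0 ≤ t) (s : ℝ) :
    supremal ((Ioi t).indicator 1) s = (Ioi t).indicator 1 s := by
  rw [supremal, essSup_indicator_eq_essSup_restrict measurableSet_Ioi,
    Measure.restrict_restrict measurableSet_Ioi]
  by_cases hts : t < s
  · have hset : Ioi t ∩ Ioo 0 s = Ioo t s := by
      ext x; simp only [mem_inter_iff, mem_Ioi, mem_Ioo]
      constructor
      · rintro ⟨htx, -, hxs⟩; exact ⟨htx, hxs⟩
      · rintro ⟨htx, hxs⟩; exact ⟨htx, ht.trans_lt htx, hxs⟩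
    rw [indicator_of_mem (mem_Ioi.2 hts), hset]
    refine essSup_const _ ?_
    simpa [Measure.restrict_eq_zero, Real.volume_Ioo] using hts
  · have hset : Ioi t ∩ Ioo 0 s = ∅ := by
      ext x; simp only [mem_inter_iff, mem_Ioi, mem_Ioo, mem_empty_iff_false, iff_false]
      rintro ⟨htx, -, hxs⟩; exact hts (htx.trans hxs)
    simp [indicator_of_notMem (show s ∉ Ioi t from hts), hset]

theorem wnorm_indicator_Ioi_mul {p : ℝ≥0∞} (hp : p ≠ 0) {t : ℝ} (ht : 0 ≤ t) (v : ℝ → ℝ≥0∞) :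
    wnorm p (fun x => (Ioi t).indicator 1 x * v x) (Ioi 0) = wnorm p v (Ioi t) := by
  have : (fun x => (Ioi t).indicator 1 x * v x) = (Ioi t).indicator v := by
    funext x
    by_cases hx : x ∈ Ioi t <;> simp [hx]
  rw [wnorm_eq_eLpNorm hp, wnorm_eq_eLpNorm hp, this,
    eLpNorm_indicator_eq_eLpNorm_restrict measurableSet_Ioi,
    Measure.restrict_restrict measurableSet_Ioi, inter_eq_left.2 (Ioi_subset_Ioi ht)]

theorem wnorm_mul_supremal_indicator_Ioi {q : ℝ≥0∞} (hq : q ≠ 0) {t : ℝ} (ht : 0 ≤ t)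
    (u : ℝ → ℝ≥0∞) :
    wnorm q (fun s => u s * supremal ((Ioi t).indicator 1) s) (Ioi 0) = wnorm q u (Ioi t) := by
  simp_rw [supremal_indicator_Ioi ht, mul_comm (u _)]
  exact wnorm_indicator_Ioi_mul hq ht u

def supremalHardyConst (p q : ℝ≥0∞) : ℝ≥0∞ :=
  if p = ∞ then 1 else ENNReal.ofReal (p.toReal / q.toReal) ^ (1 / p.toReal)

theorem supremalHardyConst_lt_top (p q : ℝ≥0∞) : supremalHardyConst p q < ∞ := by
  unfold supremalHardyConst
  split_ifs
  exacts [one_lt_top, ENNReal.rpow_lt_top_of_nonneg (by positivity) ofReal_ne_top]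

theorem supremalHardyConst_ne_zero {p q : ℝ≥0∞} (hq : 0 < q) (hqp : q ≤ p) :
    supremalHardyConst p q ≠ 0 := by
  unfold supremalHardyConst
  split_ifs with hp
  · exact one_ne_zero
  have hq_top : q ≠ ∞ := ne_top_of_le_ne_top hp hqp
  refine (ENNReal.rpow_pos ?_ ofReal_ne_top).ne'
  exact ENNReal.ofReal_pos.2 (div_pos (ENNReal.toReal_pos (hq.trans_le hqp).ne' hp)
    (ENNReal.toReal_pos hq.ne' hq_top))

theorem wnorm_mul_le_supremalHardyConst_mul {p q : ℝ≥0∞} (hq : 0 < q) (hqp : q ≤ p)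
    {u w : ℝ → ℝ≥0∞} (hu : Measurable u) (hw : Measurable w) {E : ℝ≥0∞}
    (hE : ∀ t, 0 < t → wnorm p w (Ioi t) ≤ E * wnorm q u (Ioi t)) (g : ℝ → ℝ≥0∞) :
    wnorm p (fun x => g x * w x) (Ioi 0) ≤
      supremalHardyConst p q * E * wnorm q (fun t => u t * supremal g t) (Ioi 0) := by
  simp only [wnorm_eq_eLpNorm (hq.trans_le hqp).ne', wnorm_eq_eLpNorm hq.ne'] at hE ⊢
  have h_env : eLpNorm (fun x => g x * w x) p (volume.restrict (Ioi 0)) ≤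
      eLpNorm (fun x => supremal g x * w x) p (volume.restrict (Ioi 0)) := by
    refine eLpNorm_mono_enorm_ae ?_
    filter_upwards [ae_le_supremal g] with x hx
    simpa only [enorm_eq_self] using mul_le_mul_left hx (w x)
  have h_comm : (fun t => u t * supremal g t) = fun t => supremal g t * u t :=
    funext fun t => mul_comm _ _
  rw [h_comm]
  rcases eq_or_ne p ∞ with rfl | hp
  · rw [supremalHardyConst, if_pos rfl, one_mul]
    exact h_env.trans (eLpNorm_top_mul_le_of_monotone (monotone_supremal g) hE)
  · rw [supremalHardyConst, if_neg hp]
    exact h_env.trans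
      (eLpNorm_mul_le_of_monotone_of_ne_top hq hqp hp (monotone_supremal g) hu hw hE)

/-- reverse inequality for the supremal operator `S`, `0 < q ≤ p ≤ ∞`. -/
theorem reverse_supremal_hardy (p q : ℝ≥0∞) (hq : 0 < q) (hqp : q ≤ p) :
    ∃ c₁ c₂ : ℝ≥0∞, 0 < c₁ ∧ c₂ < ∞ ∧
      ∀ u w : ℝ → ℝ≥0∞, Measurable u → Measurable w →
        (∀ t ∈ Ioi (0:ℝ), wnorm q u (Ioi t) < ∞) →
        (let LHS : (ℝ → ℝ≥0∞) → ℝ≥0∞ := fun g => wnorm p (fun x => g x * w x) (Ioi 0)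
         let RHS : (ℝ → ℝ≥0∞) → ℝ≥0∞ := fun g =>
            wnorm q (fun t => u t * essSup g (volume.restrict (Ioo (0:ℝ) t))) (Ioi 0)
         let E : ℝ≥0∞ := ⨆ t ∈ Ioi (0:ℝ), wnorm p w (Ioi t) * (wnorm q u (Ioi t))⁻¹
         let best : ℝ≥0∞ := ⨆ g : {g : ℝ → ℝ≥0∞ // Measurable g}, LHS g.1 / RHS g.1
         ((∃ c : ℝ≥0∞, c < ∞ ∧ ∀ g : ℝ → ℝ≥0∞, Measurable g → LHS g ≤ c * RHS g) ↔ E < ∞)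
           ∧ c₁ * E ≤ best ∧ best ≤ c₂ * E) := by
  have hp0 : p ≠ 0 := (hq.trans_le hqp).ne'
  refine ⟨1, supremalHardyConst p q, one_pos, supremalHardyConst_lt_top p q,
    fun u w hu hw hu_fin => ?_⟩
  intro LHS RHS E best
  have h_ind (t : ℝ) : Measurable ((Ioi t).indicator (1 : ℝ → ℝ≥0∞)) :=
    measurable_const.indicator measurableSet_Ioi
  have test (t : ℝ) (ht : 0 < t) : LHS ((Ioi t).indicator 1) / RHS ((Ioi t).indicator 1) =
      wnorm p w (Ioi t) * (wnorm q u (Ioi t))⁻¹ :=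
    (congrArg₂ (· / ·) (wnorm_indicator_Ioi_mul hp0 ht.le w)
      (wnorm_mul_supremal_indicator_Ioi hq.ne' ht.le u)).trans (div_eq_mul_inv _ _)
  have lower (c : ℝ≥0∞) (h : ∀ g, Measurable g → LHS g ≤ c * RHS g) : E ≤ c :=
    iSup₂_le fun t ht => test t ht ▸ ENNReal.div_le_of_le_mul (h _ (h_ind t))
  have upper (hE : E < ∞) (g : ℝ → ℝ≥0∞) : LHS g ≤ supremalHardyConst p q * E * RHS g :=
    wnorm_mul_le_supremalHardyConst_mul hq hqp hu hw (fun t ht =>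
      (ENNReal.div_le_iff_le_mul (Or.inr hE.ne) (Or.inl (hu_fin t ht).ne)).1 <|
        le_iSup₂ (f := fun t (_ : t ∈ Ioi (0 : ℝ)) => wnorm p w (Ioi t) * (wnorm q u (Ioi t))⁻¹)
          t ht) g
  refine ⟨⟨fun ⟨c, hc, h⟩ => (lower c h).trans_lt hc, fun hE =>
    ⟨_, ENNReal.mul_lt_top (supremalHardyConst_lt_top p q) hE, fun g _ => upper hE g⟩⟩, ?_, ?_⟩
  · rw [one_mul]
    exact iSup₂_le fun t ht => test t ht ▸
      le_iSup (fun g : {g // Measurable g} => LHS g.1 / RHS g.1) ⟨_, h_ind t⟩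
  · rcases eq_or_ne E ∞ with hE | hE
    · rw [hE, ENNReal.mul_top (supremalHardyConst_ne_zero hq hqp)]
      exact le_top
    · exact iSup_le fun g => ENNReal.div_le_of_le_mul (upper hE.lt_top g.1)
end
end

section
/- Let 0 < q ≤ p ≤ ∞ and let u, w be nonnegative measurable functions on (0,∞) with ‖u‖_{L^q(0,t)} < ∞ for all t > 0. Then ‖g‖_{L^p(w)} ≤ c ‖ t ↦ ess sup_{x∈(t,∞)} g(x) ‖_{L^q(u)} holds for all nonnegative measurable g if and only if E* = sup_{t>0} ‖w‖_{L^p(0,t)} ‖u‖_{L^q(0,t)}^{−1} < ∞, and the best constant satisfies c ≈ E*. -/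
/-!
Testing with `g = 𝟙_(0,t)`, for which `S* g = g` on `(0,∞)`, shows that every admissible
constant is at least `E*`. Conversely, `g ≤ S* g` almost everywhere and `S* g` is nonincreasing,
so it suffices to bound `‖H w‖_p` for nonincreasing `H`. For `p = ∞` this is pointwise:
`w x ≤ E* ‖u‖_{L^q(0,x)}` for a.e. `x`, and `H x ‖u‖_{L^q(0,x)} ≤ ‖u H‖_{L^q}`. For `p < ∞` the
level sets of `H` are initial intervals, on which the hypothesis compares the measures `w^p dx`
and `u^q dx`. The layer cake formula then reduces the claim to a Hardy inequality for the
nonincreasing function `Φ λ = ∫_{H^q > λ} u^q`, which follows from `λ Φ λ ≤ ∫_0^λ Φ ≤ ∫ Φ`.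
-/

open MeasureTheory ENNReal Set

noncomputable section

section wnorm

variable {p : ℝ≥0∞} {f g : ℝ → ℝ≥0∞} {s t : Set ℝ}

lemma wnorm_top : wnorm ∞ f s = essSup f (volume.restrict s) := if_pos rfl

lemma wnorm_of_ne_top (hp : p ≠ ∞) :
    wnorm p f s = (∫⁻ x in s, f x ^ p.toReal) ^ (1 / p.toReal) := if_neg hp

lemma wnorm_mono_ae (h : f ≤ᵐ[volume.restrict s] g) : wnorm p f s ≤ wnorm p g s := by
  unfold wnorm
  split_ifs
  · exact essSup_mono_ae h
  · gcongr ?_ ^ _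
    exact lintegral_mono_ae (h.mono fun x hx => by gcongr)

lemma wnorm_congr_ae (h : f =ᵐ[volume.restrict s] g) : wnorm p f s = wnorm p g s :=
  (wnorm_mono_ae h.le).antisymm (wnorm_mono_ae h.symm.le)

lemma wnorm_mono_set (hst : s ⊆ t) : wnorm p f s ≤ wnorm p f t := by
  unfold wnorm
  split_ifs
  · exact essSup_mono_measure' (Measure.restrict_mono hst le_rfl)
  · gcongr ?_ ^ _
    exact lintegral_mono_set hst

lemma mul_wnorm_le (hp : p ≠ 0) (c : ℝ≥0∞) : c * wnorm p f s ≤ wnorm p (fun x => c * f x) s := by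
  unfold wnorm
  split_ifs with hpt
  · exact ENNReal.essSup_const_mul.ge
  · have hr : 0 < p.toReal := ENNReal.toReal_pos hp hpt
    calc c * (∫⁻ x in s, f x ^ p.toReal) ^ (1 / p.toReal)
        = (c ^ p.toReal * ∫⁻ x in s, f x ^ p.toReal) ^ (1 / p.toReal) := by
          rw [ENNReal.mul_rpow_of_nonneg _ _ (by positivity), ← ENNReal.rpow_mul,
            mul_one_div_cancel hr.ne', ENNReal.rpow_one]
      _ ≤ (∫⁻ x in s, (c * f x) ^ p.toReal) ^ (1 / p.toReal) := by
          gcongr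
          simp_rw [ENNReal.mul_rpow_of_nonneg _ _ hr.le]
          exact lintegral_const_mul_le _ _

lemma wnorm_indicator (hp : p ≠ 0) (hs : MeasurableSet s) (hst : s ⊆ t) :
    wnorm p (s.indicator f) t = wnorm p f s := by
  unfold wnorm
  split_ifs with hpt
  · rw [essSup_indicator_eq_essSup_restrict hs, Measure.restrict_restrict hs, inter_eq_left.2 hst]
  · have hr : 0 < p.toReal := ENNReal.toReal_pos hp hpt
    have hpow : (fun x => s.indicator f x ^ p.toReal) = s.indicator fun x => f x ^ p.toReal := by
      ext x
      by_cases hx : x ∈ s <;> simp [hx, hr]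
    rw [hpow, lintegral_indicator hs, Measure.restrict_restrict hs, inter_eq_left.2 hst]

end wnorm

lemma Monotone.ae_continuousAt_s18 {f : ℝ → ℝ≥0∞} (hf : Monotone f) :
    ∀ᵐ x, ContinuousAt f x :=
  measure_mono_null (fun _ hx => hx) (hf.countable_not_continuousAt.measure_zero volume)

lemma Antitone.ae_continuousAt_s18 {f : ℝ → ℝ≥0∞} (hf : Antitone f) :
    ∀ᵐ x, ContinuousAt f x :=
  measure_mono_null (fun _ hx => hx) (hf.countable_not_continuousAt.measure_zero volume)

lemma ae_le_of_antitone_of_ae_restrict_Ioi_le {g B : ℝ → ℝ≥0∞} (hB : Antitone B)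
    (h : ∀ t, ∀ᵐ x ∂volume.restrict (Ioi t), g x ≤ B t) : ∀ᵐ x, g x ≤ B x := by
  have hrat : ∀ᵐ x, ∀ q : ℚ, x ∈ Ioi (q : ℝ) → g x ≤ B q :=
    ae_all_iff.2 fun q => (ae_restrict_iff' measurableSet_Ioi).1 (h q)
  filter_upwards [hrat, hB.ae_continuousAt_s18] with x hx hcont
  refine ge_of_tendsto (hcont.tendsto.mono_left (nhdsWithin_le_nhds (s := Iio x))) ?_
  filter_upwards [self_mem_nhdsWithin] with y (hy : y < x)
  obtain ⟨q, hyq, hqx⟩ := exists_rat_btwn hy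
  exact (hx q hqx).trans (hB hyq.le)

lemma ae_le_of_monotone_of_ae_restrict_Ioo_le {w B : ℝ → ℝ≥0∞} (hB : Monotone B)
    (h : ∀ t, 0 < t → ∀ᵐ x ∂volume.restrict (Ioo 0 t), w x ≤ B t) :
    ∀ᵐ x ∂volume.restrict (Ioi 0), w x ≤ B x := by
  have hrat : ∀ᵐ x, ∀ q : ℚ, x ∈ Ioo 0 (q : ℝ) → w x ≤ B q := by
    refine ae_all_iff.2 fun q => ?_
    by_cases hq : (0 : ℝ) < q
    · exact (ae_restrict_iff' measurableSet_Ioo).1 (h q hq)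
    · exact ae_of_all _ fun x hx => absurd (hx.1.trans hx.2) hq
  filter_upwards [ae_restrict_mem measurableSet_Ioi, ae_restrict_of_ae hrat,
    ae_restrict_of_ae hB.ae_continuousAt_s18] with x (hx0 : 0 < x) hx hcont
  refine ge_of_tendsto (hcont.tendsto.mono_left (nhdsWithin_le_nhds (s := Ioi x))) ?_
  filter_upwards [self_mem_nhdsWithin] with y (hy : x < y)
  obtain ⟨q, hxq, hqy⟩ := exists_rat_btwn hy
  exact (hx q ⟨hx0, hxq⟩).trans (hB hqy.le)

lemma ae_le_essSup_restrict_Ioi (g : ℝ → ℝ≥0∞) :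
    ∀ᵐ x, g x ≤ essSup g (volume.restrict (Ioi x)) :=
  ae_le_of_antitone_of_ae_restrict_Ioi_le
    (fun _ _ hst => essSup_mono_measure' (Measure.restrict_mono (Ioi_subset_Ioi hst) le_rfl))
    fun t => ae_le_essSup g

lemma measure_inter_Ioi_le_of_isLowerSet {μ : Measure ℝ} [NullSingletonClass μ] {T : Set ℝ}
    (hT : IsLowerSet T) {c : ℝ≥0∞} (hc : ∀ t ∈ T, 0 < t → μ (Ioo 0 t) ≤ c) : μ (T ∩ Ioi 0) ≤ c := by
  set U := ⋃ q : {q : ℚ // (q : ℝ) ∈ T ∧ 0 < (q : ℝ)}, Ioo (0 : ℝ) q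
  have hU : μ U ≤ c := by
    rw [Directed.measure_iUnion (Monotone.directed_le fun q r hqr =>
      Ioo_subset_Ioo_right (by exact_mod_cast hqr))]
    exact iSup_le fun q => hc q q.2.1 q.2.2
  -- Points of `T ∩ Ioi 0` outside `U` have no rational of `T` above them: there is at most one.
  have hrest : ((T ∩ Ioi 0) \ U).Subsingleton := by
    have hnlt : ∀ x ∈ (T ∩ Ioi 0) \ U, ∀ y ∈ (T ∩ Ioi 0) \ U, ¬ x < y := fun x hx y hy hxy => by
      obtain ⟨q, hxq, hqy⟩ := exists_rat_btwn hxy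
      exact hx.2 (mem_iUnion.2 ⟨⟨q, hT hqy.le hy.1.1, hx.1.2.trans hxq⟩, hx.1.2, hxq⟩)
    intro x hx y hy
    rcases lt_trichotomy x y with hxy | hxy | hxy
    exacts [absurd hxy (hnlt x hx y hy), hxy, absurd hxy (hnlt y hy x hx)]
  calc μ (T ∩ Ioi 0) ≤ μ (T ∩ Ioi 0 ∩ U) + μ ((T ∩ Ioi 0) \ U) := measure_le_inter_add_sdiff _ _ _
    _ ≤ c := by
      rw [hrest.measure_zero μ, add_zero]
      exact (measure_mono inter_subset_right).trans hU

section LayerCake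

variable {r : ℝ}

lemma lintegral_Ioo_ofReal_mul_rpow_sub_one (hr : 0 < r) {b : ℝ} (hb : 0 ≤ b) :
    ∫⁻ x in Ioo 0 b, ENNReal.ofReal (r * x ^ (r - 1)) = ENNReal.ofReal (b ^ r) := by
  rw [Measure.restrict_congr_set Ioo_ae_eq_Ioc]
  have hint : IntegrableOn (fun x => r * x ^ (r - 1)) (Ioc 0 b) := by
    rw [← intervalIntegrable_iff_integrableOn_Ioc_of_le hb]
    exact (intervalIntegral.intervalIntegrable_rpow' (by linarith)).const_mul r
  rw [← ofReal_integral_eq_lintegral_ofReal hint, ← intervalIntegral.integral_of_le hb,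
    intervalIntegral.integral_const_mul, integral_rpow (Or.inl (by linarith)), sub_add_cancel,
    Real.zero_rpow hr.ne', sub_zero, mul_div_cancel₀ _ hr.ne']
  filter_upwards [ae_restrict_mem measurableSet_Ioc] with x hx
  have := Real.rpow_nonneg hx.1.le (r - 1)
  positivity

lemma lintegral_Ioi_ofReal_mul_rpow_sub_one (hr : 0 < r) :
    ∫⁻ x in Ioi 0, ENNReal.ofReal (r * x ^ (r - 1)) = ∞ := by
  refine eq_top_iff.2 <| le_of_tendsto' (ENNReal.tendsto_ofReal_atTop.comp
    ((tendsto_rpow_atTop hr).comp tendsto_natCast_atTop_atTop)) fun n => ?_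
  rw [Function.comp_apply, Function.comp_apply,
    ← lintegral_Ioo_ofReal_mul_rpow_sub_one hr (Nat.cast_nonneg n)]
  exact lintegral_mono_set Ioo_subset_Ioi_self

lemma rpow_eq_lintegral_Ioi_indicator (hr : 0 < r) (c : ℝ≥0∞) :
    c ^ r = ∫⁻ t in Ioi 0,
      {t : ℝ | ENNReal.ofReal t < c}.indicator (fun t => ENNReal.ofReal (r * t ^ (r - 1))) t := by
  rcases eq_or_ne c ∞ with rfl | hc
  · simp [ENNReal.top_rpow_of_pos hr, lintegral_Ioi_ofReal_mul_rpow_sub_one hr]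
  have hlevel : {t : ℝ | ENNReal.ofReal t < c} ∩ Ioi 0 = Ioo 0 c.toReal := by
    ext t
    simp only [mem_inter_iff, mem_ofPred_eq, mem_Ioi, mem_Ioo]
    constructor
    · rintro ⟨htc, ht⟩
      exact ⟨ht, (ENNReal.ofReal_lt_iff_lt_toReal ht.le hc).1 htc⟩
    · rintro ⟨ht, htc⟩
      exact ⟨(ENNReal.ofReal_lt_iff_lt_toReal ht.le hc).2 htc, ht⟩
  rw [lintegral_indicator (measurableSet_lt measurable_ofReal measurable_const),
    Measure.restrict_restrict (measurableSet_lt measurable_ofReal measurable_const), hlevel,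
    lintegral_Ioo_ofReal_mul_rpow_sub_one hr ENNReal.toReal_nonneg,
    ← ENNReal.ofReal_rpow_of_nonneg ENNReal.toReal_nonneg hr.le, ENNReal.ofReal_toReal hc]

theorem lintegral_rpow_eq_lintegral_meas_lt_of_ennreal {α : Type*} [MeasurableSpace α]
    (μ : Measure α) [SFinite μ] {f : α → ℝ≥0∞} (hf : Measurable f) (hr : 0 < r) :
    ∫⁻ a, f a ^ r ∂μ
      = ∫⁻ t in Ioi 0, ENNReal.ofReal (r * t ^ (r - 1)) * μ {a | ENNReal.ofReal t < f a} := by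
  have hmeas : Measurable fun p : α × ℝ =>
      {p : α × ℝ | ENNReal.ofReal p.2 < f p.1}.indicator
        (fun p => ENNReal.ofReal (r * p.2 ^ (r - 1))) p :=
    (by fun_prop : Measurable fun p : α × ℝ => ENNReal.ofReal (r * p.2 ^ (r - 1))).indicator
      (measurableSet_lt (by fun_prop) (hf.comp measurable_fst))
  simp_rw [rpow_eq_lintegral_Ioi_indicator hr]
  rw [lintegral_lintegral_swap hmeas.aemeasurable]
  refine lintegral_congr fun t => ?_
  rw [← lintegral_indicator_const (measurableSet_lt measurable_const hf)]
  rfl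

end LayerCake

lemma ENNReal.rpow_eq_rpow_sub_one_mul (x : ℝ≥0∞) {ρ : ℝ} (hρ : 1 ≤ ρ) :
    x ^ ρ = x ^ (ρ - 1) * x := by
  conv_lhs => rw [← sub_add_cancel ρ 1]
  rw [ENNReal.rpow_add_of_nonneg _ _ (by linarith) zero_le_one, ENNReal.rpow_one]

lemma ENNReal.mul_rpow_one_div_rpow {s : ℝ} (hs : 0 < s) (a b : ℝ≥0∞) (r : ℝ) :
    (a * b ^ (1 / s)) ^ r = (a ^ s * b) ^ (r / s) := by
  rw [show r / s = 1 / s * r by ring, ENNReal.rpow_mul,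
    ENNReal.mul_rpow_of_nonneg _ _ (by positivity : 0 ≤ 1 / s), ← ENNReal.rpow_mul,
    mul_one_div_cancel hs.ne', ENNReal.rpow_one]

lemma lintegral_ofReal_mul_rpow_le_of_antitone {Φ : ℝ → ℝ≥0∞} (hΦ : Antitone Φ) {ρ : ℝ}
    (hρ : 1 ≤ ρ) :
    ∫⁻ l in Ioi 0, ENNReal.ofReal (ρ * l ^ (ρ - 1)) * Φ l ^ ρ
      ≤ ENNReal.ofReal ρ * (∫⁻ l in Ioi 0, Φ l) ^ ρ := by
  set A := ∫⁻ l in Ioi 0, Φ l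
  have hmul_le_integral : ∀ l, 0 < l → ENNReal.ofReal l * Φ l ≤ A := fun l hl =>
    calc ENNReal.ofReal l * Φ l = ∫⁻ _ in Ioo 0 l, Φ l := by
          rw [setLIntegral_const, Real.volume_Ioo, sub_zero, mul_comm]
      _ ≤ ∫⁻ t in Ioo 0 l, Φ t := setLIntegral_mono' measurableSet_Ioo fun t ht => hΦ ht.2.le
      _ ≤ A := lintegral_mono_set Ioo_subset_Ioi_self
  have hpointwise : ∀ l ∈ Ioi (0 : ℝ), ENNReal.ofReal (ρ * l ^ (ρ - 1)) * Φ l ^ ρ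
      ≤ ENNReal.ofReal ρ * A ^ (ρ - 1) * Φ l := fun l (hl : 0 < l) =>
    calc ENNReal.ofReal (ρ * l ^ (ρ - 1)) * Φ l ^ ρ
        = ENNReal.ofReal ρ * (ENNReal.ofReal l * Φ l) ^ (ρ - 1) * Φ l := by
          rw [ENNReal.mul_rpow_of_nonneg _ _ (by linarith), ENNReal.ofReal_rpow_of_pos hl,
            ENNReal.ofReal_mul (by linarith), ENNReal.rpow_eq_rpow_sub_one_mul _ hρ]
          ring
      _ ≤ ENNReal.ofReal ρ * A ^ (ρ - 1) * Φ l := by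
          gcongr
          exact hmul_le_integral l hl
  calc ∫⁻ l in Ioi 0, ENNReal.ofReal (ρ * l ^ (ρ - 1)) * Φ l ^ ρ
      ≤ ∫⁻ l in Ioi 0, ENNReal.ofReal ρ * A ^ (ρ - 1) * Φ l :=
        setLIntegral_mono' measurableSet_Ioi hpointwise
    _ = ENNReal.ofReal ρ * A ^ ρ := by
        rw [lintegral_const_mul _ hΦ.measurable, mul_assoc,
          ← ENNReal.rpow_eq_rpow_sub_one_mul _ hρ]

theorem lintegral_rpow_le_of_antitone_of_measure_Ioo_le {μ ν : Measure ℝ} [SFinite μ]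
    [SFinite ν] [NullSingletonClass μ] (hμ : μ (Iic 0) = 0) {ρ : ℝ} (hρ : 1 ≤ ρ)
    (hμν : ∀ t, 0 < t → μ (Ioo 0 t) ≤ ν (Ioo 0 t) ^ ρ) {F : ℝ → ℝ≥0∞} (hF : Antitone F) :
    ∫⁻ x, F x ^ ρ ∂μ ≤ ENNReal.ofReal ρ * (∫⁻ x, F x ∂ν) ^ ρ := by
  have hlevel : ∀ l : ℝ, μ {x | ENNReal.ofReal l < F x} ≤ ν {x | ENNReal.ofReal l < F x} ^ ρ := by
    intro l
    set T := {x | ENNReal.ofReal l < F x}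
    have hT : IsLowerSet T := fun x y hyx (hx : _ < _) => hx.trans_le (hF hyx)
    calc μ T ≤ μ (T ∩ Ioi 0) + μ (T \ Ioi 0) := measure_le_inter_add_sdiff _ _ _
      _ = μ (T ∩ Ioi 0) := by
        rw [measure_mono_null (fun x hx => mem_Iic.2 (not_lt.1 hx.2) : T \ Ioi 0 ⊆ Iic 0) hμ,
          add_zero]
      _ ≤ ν T ^ ρ := measure_inter_Ioi_le_of_isLowerSet hT fun t ht ht0 =>
        (hμν t ht0).trans (by gcongr; exact fun x hx => hT hx.2.le ht)
  have hρ0 : 0 < ρ := by linarith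
  calc ∫⁻ x, F x ^ ρ ∂μ
      = ∫⁻ l in Ioi 0, ENNReal.ofReal (ρ * l ^ (ρ - 1)) * μ {x | ENNReal.ofReal l < F x} :=
        lintegral_rpow_eq_lintegral_meas_lt_of_ennreal μ hF.measurable hρ0
    _ ≤ ∫⁻ l in Ioi 0, ENNReal.ofReal (ρ * l ^ (ρ - 1)) * ν {x | ENNReal.ofReal l < F x} ^ ρ :=
        lintegral_mono fun l => by gcongr; exact hlevel l
    _ ≤ ENNReal.ofReal ρ * (∫⁻ l in Ioi 0, ν {x | ENNReal.ofReal l < F x}) ^ ρ :=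
        lintegral_ofReal_mul_rpow_le_of_antitone (Φ := fun l => ν {x | ENNReal.ofReal l < F x})
          (fun l₁ l₂ hl => measure_mono fun x (hx : _ < _) => (ofReal_le_ofReal hl).trans_lt hx) hρ
    _ = ENNReal.ofReal ρ * (∫⁻ x, F x ∂ν) ^ ρ := by
        simpa using congr_arg (fun I => ENNReal.ofReal ρ * I ^ ρ)
          (lintegral_rpow_eq_lintegral_meas_lt_of_ennreal ν hF.measurable one_pos).symm

lemma essSup_mul_le_of_antitone {q : ℝ≥0∞} (hq : q ≠ 0) {u w H : ℝ → ℝ≥0∞} {E : ℝ≥0∞}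
    (hH : Antitone H)
    (hwu : ∀ t, 0 < t → essSup w (volume.restrict (Ioo 0 t)) ≤ E * wnorm q u (Ioo 0 t)) :
    essSup (fun x => H x * w x) (volume.restrict (Ioi 0))
      ≤ E * wnorm q (fun x => u x * H x) (Ioi 0) := by
  have hmono : Monotone fun t => E * wnorm q u (Ioo 0 t) := fun _ _ hst =>
    mul_le_mul_right (wnorm_mono_set (Ioo_subset_Ioo_right hst)) E
  have hw := ae_le_of_monotone_of_ae_restrict_Ioo_le hmono fun t ht =>
    (ae_le_essSup w).mono fun x hx => hx.trans (hwu t ht)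
  refine essSup_le_of_ae_le _ ?_
  filter_upwards [hw] with x hx
  calc H x * w x ≤ E * (H x * wnorm q u (Ioo 0 x)) := by
        rw [mul_left_comm]; gcongr
    _ ≤ E * wnorm q (fun y => u y * H y) (Ioi 0) := by
      gcongr
      calc H x * wnorm q u (Ioo 0 x) ≤ wnorm q (fun y => H x * u y) (Ioo 0 x) := mul_wnorm_le hq _
        _ ≤ wnorm q (fun y => u y * H y) (Ioo 0 x) :=
          wnorm_mono_ae <| (ae_restrict_mem measurableSet_Ioo).mono fun y hy => by
            show H x * u y ≤ u y * H y
            rw [mul_comm]; gcongr; exact hH hy.2.le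
        _ ≤ wnorm q (fun y => u y * H y) (Ioi 0) := wnorm_mono_set Ioo_subset_Ioi_self

lemma wnorm_mul_le_of_antitone_of_ne_top {p q : ℝ≥0∞} (hq : 0 < q) (hqp : q ≤ p) (hp : p ≠ ∞)
    {u w H : ℝ → ℝ≥0∞} (hu : Measurable u) (hw : Measurable w) (hH : Antitone H) {E : ℝ≥0∞}
    (hwu : ∀ t, 0 < t → wnorm p w (Ioo 0 t) ≤ E * wnorm q u (Ioo 0 t)) :
    wnorm p (fun x => H x * w x) (Ioi 0)
      ≤ ENNReal.ofReal (p.toReal / q.toReal) ^ (1 / p.toReal) * E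
        * wnorm q (fun x => u x * H x) (Ioi 0) := by
  have hqt : q ≠ ∞ := ne_top_of_le_ne_top hp hqp
  set r := p.toReal
  set s := q.toReal
  have hs : 0 < s := ENNReal.toReal_pos hq.ne' hqt
  have hr : 0 < r := hs.trans_le (ENNReal.toReal_mono hp hqp)
  have hρ : 1 ≤ r / s := (one_le_div hs).2 (ENNReal.toReal_mono hp hqp)
  rw [wnorm_of_ne_top hp, wnorm_of_ne_top hqt]
  -- `E` is absorbed into `ν`, so that the hypothesis becomes `μ (0, t) ≤ ν (0, t) ^ (r / s)`.
  set μ := (volume.restrict (Ioi 0)).withDensity fun x => w x ^ r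
  set ν := E ^ s • (volume.restrict (Ioi 0)).withDensity fun x => u x ^ s
  have hIoo : ∀ t : ℝ, Ioo 0 t ∩ Ioi 0 = Ioo 0 t := fun t => inter_eq_left.2 Ioo_subset_Ioi_self
  have hμ : μ (Iic 0) = 0 := by
    rw [withDensity_apply _ measurableSet_Iic, Measure.restrict_restrict measurableSet_Iic,
      (Set.Iic_disjoint_Ioi le_rfl).inter_eq, Measure.restrict_empty, lintegral_zero_measure]
  have hμν : ∀ t, 0 < t → μ (Ioo 0 t) ≤ ν (Ioo 0 t) ^ (r / s) := fun t ht => by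
    have := hwu t ht
    rw [wnorm_of_ne_top hp, wnorm_of_ne_top hqt, one_div, ENNReal.rpow_inv_le_iff hr,
      ENNReal.mul_rpow_one_div_rpow hs] at this
    simpa only [μ, ν, Measure.smul_apply, smul_eq_mul, withDensity_apply _ measurableSet_Ioo,
      Measure.restrict_restrict measurableSet_Ioo, hIoo] using this
  have hF : Antitone fun x => H x ^ s := fun x y hxy => ENNReal.rpow_le_rpow (hH hxy) hs.le
  have hmain := lintegral_rpow_le_of_antitone_of_measure_Ioo_le hμ hρ hμν hF
  have hLHS : ∫⁻ x, (H x ^ s) ^ (r / s) ∂μ = ∫⁻ x in Ioi 0, (H x * w x) ^ r := by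
    rw [lintegral_withDensity_eq_lintegral_mul _ (hw.pow_const r)
      ((hH.measurable.pow_const s).pow_const _)]
    refine lintegral_congr fun x => ?_
    rw [Pi.mul_apply, ← ENNReal.rpow_mul, mul_div_cancel₀ _ hs.ne',
      ENNReal.mul_rpow_of_nonneg _ _ hr.le, mul_comm]
  have hRHS : ∫⁻ x, H x ^ s ∂ν = E ^ s * ∫⁻ x in Ioi 0, (u x * H x) ^ s := by
    rw [lintegral_smul_measure, smul_eq_mul,
      lintegral_withDensity_eq_lintegral_mul _ (hu.pow_const s) (hH.measurable.pow_const s)]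
    congr 1
    exact lintegral_congr fun x => (ENNReal.mul_rpow_of_nonneg _ _ hs.le).symm
  rw [hLHS, hRHS] at hmain
  calc (∫⁻ x in Ioi 0, (H x * w x) ^ r) ^ (1 / r)
      ≤ (ENNReal.ofReal (r / s) * (E ^ s * ∫⁻ x in Ioi 0, (u x * H x) ^ s) ^ (r / s))
          ^ (1 / r) := by gcongr
    _ = ENNReal.ofReal (r / s) ^ (1 / r) * E * (∫⁻ x in Ioi 0, (u x * H x) ^ s) ^ (1 / s) := by
        rw [ENNReal.mul_rpow_of_nonneg _ _ (by positivity), ← ENNReal.rpow_mul,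
          show r / s * (1 / r) = 1 / s by field_simp, ← ENNReal.mul_rpow_one_div_rpow hs E _ 1,
          ENNReal.rpow_one, mul_assoc]

def copsonConst (p q : ℝ≥0∞) : ℝ≥0∞ :=
  max 1 (ENNReal.ofReal (p.toReal / q.toReal) ^ (1 / p.toReal))

lemma one_le_copsonConst (p q : ℝ≥0∞) : 1 ≤ copsonConst p q := le_max_left _ _

lemma copsonConst_lt_top (p q : ℝ≥0∞) : copsonConst p q < ∞ :=
  max_lt one_lt_top (ENNReal.rpow_lt_top_of_nonneg (by positivity) ofReal_ne_top)

lemma wnorm_mul_le_copsonConst_mul {p q : ℝ≥0∞} (hq : 0 < q) (hqp : q ≤ p) {u w : ℝ → ℝ≥0∞}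
    (hu : Measurable u) (hw : Measurable w) {E : ℝ≥0∞}
    (hwu : ∀ t, 0 < t → wnorm p w (Ioo 0 t) ≤ E * wnorm q u (Ioo 0 t)) (g : ℝ → ℝ≥0∞) :
    wnorm p (fun x => g x * w x) (Ioi 0)
      ≤ copsonConst p q * E
        * wnorm q (fun t => u t * essSup g (volume.restrict (Ioi t))) (Ioi 0) := by
  set h := fun t => essSup g (volume.restrict (Ioi t))
  have hh : Antitone h := fun _ _ hst =>
    essSup_mono_measure' (Measure.restrict_mono (Ioi_subset_Ioi hst) le_rfl)
  calc wnorm p (fun x => g x * w x) (Ioi 0) ≤ wnorm p (fun x => h x * w x) (Ioi 0) :=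
        wnorm_mono_ae <| ae_restrict_of_ae <| (ae_le_essSup_restrict_Ioi g).mono fun x hx =>
          mul_le_mul_left hx (w x)
    _ ≤ copsonConst p q * E * wnorm q (fun t => u t * h t) (Ioi 0) := by
        rcases eq_or_ne p ∞ with rfl | hp
        · simp only [wnorm_top] at hwu ⊢
          refine (essSup_mul_le_of_antitone hq.ne' hh hwu).trans ?_
          gcongr
          exact le_mul_of_one_le_left' (one_le_copsonConst ∞ q)
        · refine (wnorm_mul_le_of_antitone_of_ne_top hq hqp hp hu hw hh hwu).trans ?_
          gcongr
          exact le_max_right _ _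

lemma essSup_indicator_one_Ioo_restrict_Ioi {s : ℝ} (hs : 0 < s) (t : ℝ) :
    essSup ((Ioo 0 t).indicator (1 : ℝ → ℝ≥0∞)) (volume.restrict (Ioi s))
      = (Ioo 0 t).indicator 1 s := by
  rw [essSup_indicator_eq_essSup_restrict measurableSet_Ioo,
    Measure.restrict_restrict measurableSet_Ioo,
    show Ioo 0 t ∩ Ioi s = Ioo s t from by
      ext x; exact ⟨fun hx => ⟨hx.2, hx.1.2⟩, fun hx => ⟨⟨hs.trans hx.1, hx.2⟩, hx.1⟩⟩]
  by_cases hst : s < t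
  · rw [indicator_of_mem (show s ∈ Ioo 0 t from ⟨hs, hst⟩)]
    exact essSup_const _ (by simp [Measure.restrict_eq_zero, hst])
  · rw [Ioo_eq_empty hst, Measure.restrict_empty, essSup_measure_zero,
      indicator_of_notMem fun h => hst h.2]
    rfl

lemma wnorm_indicator_one_mul {p : ℝ≥0∞} (hp : p ≠ 0) (w : ℝ → ℝ≥0∞) (t : ℝ) :
    wnorm p (fun x => (Ioo 0 t).indicator 1 x * w x) (Ioi 0) = wnorm p w (Ioo 0 t) := by
  have : (fun x => (Ioo 0 t).indicator 1 x * w x) = (Ioo 0 t).indicator w := by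
    ext x
    by_cases hx : x ∈ Ioo 0 t <;> simp [hx]
  rw [this, wnorm_indicator hp measurableSet_Ioo Ioo_subset_Ioi_self]

lemma wnorm_mul_essSup_indicator_one {q : ℝ≥0∞} (hq : q ≠ 0) (u : ℝ → ℝ≥0∞) (t : ℝ) :
    wnorm q (fun s => u s * essSup ((Ioo 0 t).indicator 1) (volume.restrict (Ioi s))) (Ioi 0)
      = wnorm q u (Ioo 0 t) := by
  rw [← wnorm_indicator_one_mul hq u t]
  refine wnorm_congr_ae ((ae_restrict_mem measurableSet_Ioi).mono fun s (hs : 0 < s) => ?_)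
  simp only [essSup_indicator_one_Ioo_restrict_Ioi hs, mul_comm]

/-- reverse inequality for the supremal operator `S*`, `0 < q ≤ p ≤ ∞`. -/
theorem reverse_supremal_copson (p q : ℝ≥0∞) (hq : 0 < q) (hqp : q ≤ p) :
    ∃ c₁ c₂ : ℝ≥0∞, 0 < c₁ ∧ c₂ < ∞ ∧
      ∀ u w : ℝ → ℝ≥0∞, Measurable u → Measurable w →
        (∀ t ∈ Ioi (0:ℝ), wnorm q u (Ioo 0 t) < ∞) →
        (let LHS : (ℝ → ℝ≥0∞) → ℝ≥0∞ := fun g => wnorm p (fun x => g x * w x) (Ioi 0)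
         let RHS : (ℝ → ℝ≥0∞) → ℝ≥0∞ := fun g =>
            wnorm q (fun t => u t * essSup g (volume.restrict (Ioi t))) (Ioi 0)
         let E : ℝ≥0∞ := ⨆ t ∈ Ioi (0:ℝ), wnorm p w (Ioo 0 t) * (wnorm q u (Ioo 0 t))⁻¹
         let best : ℝ≥0∞ := ⨆ g : {g : ℝ → ℝ≥0∞ // Measurable g}, LHS g.1 / RHS g.1
         ((∃ c : ℝ≥0∞, c < ∞ ∧ ∀ g : ℝ → ℝ≥0∞, Measurable g → LHS g ≤ c * RHS g) ↔ E < ∞)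
           ∧ c₁ * E ≤ best ∧ best ≤ c₂ * E) := by
  refine ⟨1, copsonConst p q, one_pos, copsonConst_lt_top p q, fun u w hu hw hfin => ?_⟩
  intro LHS RHS E best
  let test : ℝ → ℝ → ℝ≥0∞ := fun t => (Ioo 0 t).indicator 1
  have hLHS : ∀ t, LHS (test t) = wnorm p w (Ioo 0 t) :=
    wnorm_indicator_one_mul (hq.trans_le hqp).ne' w
  have hRHS : ∀ t, RHS (test t) = wnorm q u (Ioo 0 t) := wnorm_mul_essSup_indicator_one hq.ne' u
  have hE_le_best : E ≤ best := iSup₂_le fun t _ =>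
    le_iSup_of_le (⟨test t, measurable_one.indicator measurableSet_Ioo⟩ : {g // Measurable g}) <| by
      show _ ≤ LHS (test t) / RHS (test t)
      rw [hLHS, hRHS, div_eq_mul_inv]
  have hbest_le : ∀ c, (∀ g, Measurable g → LHS g ≤ c * RHS g) → best ≤ c := fun c hc =>
    iSup_le fun g => ENNReal.div_le_of_le_mul (hc g.1 g.2)
  have hmain : E ≠ ∞ → ∀ g, Measurable g → LHS g ≤ copsonConst p q * E * RHS g := fun hE g _ =>
    wnorm_mul_le_copsonConst_mul hq hqp hu hw (fun t ht =>
      (ENNReal.div_le_iff_le_mul (Or.inr hE) (Or.inl (hfin t ht).ne)).1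
        (le_iSup₂ (f := fun t (_ : t ∈ Ioi (0 : ℝ)) => wnorm p w (Ioo 0 t) / wnorm q u (Ioo 0 t))
          t ht)) g
  refine ⟨⟨fun ⟨c, hc, hcg⟩ => (hE_le_best.trans (hbest_le c hcg)).trans_lt hc,
    fun hE => ⟨_, mul_lt_top (copsonConst_lt_top p q) hE, hmain hE.ne⟩⟩,
    by rwa [one_mul], ?_⟩
  rcases eq_or_ne E ∞ with hE | hE
  · rw [hE, mul_top (one_pos.trans_le (one_le_copsonConst p q)).ne']
    exact le_top
  · exact hbest_le _ (hmain hE)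
end
end
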